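/- arXiv:1009.0890 — 15 statements merged into one kernel-verified Lean document; each statement's English description precedes it below -/
import Mathlib

section
/- The 2-dimensional Lebesgue measure of the set of pairs (s,t) in the unit square [0,1]² for which the three lengths min(s,t), |s-t| and 1-max(s,t) satisfy the strict triangle inequality (each length is strictly less than the sum of the other two) equals 1/4. -/
/-!
Three pieces of total length 1 form a triangle iff each is shorter than `1 / 2`. For cuts
`s ≤ t` this carves out the triangle `0 < s < 1 / 2 < t < s + 1 / 2` of area `1 / 8`; its mirror
image under `(s, t) ↦ (t, s)` accounts for the cuts `t ≤ s`, so the total area is `1 / 4`.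
-/

open MeasureTheory Set

theorem volume_regionBetween_Ioo_eq_intervalIntegral {f g : ℝ → ℝ} {a b : ℝ} (hab : a ≤ b)
    (hf : Continuous f) (hg : Continuous g) (hfg : ∀ x ∈ Ioo a b, f x ≤ g x) :
    volume (regionBetween f g (Ioo a b)) = ENNReal.ofReal (∫ x in a..b, g x - f x) := by
  rw [Measure.volume_eq_prod, volume_regionBetween_eq_integral
    (hf.integrableOn_Icc.mono_set Ioo_subset_Icc_self)
    (hg.integrableOn_Icc.mono_set Ioo_subset_Icc_self) measurableSet_Ioo hfg,
    intervalIntegral.integral_of_le hab, integral_Ioc_eq_integral_Ioo]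
  rfl

theorem volume_preimage_swap {α β : Type*} [MeasureSpace α] [MeasureSpace β]
    [SFinite (volume : Measure α)] [SFinite (volume : Measure β)] {s : Set (β × α)}
    (hs : NullMeasurableSet s) : volume (Prod.swap ⁻¹' s) = volume s := by
  rw [Measure.volume_eq_prod, Measure.volume_eq_prod]
  exact Measure.measurePreserving_swap.measure_preimage hs

def triangleCuts : Set (ℝ × ℝ) :=
  {p | p.1 ∈ Icc 0 1 ∧ p.2 ∈ Icc 0 1 ∧
    min p.1 p.2 < |p.1 - p.2| + (1 - max p.1 p.2) ∧
    |p.1 - p.2| < min p.1 p.2 + (1 - max p.1 p.2) ∧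
    1 - max p.1 p.2 < min p.1 p.2 + |p.1 - p.2|}

/-- The triangle with vertices `(0, 1 / 2)`, `(1 / 2, 1 / 2)` and `(1 / 2, 1)`. -/
def orderedTriangleCuts : Set (ℝ × ℝ) :=
  regionBetween (fun _ => 1 / 2) (· + 1 / 2) (Ioo 0 (1 / 2))

theorem swap_mem_triangleCuts_iff {s t : ℝ} :
    (t, s) ∈ triangleCuts ↔ (s, t) ∈ triangleCuts := by
  simp only [triangleCuts, mem_ofPred_eq, min_comm t, max_comm t, abs_sub_comm t]
  tauto

theorem mem_triangleCuts_iff_of_le {s t : ℝ} (hst : s ≤ t) :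
    (s, t) ∈ triangleCuts ↔ (s, t) ∈ orderedTriangleCuts := by
  simp only [triangleCuts, orderedTriangleCuts, regionBetween, mem_ofPred_eq, mem_Icc, mem_Ioo,
    min_eq_left hst, max_eq_right hst, abs_of_nonpos (sub_nonpos.2 hst)]
  constructor
  · rintro ⟨⟨hs₀, -⟩, ⟨-, ht₁⟩, h₁, h₂, h₃⟩
    refine ⟨⟨?_, ?_⟩, ?_, ?_⟩ <;> linarith
  · rintro ⟨⟨hs₀, hs⟩, ht, hts⟩
    refine ⟨⟨?_, ?_⟩, ⟨?_, ?_⟩, ?_, ?_, ?_⟩ <;> linarith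

theorem not_swap_mem_orderedTriangleCuts_of_le {s t : ℝ} (hst : s ≤ t) :
    (t, s) ∉ orderedTriangleCuts := fun ⟨⟨_, ht⟩, hs, _⟩ => by
  change (1 : ℝ) / 2 < s at hs
  linarith

theorem triangleCuts_eq_union_swap :
    triangleCuts = orderedTriangleCuts ∪ Prod.swap ⁻¹' orderedTriangleCuts := by
  ext ⟨s, t⟩
  simp only [mem_union, mem_preimage, Prod.swap_prod_mk]
  rcases le_total s t with hst | hts
  · simp [mem_triangleCuts_iff_of_le hst, not_swap_mem_orderedTriangleCuts_of_le hst]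
  · rw [← swap_mem_triangleCuts_iff, mem_triangleCuts_iff_of_le hts]
    simp [not_swap_mem_orderedTriangleCuts_of_le hts]

theorem measurableSet_orderedTriangleCuts : MeasurableSet orderedTriangleCuts :=
  measurableSet_regionBetween measurable_const (by fun_prop) measurableSet_Ioo

theorem disjoint_orderedTriangleCuts_preimage_swap :
    Disjoint orderedTriangleCuts (Prod.swap ⁻¹' orderedTriangleCuts) :=
  disjoint_left.2 fun _ ⟨⟨_, hs⟩, ht, _⟩ =>
    not_swap_mem_orderedTriangleCuts_of_le (hs.trans ht).le

theorem volume_orderedTriangleCuts : volume orderedTriangleCuts = ENNReal.ofReal (1 / 8) := by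
  rw [orderedTriangleCuts, volume_regionBetween_Ioo_eq_intervalIntegral (by norm_num)
    continuous_const (by fun_prop) fun x hx => by linarith [hx.1]]
  norm_num

theorem broken_stick_triangle_prob :
    volume {p : ℝ × ℝ | p.1 ∈ Set.Icc (0:ℝ) 1 ∧ p.2 ∈ Set.Icc (0:ℝ) 1 ∧
      min p.1 p.2 < |p.1 - p.2| + (1 - max p.1 p.2) ∧
      |p.1 - p.2| < min p.1 p.2 + (1 - max p.1 p.2) ∧
      1 - max p.1 p.2 < min p.1 p.2 + |p.1 - p.2|} = 1 / 4 := by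
  change volume triangleCuts = 1 / 4
  rw [triangleCuts_eq_union_swap,
    measure_union disjoint_orderedTriangleCuts_preimage_swap
      (measurableSet_orderedTriangleCuts.preimage measurable_swap),
    volume_preimage_swap measurableSet_orderedTriangleCuts.nullMeasurableSet,
    volume_orderedTriangleCuts,
    ← ENNReal.ofReal_add (by norm_num) (by norm_num)]
  norm_num [ENNReal.ofReal_div_of_pos]
end

section
/- The 2-dimensional Lebesgue measure of the set of pairs (s,t) in the unit square [0,1]² for which the three lengths min(s,t), |s-t| and 1-max(s,t) are the side lengths of an acute triangle (i.e. the square of each length is strictly less than the sum of the squares of the other two) equals 3·ln 2 − 2. -/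
/-!
By the symmetry `s ↔ t` it suffices to treat `s < t`, and the shear `(a, b) ↦ (a, a + b)` turns
this half into the set of `(a, b)` for which `a`, `b`, `1 - a - b` are the sides of an acute
triangle. Such sides are all `< 1/2`, so this set lies in a triangle of area `1/8`, whose
non-acute part splits into three disjoint regions according to the side opposite the non-acute
angle. Above each `0 < x < 1/2` the regions for the second and third side have chords of the same
length `x (1 - 2x) / (2 (1 - x))`, and the region for the first side mirrors the one for the
second; so each region has area `∫₀^{1/2} x (1 - 2x) / (2 (1 - x)) dx = 3/8 - log 2 / 2`, and the
probability is `2 (1/8 - 3 (3/8 - log 2 / 2)) = 3 log 2 - 2`.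
-/

open MeasureTheory Set

theorem prod_apply_eq_ofReal_setIntegral_of_slice {α β : Type*} [MeasurableSpace α]
    [MeasurableSpace β] {μ : Measure α} {ν : Measure β} [SFinite ν] {A : Set (α × β)}
    {s : Set α} {h : α → ℝ} (hA : MeasurableSet A) (hs : MeasurableSet s)
    (hAs : A ⊆ s ×ˢ univ) (hint : IntegrableOn h s μ) (h_nonneg : ∀ x ∈ s, 0 ≤ h x)
    (hslice : ∀ x ∈ s, ν (Prod.mk x ⁻¹' A) = ENNReal.ofReal (h x)) :
    μ.prod ν A = ENNReal.ofReal (∫ x in s, h x ∂μ) := by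
  have hsupp : (fun x => ν (Prod.mk x ⁻¹' A)).support ⊆ s := fun x hx => by
    by_contra hxs
    exact hx (measure_mono_null (fun y hy => hxs (hAs hy).1) measure_empty)
  rw [Measure.prod_apply hA, ← setLIntegral_eq_of_support_subset hsupp,
    setLIntegral_congr_fun hs hslice,
    ofReal_integral_eq_lintegral_ofReal hint ((ae_restrict_iff' hs).2 (ae_of_all _ h_nonneg))]

theorem volume_eq_two_mul_of_swap_invariant {S : Set (ℝ × ℝ)} (hS : MeasurableSet S)
    (hswap : Prod.swap ⁻¹' S = S) (hdiag : ∀ p ∈ S, p.1 ≠ p.2) :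
    volume S = 2 * volume (S ∩ {p | p.1 < p.2}) := by
  have hlt : MeasurableSet (S ∩ {p : ℝ × ℝ | p.1 < p.2}) :=
    hS.inter (measurableSet_lt measurable_fst measurable_snd)
  have hsplit : S = (S ∩ {p | p.1 < p.2}) ∪ Prod.swap ⁻¹' (S ∩ {p | p.1 < p.2}) := by
    rw [preimage_inter, hswap]
    ext p
    simp only [mem_union, mem_inter_iff, mem_ofPred_eq, mem_preimage, Prod.fst_swap,
      Prod.snd_swap]
    constructor
    · intro hp
      rcases (hdiag p hp).lt_or_gt with h | h
      exacts [Or.inl ⟨hp, h⟩, Or.inr ⟨hp, h⟩]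
    · rintro (⟨hp, -⟩ | ⟨hp, -⟩) <;> exact hp
  have hdisj : Disjoint (S ∩ {p | p.1 < p.2}) (Prod.swap ⁻¹' (S ∩ {p | p.1 < p.2})) :=
    disjoint_left.2 fun p h h' => h.2.asymm (show p.2 < p.1 from h'.2)
  have hswap_mp : MeasurePreserving (Prod.swap : ℝ × ℝ → ℝ × ℝ) := by
    rw [Measure.volume_eq_prod]
    exact Measure.measurePreserving_swap
  conv_lhs => rw [hsplit]
  rw [measure_union hdisj (hlt.preimage measurable_swap),
    hswap_mp.measure_preimage hlt.nullMeasurableSet, two_mul]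

noncomputable def obtuseWidth (x : ℝ) : ℝ := x * (1 - 2 * x) / (2 * (1 - x))

theorem obtuseWidth_nonneg {x : ℝ} (hx : x ∈ Ioo (0 : ℝ) (1 / 2)) : 0 ≤ obtuseWidth x :=
  div_nonneg (mul_nonneg hx.1.le (by linarith [hx.2])) (by linarith [hx.2])

theorem obtuseWidth_lt {x : ℝ} (hx : x ∈ Ioo (0 : ℝ) (1 / 2)) : obtuseWidth x < x := by
  rw [obtuseWidth, div_lt_iff₀ (by linarith [hx.2])]
  nlinarith [hx.1]

theorem sq_sub_sq_add_sq_eq_obtuseWidth_snd {x : ℝ} (hx : x ≠ 1) (y : ℝ) :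
    y ^ 2 - (x ^ 2 + (1 - x - y) ^ 2) = 2 * (1 - x) * (y - (1 / 2 - obtuseWidth x)) := by
  have : 1 - x ≠ 0 := sub_ne_zero.2 hx.symm
  unfold obtuseWidth
  field_simp
  ring

theorem sq_sub_sq_add_sq_eq_obtuseWidth_thd {x : ℝ} (hx : x ≠ 1) (y : ℝ) :
    (1 - x - y) ^ 2 - (x ^ 2 + y ^ 2) = 2 * (1 - x) * (1 / 2 - x + obtuseWidth x - y) := by
  have : 1 - x ≠ 0 := sub_ne_zero.2 hx.symm
  unfold obtuseWidth
  field_simp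
  ring

theorem continuousOn_obtuseWidth : ContinuousOn obtuseWidth (Icc 0 (1 / 2)) := by
  unfold obtuseWidth
  exact ContinuousOn.div (by fun_prop) (by fun_prop) fun x hx => by linarith [hx.2]

theorem integrableOn_obtuseWidth : IntegrableOn obtuseWidth (Ioo (0 : ℝ) (1 / 2)) :=
  continuousOn_obtuseWidth.integrableOn_Icc.mono_set Ioo_subset_Icc_self

theorem integral_obtuseWidth :
    ∫ x in Ioo (0 : ℝ) (1 / 2), obtuseWidth x = 3 / 8 - Real.log 2 / 2 := by
  have hderiv : ∀ x ∈ uIcc (0 : ℝ) (1 / 2),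
      HasDerivAt (fun x => x ^ 2 / 2 + x / 2 + Real.log (1 - x) / 2) (obtuseWidth x) x := by
    intro x hx
    rw [uIcc_of_le (by norm_num)] at hx
    have h1 : 1 - x ≠ 0 := by linarith [hx.2]
    refine ((((hasDerivAt_pow 2 x).div_const 2).add ((hasDerivAt_id' x).div_const 2)).add
      ((((hasDerivAt_id' x).const_sub 1).log h1).div_const 2)).congr_deriv ?_
    unfold obtuseWidth
    field_simp
    ring
  rw [← integral_Ioc_eq_integral_Ioo, ← intervalIntegral.integral_of_le (by norm_num),
    intervalIntegral.integral_eq_sub_of_hasDerivAt hderiv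
      (continuousOn_obtuseWidth.intervalIntegrable_of_Icc (by norm_num))]
  norm_num
  rw [one_div, Real.log_inv]
  ring

def AcuteSides (a b c : ℝ) : Prop :=
  a ^ 2 + b ^ 2 > c ^ 2 ∧ b ^ 2 + c ^ 2 > a ^ 2 ∧ a ^ 2 + c ^ 2 > b ^ 2

theorem AcuteSides.snd_ne_zero {a b c : ℝ} (h : AcuteSides a b c) : b ≠ 0 := by
  rintro rfl
  obtain ⟨h1, h2, -⟩ := h
  linarith

theorem AcuteSides.strict_triangle_ineq {a b c : ℝ} (h : AcuteSides a b c) (ha : 0 ≤ a)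
    (hb : 0 ≤ b) (hc : 0 ≤ c) : a < b + c ∧ b < a + c ∧ c < a + b := by
  obtain ⟨h1, h2, h3⟩ := h
  refine ⟨?_, ?_, ?_⟩ <;> nlinarith

/-- A point `(a, b)` stands for the sides `a`, `b`, `1 - a - b`; here they satisfy the strict
triangle inequality. -/
def triangleRegion : Set (ℝ × ℝ) := {p | p.1 < 1 / 2 ∧ p.2 < 1 / 2 ∧ 1 / 2 < p.1 + p.2}

def acuteRegion : Set (ℝ × ℝ) := {p ∈ triangleRegion | AcuteSides p.1 p.2 (1 - p.1 - p.2)}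

def nonAcuteAtSnd : Set (ℝ × ℝ) :=
  {p ∈ triangleRegion | p.1 ^ 2 + (1 - p.1 - p.2) ^ 2 ≤ p.2 ^ 2}

def nonAcuteAtThd : Set (ℝ × ℝ) :=
  {p ∈ triangleRegion | p.1 ^ 2 + p.2 ^ 2 ≤ (1 - p.1 - p.2) ^ 2}

theorem measurableSet_triangleRegion : MeasurableSet triangleRegion := by
  unfold triangleRegion; measurability

theorem measurableSet_nonAcuteAtSnd : MeasurableSet nonAcuteAtSnd := by
  unfold nonAcuteAtSnd triangleRegion; measurability

theorem measurableSet_nonAcuteAtThd : MeasurableSet nonAcuteAtThd := by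
  unfold nonAcuteAtThd triangleRegion; measurability

theorem pos_of_mem_triangleRegion {p : ℝ × ℝ} (hp : p ∈ triangleRegion) :
    0 < p.1 ∧ 0 < p.2 ∧ 0 < 1 - p.1 - p.2 := by
  obtain ⟨h1, h2, h3⟩ := hp
  exact ⟨by linarith, by linarith, by linarith⟩

theorem triangleRegion_subset : triangleRegion ⊆ Ioo (0 : ℝ) (1 / 2) ×ˢ univ :=
  fun _ hp => ⟨⟨(pos_of_mem_triangleRegion hp).1, hp.1⟩, trivial⟩

theorem preimage_triangleRegion {x : ℝ} (hx : x ∈ Ioo (0 : ℝ) (1 / 2)) :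
    Prod.mk x ⁻¹' triangleRegion = Ioo (1 / 2 - x) (1 / 2) := by
  ext y
  simp only [triangleRegion, mem_preimage, mem_ofPred_eq, mem_Ioo]
  constructor
  · rintro ⟨-, hy, hxy⟩
    exact ⟨by linarith, hy⟩
  · rintro ⟨hxy, hy⟩
    exact ⟨hx.2, hy, by linarith⟩

theorem preimage_nonAcuteAtSnd {x : ℝ} (hx : x ∈ Ioo (0 : ℝ) (1 / 2)) :
    Prod.mk x ⁻¹' nonAcuteAtSnd = Ico (1 / 2 - obtuseWidth x) (1 / 2) := by
  have hw := obtuseWidth_lt hx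
  have h1 : 0 < 1 - x := by linarith [hx.2]
  ext y
  have hid := sq_sub_sq_add_sq_eq_obtuseWidth_snd (by linarith : x < 1).ne y
  change (x, y) ∈ triangleRegion ∧ _ ↔ _
  rw [← mem_preimage (f := Prod.mk x), preimage_triangleRegion hx, mem_Ioo, mem_Ico]
  constructor
  · rintro ⟨⟨-, hy⟩, hobt⟩
    exact ⟨by nlinarith, hy⟩
  · rintro ⟨hwy, hy⟩
    exact ⟨⟨by linarith, hy⟩, by nlinarith⟩

theorem preimage_nonAcuteAtThd {x : ℝ} (hx : x ∈ Ioo (0 : ℝ) (1 / 2)) :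
    Prod.mk x ⁻¹' nonAcuteAtThd = Ioc (1 / 2 - x) (1 / 2 - x + obtuseWidth x) := by
  have hw := obtuseWidth_lt hx
  have h1 : 0 < 1 - x := by linarith [hx.2]
  ext y
  have hid := sq_sub_sq_add_sq_eq_obtuseWidth_thd (by linarith : x < 1).ne y
  change (x, y) ∈ triangleRegion ∧ _ ↔ _
  rw [← mem_preimage (f := Prod.mk x), preimage_triangleRegion hx, mem_Ioo, mem_Ioc]
  constructor
  · rintro ⟨⟨hxy, -⟩, hobt⟩
    exact ⟨hxy, by nlinarith⟩
  · rintro ⟨hxy, hyw⟩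
    exact ⟨⟨hxy, by linarith⟩, by nlinarith⟩
theorem volume_triangleRegion : volume triangleRegion = ENNReal.ofReal (1 / 8) := by
  rw [Measure.volume_eq_prod, prod_apply_eq_ofReal_setIntegral_of_slice (h := fun x => x)
    measurableSet_triangleRegion measurableSet_Ioo triangleRegion_subset
    (continuous_id'.integrableOn_Icc.mono_set Ioo_subset_Icc_self) (fun x hx => hx.1.le)
    fun x hx => by rw [preimage_triangleRegion hx, Real.volume_Ioo, sub_sub_cancel]]
  rw [← integral_Ioc_eq_integral_Ioo, ← intervalIntegral.integral_of_le (by norm_num),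
    integral_id]
  norm_num

theorem volume_nonAcuteAtSnd :
    volume nonAcuteAtSnd = ENNReal.ofReal (3 / 8 - Real.log 2 / 2) := by
  rw [Measure.volume_eq_prod, prod_apply_eq_ofReal_setIntegral_of_slice
    measurableSet_nonAcuteAtSnd measurableSet_Ioo
    ((sep_subset _ _).trans triangleRegion_subset) integrableOn_obtuseWidth
    (fun x hx => obtuseWidth_nonneg hx)
    fun x hx => by rw [preimage_nonAcuteAtSnd hx, Real.volume_Ico, sub_sub_cancel],
    integral_obtuseWidth]

theorem volume_nonAcuteAtThd :
    volume nonAcuteAtThd = ENNReal.ofReal (3 / 8 - Real.log 2 / 2) := by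
  rw [Measure.volume_eq_prod, prod_apply_eq_ofReal_setIntegral_of_slice
    measurableSet_nonAcuteAtThd measurableSet_Ioo
    ((sep_subset _ _).trans triangleRegion_subset) integrableOn_obtuseWidth
    (fun x hx => obtuseWidth_nonneg hx)
    fun x hx => by rw [preimage_nonAcuteAtThd hx, Real.volume_Ioc, add_sub_cancel_left],
    integral_obtuseWidth]

theorem volume_swap_nonAcuteAtSnd :
    volume (Prod.swap ⁻¹' nonAcuteAtSnd) = ENNReal.ofReal (3 / 8 - Real.log 2 / 2) := by
  rw [Measure.volume_eq_prod, Measure.measurePreserving_swap.measure_preimage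
    measurableSet_nonAcuteAtSnd.nullMeasurableSet, ← Measure.volume_eq_prod,
    volume_nonAcuteAtSnd]

theorem acuteRegion_eq : acuteRegion =
    triangleRegion \ (Prod.swap ⁻¹' nonAcuteAtSnd ∪ nonAcuteAtSnd ∪ nonAcuteAtThd) := by
  ext ⟨a, b⟩
  simp only [acuteRegion, nonAcuteAtSnd, nonAcuteAtThd, triangleRegion, AcuteSides, mem_sdiff,
    mem_union, mem_preimage, Prod.swap_prod_mk, mem_ofPred_eq]
  constructor
  · rintro ⟨hT, h1, h2, h3⟩
    refine ⟨hT, ?_⟩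
    rintro ((⟨-, h⟩ | ⟨-, h⟩) | ⟨-, h⟩) <;> nlinarith
  · rintro ⟨hT, hn⟩
    refine ⟨hT, ?_, ?_, ?_⟩ <;> by_contra! h
    · exact hn (Or.inr ⟨hT, h⟩)
    · exact hn (Or.inl (Or.inl ⟨⟨hT.2.1, hT.1, by linarith [hT.2.2]⟩, by linarith⟩))
    · exact hn (Or.inl (Or.inr ⟨hT, h⟩))

theorem volume_acuteRegion : volume acuteRegion = ENNReal.ofReal (3 / 2 * Real.log 2 - 1) := by
  have hdisj₁ : Disjoint (Prod.swap ⁻¹' nonAcuteAtSnd) nonAcuteAtSnd := by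
    refine disjoint_left.2 fun p h h' => ?_
    obtain ⟨-, -, hc⟩ := pos_of_mem_triangleRegion h'.1
    have : p.2 ^ 2 + (1 - p.2 - p.1) ^ 2 ≤ p.1 ^ 2 := h.2
    nlinarith [h'.2]
  have hdisj₂ : Disjoint (Prod.swap ⁻¹' nonAcuteAtSnd ∪ nonAcuteAtSnd) nonAcuteAtThd := by
    refine disjoint_left.2 fun p h h' => ?_
    obtain ⟨ha, hb, -⟩ := pos_of_mem_triangleRegion h'.1
    rcases h with h | h
    · have : p.2 ^ 2 + (1 - p.2 - p.1) ^ 2 ≤ p.1 ^ 2 := h.2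
      nlinarith [h'.2]
    · nlinarith [h.2, h'.2]
  have hsub : Prod.swap ⁻¹' nonAcuteAtSnd ∪ nonAcuteAtSnd ∪ nonAcuteAtThd ⊆ triangleRegion := by
    refine union_subset (union_subset (fun p hp => ?_) (sep_subset _ _)) (sep_subset _ _)
    obtain ⟨⟨h1, h2, h3⟩, -⟩ := hp
    exact ⟨h2, h1, by rw [add_comm]; exact h3⟩
  have hmeas := (measurableSet_nonAcuteAtSnd.preimage measurable_swap).union
    measurableSet_nonAcuteAtSnd
  have hw : 0 ≤ 3 / 8 - Real.log 2 / 2 := by linarith [Real.log_two_lt_d9]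
  have hfin : volume (Prod.swap ⁻¹' nonAcuteAtSnd ∪ nonAcuteAtSnd ∪ nonAcuteAtThd) ≠ ⊤ :=
    measure_ne_top_of_subset hsub (by rw [volume_triangleRegion]; exact ENNReal.ofReal_ne_top)
  rw [acuteRegion_eq,
    measure_sdiff hsub (hmeas.union measurableSet_nonAcuteAtThd).nullMeasurableSet hfin,
    measure_union hdisj₂ measurableSet_nonAcuteAtThd,
    measure_union hdisj₁ measurableSet_nonAcuteAtSnd, volume_triangleRegion,
    volume_swap_nonAcuteAtSnd, volume_nonAcuteAtSnd, volume_nonAcuteAtThd,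
    ← ENNReal.ofReal_add hw hw, ← ENNReal.ofReal_add (by linarith) hw,
    ← ENNReal.ofReal_sub _ (by linarith)]
  congr 1
  ring

def brokenStickAcute : Set (ℝ × ℝ) :=
  {p | p.1 ∈ Icc 0 1 ∧ p.2 ∈ Icc 0 1 ∧ AcuteSides (min p.1 p.2) |p.1 - p.2| (1 - max p.1 p.2)}

theorem measurableSet_brokenStickAcute : MeasurableSet brokenStickAcute := by
  unfold brokenStickAcute AcuteSides; measurability

theorem preimage_swap_brokenStickAcute : Prod.swap ⁻¹' brokenStickAcute = brokenStickAcute := by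
  ext ⟨s, t⟩
  simp only [brokenStickAcute, mem_preimage, Prod.swap_prod_mk, mem_ofPred_eq, min_comm t s,
    max_comm t s, abs_sub_comm t s]
  tauto

theorem preimage_shear_brokenStickAcute :
    (fun p : ℝ × ℝ => (p.1, p.1 + p.2)) ⁻¹' (brokenStickAcute ∩ {p | p.1 < p.2}) =
      acuteRegion := by
  ext ⟨a, b⟩
  simp only [brokenStickAcute, acuteRegion, mem_preimage, mem_inter_iff, mem_ofPred_eq,
    mem_Icc, lt_add_iff_pos_right]
  constructor
  · rintro ⟨⟨⟨ha, -⟩, ⟨-, hab⟩, hac⟩, hb⟩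
    rw [min_eq_left (by linarith), max_eq_right (by linarith), sub_add_cancel_left, abs_neg,
      abs_of_pos hb, ← sub_sub] at hac
    obtain ⟨h1, h2, h3⟩ := hac.strict_triangle_ineq ha hb.le (by linarith)
    exact ⟨⟨by linarith, by linarith, by linarith⟩, hac⟩
  · rintro ⟨hT, hac⟩
    obtain ⟨ha, hb, hc⟩ := pos_of_mem_triangleRegion hT
    refine ⟨⟨⟨ha.le, by linarith⟩, ⟨by linarith, by linarith⟩, ?_⟩, hb⟩
    rwa [min_eq_left (by linarith), max_eq_right (by linarith), sub_add_cancel_left, abs_neg,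
      abs_of_pos hb, ← sub_sub]

theorem volume_brokenStickAcute_inter_lt :
    volume (brokenStickAcute ∩ {p | p.1 < p.2}) = volume acuteRegion := by
  have hmp : MeasurePreserving (fun p : ℝ × ℝ => (p.1, p.1 + p.2)) := by
    rw [Measure.volume_eq_prod]
    exact measurePreserving_prod_add volume volume
  rw [← preimage_shear_brokenStickAcute, hmp.measure_preimage
    (measurableSet_brokenStickAcute.inter
      (measurableSet_lt measurable_fst measurable_snd)).nullMeasurableSet]

theorem broken_stick_acute_triangle_prob :
    volume {p : ℝ × ℝ | p.1 ∈ Set.Icc (0:ℝ) 1 ∧ p.2 ∈ Set.Icc (0:ℝ) 1 ∧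
      min p.1 p.2 ^ 2 + |p.1 - p.2| ^ 2 > (1 - max p.1 p.2) ^ 2 ∧
      |p.1 - p.2| ^ 2 + (1 - max p.1 p.2) ^ 2 > min p.1 p.2 ^ 2 ∧
      min p.1 p.2 ^ 2 + (1 - max p.1 p.2) ^ 2 > |p.1 - p.2| ^ 2} =
    ENNReal.ofReal (3 * Real.log 2 - 2) := by
  change volume brokenStickAcute = _
  have hdiag : ∀ p ∈ brokenStickAcute, p.1 ≠ p.2 := fun p hp heq =>
    hp.2.2.snd_ne_zero (by rw [heq, sub_self, abs_zero])
  rw [volume_eq_two_mul_of_swap_invariant measurableSet_brokenStickAcute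
      preimage_swap_brokenStickAcute hdiag, volume_brokenStickAcute_inter_lt,
    volume_acuteRegion, ← ENNReal.ofReal_ofNat 2,
    ← ENNReal.ofReal_mul (by norm_num)]
  congr 1
  ring
end

section
/- Let u, v, w be positive real numbers. There exist three non-collinear points A, B, C in the Euclidean plane ℝ² such that dist(A, midpoint(B,C)) = u, dist(B, midpoint(A,C)) = v and dist(C, midpoint(A,B)) = w if and only if u + v + w > 2·max(u,v,w). Moreover, when such a triangle exists, its side lengths are uniquely determined: dist(B,C)² = (4/9)(2(v²+w²) − u²), dist(A,C)² = (4/9)(2(u²+w²) − v²) and dist(A,B)² = (4/9)(2(u²+v²) − w²). -/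
/-!
The median vectors `A - midpoint B C`, `B - midpoint A C`, `C - midpoint A B` sum to zero, so
they are the sides of a triangle with side lengths `u, v, w`. This triangle is degenerate exactly
when `A, B, C` are collinear: if two median vectors lie on a common ray then the vertices lie on
a line, and if the vertices lie on a line then the three median vectors are parallel, so one of
their lengths is the sum of the other two. Hence (by strict convexity of the norm) `A, B, C` is a
triangle iff `u, v, w` satisfy the strict triangle inequalities, i.e. `u + v + w > 2 max(u, v, w)`.
Conversely every pair of vectors `q, r` arises as two median vectors: with the centroid at the
origin, the vertices are `2/3` of the median vectors. Finally, Apollonius's theorem expresses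
the squared medians linearly in the squared sides, and this linear system can be inverted.
-/

theorem two_mul_max_lt_add_iff {α : Type*} [Field α] [LinearOrder α] [IsStrictOrderedRing α]
    {u v w : α} : 2 * max u (max v w) < u + v + w ↔ u < v + w ∧ v < u + w ∧ w < u + v := by
  simp only [mul_max_of_nonneg _ _ (zero_le_two : (0 : α) ≤ 2), max_lt_iff]
  constructor <;> rintro ⟨h₁, h₂, h₃⟩ <;> refine ⟨?_, ?_, ?_⟩ <;> linarith

section MedianVectors

variable {V : Type*} [NormedAddCommGroup V] [NormedSpace ℝ V]

theorem collinear_of_sameRay_sub_midpoint {A B C : V}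
    (h : SameRay ℝ (B - midpoint ℝ A C) (C - midpoint ℝ A B)) : Collinear ℝ {A, B, C} := by
  obtain ⟨d, a, b, -, -, -, hq, hr⟩ := h.exists_eq_smul
  rw [midpoint_eq_smul_add] at hq hr
  rw [collinear_iff_of_mem (p₀ := C) (by simp)]
  refine ⟨d, ?_⟩
  rintro P (rfl | rfl | rfl)
  · refine ⟨-(2 * a + 4 * b) / 3, ?_⟩
    simp only [vadd_eq_add, invOf_eq_inv] at *
    linear_combination (norm := module) (-2 / 3 : ℝ) • hq - (4 / 3 : ℝ) • hr
  · refine ⟨2 * (a - b) / 3, ?_⟩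
    simp only [vadd_eq_add, invOf_eq_inv] at *
    linear_combination (norm := module) (2 / 3 : ℝ) • hq - (2 / 3 : ℝ) • hr
  · exact ⟨0, by simp⟩

theorem dist_midpoint_lt_add_of_not_collinear [StrictConvexSpace ℝ V] {A B C : V}
    (h : ¬Collinear ℝ {A, B, C}) :
    dist A (midpoint ℝ B C) < dist B (midpoint ℝ A C) + dist C (midpoint ℝ A B) := by
  have medians_sum : A - midpoint ℝ B C = -((B - midpoint ℝ A C) + (C - midpoint ℝ A B)) := by
    simp only [midpoint_eq_smul_add, invOf_eq_inv]
    module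
  rw [dist_eq_norm, dist_eq_norm, dist_eq_norm, medians_sum, norm_neg]
  exact not_sameRay_iff_norm_add_lt.1 (mt collinear_of_sameRay_sub_midpoint h)

theorem Collinear.dist_midpoint_eq_add {A B C : V} (h : Collinear ℝ {A, B, C}) :
    dist A (midpoint ℝ B C) = dist B (midpoint ℝ A C) + dist C (midpoint ℝ A B) ∨
    dist B (midpoint ℝ A C) = dist A (midpoint ℝ B C) + dist C (midpoint ℝ A B) ∨
    dist C (midpoint ℝ A B) = dist A (midpoint ℝ B C) + dist B (midpoint ℝ A C) := by
  obtain ⟨d, hd⟩ := (collinear_iff_of_mem (p₀ := C) (by simp)).1 h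
  obtain ⟨α, rfl⟩ := hd A (by simp)
  obtain ⟨β, rfl⟩ := hd B (by simp)
  have dist_midpoint_eq (X Y Z : V) (a : ℝ) (hX : X - midpoint ℝ Y Z = a • d) :
      dist X (midpoint ℝ Y Z) = |a| * ‖d‖ := by
    rw [dist_eq_norm, hX, norm_smul, Real.norm_eq_abs]
  rw [dist_midpoint_eq _ _ _ (α - β / 2)
      (by simp only [midpoint_eq_smul_add, vadd_eq_add, invOf_eq_inv]; module),
    dist_midpoint_eq _ _ _ (β - α / 2)
      (by simp only [midpoint_eq_smul_add, vadd_eq_add, invOf_eq_inv]; module),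
    dist_midpoint_eq _ _ _ (-(α + β) / 2)
      (by simp only [midpoint_eq_smul_add, vadd_eq_add, invOf_eq_inv]; module)]
  -- three reals summing to zero: the one of largest absolute value balances the other two
  have : |α - β / 2| = |β - α / 2| + |-(α + β) / 2| ∨
      |β - α / 2| = |α - β / 2| + |-(α + β) / 2| ∨
      |-(α + β) / 2| = |α - β / 2| + |β - α / 2| := by
    grind
  rcases this with h | h | h <;> rw [h] <;> simp only [add_mul, true_or, or_true]

theorem not_collinear_iff_dist_midpoint_lt_add [StrictConvexSpace ℝ V] {A B C : V} :
    ¬Collinear ℝ {A, B, C} ↔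
      dist A (midpoint ℝ B C) < dist B (midpoint ℝ A C) + dist C (midpoint ℝ A B) ∧
      dist B (midpoint ℝ A C) < dist A (midpoint ℝ B C) + dist C (midpoint ℝ A B) ∧
      dist C (midpoint ℝ A B) < dist A (midpoint ℝ B C) + dist B (midpoint ℝ A C) := by
  refine ⟨fun h => ⟨?_, ?_, ?_⟩, fun ⟨h₁, h₂, h₃⟩ h => ?_⟩
  · exact dist_midpoint_lt_add_of_not_collinear h
  · rw [Set.insert_comm] at h
    simpa only [midpoint_comm B A] using dist_midpoint_lt_add_of_not_collinear h
  · rw [Set.pair_comm, Set.insert_comm] at h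
    simpa only [midpoint_comm C A, midpoint_comm C B] using
      dist_midpoint_lt_add_of_not_collinear h
  · rcases h.dist_midpoint_eq_add with h | h | h <;> linarith

theorem exists_dist_midpoint_eq_norm (q r : V) :
    ∃ A B C : V, dist A (midpoint ℝ B C) = ‖q + r‖ ∧ dist B (midpoint ℝ A C) = ‖q‖ ∧
      dist C (midpoint ℝ A B) = ‖r‖ := by
  refine ⟨-(2 / 3 : ℝ) • (q + r), (2 / 3 : ℝ) • q, (2 / 3 : ℝ) • r, ?_, ?_, ?_⟩ <;>
    simp only [dist_eq_norm, midpoint_eq_smul_add, invOf_eq_inv]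
  · rw [← norm_neg]; congr 1; module
  all_goals congr 1; module

end MedianVectors

open EuclideanGeometry in
theorem dist_sq_eq_of_dist_midpoint_eq {V P : Type*} [NormedAddCommGroup V]
    [InnerProductSpace ℝ V] [MetricSpace P] [NormedAddTorsor V P] {A B C : P} {u v w : ℝ}
    (hu : dist A (midpoint ℝ B C) = u) (hv : dist B (midpoint ℝ A C) = v)
    (hw : dist C (midpoint ℝ A B) = w) :
    dist B C ^ 2 = 4 / 9 * (2 * (v ^ 2 + w ^ 2) - u ^ 2) ∧
    dist A C ^ 2 = 4 / 9 * (2 * (u ^ 2 + w ^ 2) - v ^ 2) ∧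
    dist A B ^ 2 = 4 / 9 * (2 * (u ^ 2 + v ^ 2) - w ^ 2) := by
  have apollonius_A := dist_sq_add_dist_sq_eq_two_mul_dist_midpoint_sq_add_half_dist_sq A B C
  have apollonius_B := dist_sq_add_dist_sq_eq_two_mul_dist_midpoint_sq_add_half_dist_sq B A C
  have apollonius_C := dist_sq_add_dist_sq_eq_two_mul_dist_midpoint_sq_add_half_dist_sq C A B
  rw [hu] at apollonius_A
  rw [dist_comm B A, hv] at apollonius_B
  rw [dist_comm C A, dist_comm C B, hw] at apollonius_C
  refine ⟨?_, ?_, ?_⟩ <;> linarith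

theorem EuclideanSpace.exists_norm_add_eq {u v w : ℝ} (hu : u < v + w) (hv : v < u + w)
    (hw : w < u + v) : ∃ q r : EuclideanSpace ℝ (Fin 2), ‖q + r‖ = u ∧ ‖q‖ = v ∧ ‖r‖ = w := by
  have hu₀ : 0 < u := by linarith
  set x := (u ^ 2 + v ^ 2 - w ^ 2) / (2 * u) with hx
  have hux : 2 * u * x = u ^ 2 + v ^ 2 - w ^ 2 := by rw [hx]; field_simp
  have hxv : x ^ 2 ≤ v ^ 2 := by
    refine sq_le_sq' ?_ ?_
    · rw [hx, le_div_iff₀ (by positivity)]; nlinarith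
    · rw [hx, div_le_iff₀ (by positivity)]; nlinarith
  set y := √(v ^ 2 - x ^ 2)
  have hy : y ^ 2 = v ^ 2 - x ^ 2 := Real.sq_sqrt (by linarith)
  have norm_eq (a b : ℝ) : ‖!₂[a, b]‖ = √(a ^ 2 + b ^ 2) := by
    simp [EuclideanSpace.norm_eq, Fin.sum_univ_two]
  refine ⟨!₂[x, y], !₂[u - x, -y], ?_, ?_, ?_⟩
  · have : !₂[x, y] + !₂[u - x, -y] = !₂[u, 0] := by ext i; fin_cases i <;> simp
    rw [this, norm_eq]; simp [hu₀.le]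
  · rw [norm_eq, hy, add_sub_cancel, Real.sqrt_sq (by linarith)]
  · rw [norm_eq, Real.sqrt_eq_iff_eq_sq (by positivity) (by linarith)]
    linear_combination hy - hux

theorem medians_existence_and_uniqueness_general (u v w : ℝ) :
    ((∃ A B C : EuclideanSpace ℝ (Fin 2),
        ¬ Collinear ℝ ({A, B, C} : Set (EuclideanSpace ℝ (Fin 2))) ∧
        dist A (midpoint ℝ B C) = u ∧ dist B (midpoint ℝ A C) = v ∧
        dist C (midpoint ℝ A B) = w) ↔ u + v + w > 2 * max u (max v w)) ∧
    (∀ A B C : EuclideanSpace ℝ (Fin 2),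
      ¬ Collinear ℝ ({A, B, C} : Set (EuclideanSpace ℝ (Fin 2))) →
      dist A (midpoint ℝ B C) = u → dist B (midpoint ℝ A C) = v →
      dist C (midpoint ℝ A B) = w →
      dist B C ^ 2 = 4 / 9 * (2 * (v ^ 2 + w ^ 2) - u ^ 2) ∧
      dist A C ^ 2 = 4 / 9 * (2 * (u ^ 2 + w ^ 2) - v ^ 2) ∧
      dist A B ^ 2 = 4 / 9 * (2 * (u ^ 2 + v ^ 2) - w ^ 2)) := by
  refine ⟨⟨?_, fun h => ?_⟩, fun A B C _ => dist_sq_eq_of_dist_midpoint_eq⟩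
  · rintro ⟨A, B, C, hABC, rfl, rfl, rfl⟩
    exact two_mul_max_lt_add_iff.2 (not_collinear_iff_dist_midpoint_lt_add.1 hABC)
  · obtain ⟨h₁, h₂, h₃⟩ := two_mul_max_lt_add_iff.1 h
    obtain ⟨q, r, hqr, hq, hr⟩ := EuclideanSpace.exists_norm_add_eq h₁ h₂ h₃
    obtain ⟨A, B, C, hA, hB, hC⟩ := exists_dist_midpoint_eq_norm q r
    refine ⟨A, B, C, ?_, hA.trans hqr, hB.trans hq, hC.trans hr⟩
    rw [not_collinear_iff_dist_midpoint_lt_add, hA, hB, hC, hqr, hq, hr]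
    exact ⟨h₁, h₂, h₃⟩

theorem medians_existence_and_uniqueness (u v w : ℝ)
    (hu : 0 < u) (hv : 0 < v) (hw : 0 < w) :
    ((∃ A B C : EuclideanSpace ℝ (Fin 2),
        ¬ Collinear ℝ ({A, B, C} : Set (EuclideanSpace ℝ (Fin 2))) ∧
        dist A (midpoint ℝ B C) = u ∧ dist B (midpoint ℝ A C) = v ∧
        dist C (midpoint ℝ A B) = w) ↔ u + v + w > 2 * max u (max v w)) ∧
    (∀ A B C : EuclideanSpace ℝ (Fin 2),
      ¬ Collinear ℝ ({A, B, C} : Set (EuclideanSpace ℝ (Fin 2))) →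
      dist A (midpoint ℝ B C) = u → dist B (midpoint ℝ A C) = v →
      dist C (midpoint ℝ A B) = w →
      dist B C ^ 2 = 4 / 9 * (2 * (v ^ 2 + w ^ 2) - u ^ 2) ∧
      dist A C ^ 2 = 4 / 9 * (2 * (u ^ 2 + w ^ 2) - v ^ 2) ∧
      dist A B ^ 2 = 4 / 9 * (2 * (u ^ 2 + v ^ 2) - w ^ 2)) :=
  medians_existence_and_uniqueness_general u v w
end

section
/- Let A, B, C be three non-collinear points in the Euclidean plane ℝ² whose median lengths are u = dist(A, midpoint(B,C)), v = dist(B, midpoint(A,C)) and w = dist(C, midpoint(A,B)). Then the triangle ABC is acute (the square of each side length is strictly less than the sum of the squares of the other two side lengths) if and only if u² + v² + w² < 6·min(u², v², w²). -/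
open EuclideanGeometry

section

variable {V P : Type*} [NormedAddCommGroup V] [InnerProductSpace ℝ V] [MetricSpace P]
  [NormedAddTorsor V P]

theorem dist_midpoint_sq (a b c : P) :
    dist a (midpoint ℝ b c) ^ 2 = (2 * dist a b ^ 2 + 2 * dist a c ^ 2 - dist b c ^ 2) / 4 := by
  linear_combination
    (-1 / 2 : ℝ) * dist_sq_add_dist_sq_eq_two_mul_dist_midpoint_sq_add_half_dist_sq a b c

/-- By Apollonius, `6 m_a² - (m_a² + m_b² + m_c²) = 3 / 2 * (b² + c² - a²)`. -/
theorem sum_sq_medians_lt_six_mul_sq_iff (a b c : P) :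
    dist a (midpoint ℝ b c) ^ 2 + dist b (midpoint ℝ c a) ^ 2 + dist c (midpoint ℝ a b) ^ 2 <
        6 * dist a (midpoint ℝ b c) ^ 2 ↔
      dist b c ^ 2 < dist c a ^ 2 + dist a b ^ 2 := by
  rw [dist_midpoint_sq a, dist_midpoint_sq b, dist_midpoint_sq c, dist_comm a c, dist_comm b a,
    dist_comm c b]
  constructor <;> intro h <;> linarith

end

theorem acute_iff_medians_condition_general (A B C : EuclideanSpace ℝ (Fin 2))
    (u v w : ℝ)
    (hu : u = dist A (midpoint ℝ B C)) (hv : v = dist B (midpoint ℝ A C))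
    (hw : w = dist C (midpoint ℝ A B)) :
    (dist B C ^ 2 < dist C A ^ 2 + dist A B ^ 2 ∧
     dist C A ^ 2 < dist B C ^ 2 + dist A B ^ 2 ∧
     dist A B ^ 2 < dist B C ^ 2 + dist C A ^ 2) ↔
    u ^ 2 + v ^ 2 + w ^ 2 < 6 * min (u ^ 2) (min (v ^ 2) (w ^ 2)) := by
  rw [midpoint_comm A C] at hv
  subst hu hv hw
  rw [mul_min_of_nonneg _ _ (by norm_num), mul_min_of_nonneg _ _ (by norm_num), lt_min_iff,
    lt_min_iff]
  refine and_congr (sum_sq_medians_lt_six_mul_sq_iff A B C).symm (and_congr ?_ ?_)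
  · rw [add_comm (dist B C ^ 2), ← sum_sq_medians_lt_six_mul_sq_iff B C A, add_rotate (dist A _ ^ 2)]
  · rw [← sum_sq_medians_lt_six_mul_sq_iff C A B, add_rotate (dist C _ ^ 2)]

theorem acute_iff_medians_condition (A B C : EuclideanSpace ℝ (Fin 2))
    (h : ¬ Collinear ℝ ({A, B, C} : Set (EuclideanSpace ℝ (Fin 2))))
    (u v w : ℝ)
    (hu : u = dist A (midpoint ℝ B C)) (hv : v = dist B (midpoint ℝ A C))
    (hw : w = dist C (midpoint ℝ A B)) :
    (dist B C ^ 2 < dist C A ^ 2 + dist A B ^ 2 ∧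
     dist C A ^ 2 < dist B C ^ 2 + dist A B ^ 2 ∧
     dist A B ^ 2 < dist B C ^ 2 + dist C A ^ 2) ↔
    u ^ 2 + v ^ 2 + w ^ 2 < 6 * min (u ^ 2) (min (v ^ 2) (w ^ 2)) :=
  acute_iff_medians_condition_general A B C u v w hu hv hw
end

section
/- The 2-dimensional Lebesgue measure of the set of pairs (s,t) in the unit square [0,1]² for which the three lengths p = min(s,t), q = |s-t| and r = 1-max(s,t) satisfy p² + q² + r² < 6·min(p², q², r²) equals 1/3 − (5/9)·ln(8/5). (This is the probability that the three pieces of a broken stick are the medians of an acute triangle.) -/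
/-!
Write p = min(s,t), q = |s - t|, r = 1 - max(s,t), so p + q + r = 1. The acuteness condition is
q² + r² < 5p², p² + r² < 5q², p² + q² < 5r², and for fixed p each of these bounds |q - r|: the
first reads |q - r| < √(9p² + 2p - 1), the other two together 2|q - r| < 3(1 - p) - √(9p² - 10p + 5).
After the symmetry s ↔ t and the shear (s, t) ↦ (s, t - s), the region is therefore
{(p, q) : |q - r| < w(p)} with w the smaller bound, which is positive exactly for
(√10 - 1)/9 < p < 1/2, so its area is ∫ w. The first bound is the smaller one up to p = 1/4, and
both integrals are instances of ∫ √(u² + D) du.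
-/

open MeasureTheory Set Real

theorem MeasureTheory.Measure.prod_self_apply_eq_two_mul_inter_lt {μ : Measure ℝ} [SFinite μ]
    {S : Set (ℝ × ℝ)} (hS : MeasurableSet S) (hswap : Prod.swap ⁻¹' S = S)
    (hdiag : ∀ x ∈ S, x.1 ≠ x.2) :
    μ.prod μ S = 2 * μ.prod μ (S ∩ {x | x.1 < x.2}) := by
  set T := S ∩ {x : ℝ × ℝ | x.1 < x.2}
  have hT : MeasurableSet T := hS.inter (measurableSet_lt measurable_fst measurable_snd)
  have hsplit : S = T ∪ Prod.swap ⁻¹' T := by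
    rw [preimage_inter, hswap]
    ext x
    simp only [T, mem_union, mem_inter_iff, mem_preimage, mem_ofPred_eq, Prod.fst_swap,
      Prod.snd_swap]
    constructor
    · intro hx
      exact (lt_or_gt_of_ne (hdiag x hx)).imp (⟨hx, ·⟩) (⟨hx, ·⟩)
    · rintro (⟨hx, -⟩ | ⟨hx, -⟩) <;> exact hx
  have hdisj : Disjoint T (Prod.swap ⁻¹' T) :=
    disjoint_left.2 fun x hx hx' => lt_asymm hx.2 (show x.2 < x.1 from hx'.2)
  rw [hsplit, measure_union hdisj (hT.preimage measurable_swap),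
    Measure.measurePreserving_swap.measure_preimage hT.nullMeasurableSet, ← two_mul]

noncomputable def sqrtSqAddPrimitive (D u : ℝ) : ℝ :=
  (u * √(u ^ 2 + D) + D * log (u + √(u ^ 2 + D))) / 2

theorem hasDerivAt_sqrtSqAddPrimitive {D u : ℝ} (hD : 0 < u ^ 2 + D)
    (hu : 0 < u + √(u ^ 2 + D)) :
    HasDerivAt (sqrtSqAddPrimitive D) √(u ^ 2 + D) u := by
  have hsq : HasDerivAt (fun v => √(v ^ 2 + D)) (2 * u / (2 * √(u ^ 2 + D))) u := by
    simpa using ((hasDerivAt_pow 2 u).add_const D).sqrt hD.ne'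
  have h := (((hasDerivAt_id' u).mul hsq).add
    ((((hasDerivAt_id' u).add hsq).log hu.ne').const_mul D)).div_const 2
  refine h.congr_deriv ?_
  simp only [Pi.add_apply]
  field_simp
  rw [sq_sqrt hD.le]
  ring

theorem integral_sqrt_sq_add {D a b : ℝ} (hab : a ≤ b) (hD : ∀ u ∈ Ioo a b, 0 < u ^ 2 + D)
    (hlog : ∀ u ∈ Icc a b, 0 < u + √(u ^ 2 + D)) :
    ∫ u in a..b, √(u ^ 2 + D) = sqrtSqAddPrimitive D b - sqrtSqAddPrimitive D a := by
  refine intervalIntegral.integral_eq_sub_of_hasDeriv_right_of_le hab ?_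
    (fun u hu => (hasDerivAt_sqrtSqAddPrimitive (hD u hu)
      (hlog u (Ioo_subset_Icc_self hu))).hasDerivWithinAt)
    ((by fun_prop : Continuous fun u => √(u ^ 2 + D)).intervalIntegrable _ _)
  unfold sqrtSqAddPrimitive
  have : ContinuousOn (fun u => u + √(u ^ 2 + D)) (Icc a b) := by fun_prop
  exact ((continuousOn_id.mul (by fun_prop)).add
    ((this.log fun u hu => (hlog u hu).ne').const_smul D)).div_const 2

def AcuteMedians (u v w : ℝ) : Prop :=
  u ^ 2 + v ^ 2 + w ^ 2 < 6 * min (u ^ 2) (min (v ^ 2) (w ^ 2))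

theorem acuteMedians_iff {u v w : ℝ} :
    AcuteMedians u v w ↔
      v ^ 2 + w ^ 2 < 5 * u ^ 2 ∧ u ^ 2 + w ^ 2 < 5 * v ^ 2 ∧ u ^ 2 + v ^ 2 < 5 * w ^ 2 := by
  rw [AcuteMedians, mul_min_of_nonneg _ _ (by norm_num), mul_min_of_nonneg _ _ (by norm_num),
    lt_min_iff, lt_min_iff]
  constructor <;> rintro ⟨h₁, h₂, h₃⟩ <;> exact ⟨by linarith, by linarith, by linarith⟩

namespace BrokenStick

def acutePairs : Set (ℝ × ℝ) :=
  {x | x.1 ∈ Icc 0 1 ∧ x.2 ∈ Icc 0 1 ∧ AcuteMedians (min x.1 x.2) |x.1 - x.2| (1 - max x.1 x.2)}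

theorem measurableSet_acutePairs : MeasurableSet acutePairs := by
  simp only [acutePairs, AcuteMedians, ofPred_and]
  exact (measurable_fst measurableSet_Icc).inter ((measurable_snd measurableSet_Icc).inter
    (measurableSet_lt (by fun_prop) (by fun_prop)))

theorem preimage_swap_acutePairs : Prod.swap ⁻¹' acutePairs = acutePairs := by
  ext ⟨s, t⟩
  simp only [acutePairs, mem_preimage, Prod.swap_prod_mk, mem_ofPred_eq, min_comm t,
    max_comm t, abs_sub_comm t]
  tauto

theorem fst_ne_snd_of_mem_acutePairs {x : ℝ × ℝ} (hx : x ∈ acutePairs) : x.1 ≠ x.2 := by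
  intro h
  have := hx.2.2
  rw [h, sub_self, abs_zero, acuteMedians_iff] at this
  nlinarith [this.2.1]

theorem acuteMedians_pieces_iff_of_lt {s t : ℝ} (h : s < t) :
    AcuteMedians (min s t) |s - t| (1 - max s t) ↔ AcuteMedians s (t - s) (1 - t) := by
  rw [min_eq_left h.le, max_eq_right h.le, abs_sub_comm, abs_of_pos (sub_pos.2 h)]

noncomputable def rad₁ (p : ℝ) : ℝ := √(9 * p ^ 2 + 2 * p - 1)

noncomputable def rad₂ (p : ℝ) : ℝ := √(9 * p ^ 2 - 10 * p + 5)

noncomputable def width (p : ℝ) : ℝ := min (rad₁ p) ((3 * (1 - p) - rad₂ p) / 2)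

noncomputable def pMin : ℝ := (√10 - 1) / 9

theorem sq_add_sq_lt_five_mul_sq_iff_abs_sub_lt {p q r : ℝ} (h : p + q + r = 1) :
    q ^ 2 + r ^ 2 < 5 * p ^ 2 ↔ |q - r| < rad₁ p := by
  have key : (q - r) ^ 2 - (9 * p ^ 2 + 2 * p - 1) = 2 * (q ^ 2 + r ^ 2 - 5 * p ^ 2) := by
    linear_combination (-(1 - p + q + r)) * h
  rw [rad₁, lt_sqrt (abs_nonneg _), sq_abs]
  constructor <;> intro <;> linarith

theorem sq_add_sq_lt_five_mul_sq_iff_rad₂_lt {p q r : ℝ} (h : p + q + r = 1) (hq : 0 ≤ q)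
    (hr : 0 ≤ r) : p ^ 2 + r ^ 2 < 5 * q ^ 2 ↔ rad₂ p < 5 * q + r := by
  have key : (5 * q + r) ^ 2 - (9 * p ^ 2 - 10 * p + 5) = 4 * (5 * q ^ 2 - p ^ 2 - r ^ 2) := by
    linear_combination 5 * (1 - p + q + r) * h
  rw [rad₂, sqrt_lt (by nlinarith [sq_nonneg (3 * p - 5 / 3)]) (by linarith)]
  constructor <;> intro <;> linarith

theorem acuteMedians_iff_abs_sub_lt_width {p q r : ℝ} (h : p + q + r = 1) (hq : 0 ≤ q)
    (hr : 0 ≤ r) : AcuteMedians p q r ↔ |q - r| < width p := by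
  rw [acuteMedians_iff, sq_add_sq_lt_five_mul_sq_iff_abs_sub_lt h,
    sq_add_sq_lt_five_mul_sq_iff_rad₂_lt h hq hr,
    sq_add_sq_lt_five_mul_sq_iff_rad₂_lt (by linarith) hr hq, width, lt_min_iff, abs_lt, abs_lt]
  constructor <;> rintro ⟨h₁, h₂, h₃⟩ <;> exact ⟨h₁, by linarith, by linarith⟩

theorem pMin_pos : 0 < pMin := by
  have : 1 < √10 := lt_sqrt_of_sq_lt (by norm_num)
  unfold pMin
  linarith

theorem pMin_lt_quarter : pMin < 1 / 4 := by
  have : √10 < 13 / 4 := (sqrt_lt' (by norm_num)).2 (by norm_num)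
  unfold pMin
  linarith

theorem rad₁_arg_eq_mul (p : ℝ) :
    9 * p ^ 2 + 2 * p - 1 = 9 * (p - pMin) * (p + (√10 + 1) / 9) := by
  have := sq_sqrt (show (0 : ℝ) ≤ 10 by norm_num)
  unfold pMin
  linear_combination (1 / 9) * this

theorem pMin_lt_iff {p : ℝ} (hp : 0 ≤ p) : pMin < p ↔ 0 < 9 * p ^ 2 + 2 * p - 1 := by
  rw [rad₁_arg_eq_mul, mul_pos_iff_of_pos_right (by positivity),
    mul_pos_iff_of_pos_left (by norm_num), sub_pos]

theorem rad₁_nonneg (p : ℝ) : 0 ≤ rad₁ p := sqrt_nonneg _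

theorem rad₁_sq {p : ℝ} (h : pMin ≤ p) : rad₁ p ^ 2 = 9 * p ^ 2 + 2 * p - 1 := by
  refine sq_sqrt ?_
  rw [rad₁_arg_eq_mul]
  exact mul_nonneg (mul_nonneg (by norm_num) (sub_nonneg.2 h)) (by linarith [pMin_pos, sqrt_nonneg 10])

theorem rad₂_lt_iff {p : ℝ} : rad₂ p < 3 * (1 - p) ↔ p < 1 / 2 := by
  constructor
  · intro h
    rw [rad₂, sqrt_lt' ((sqrt_nonneg _).trans_lt h)] at h
    linarith
  · intro h
    rw [rad₂, sqrt_lt' (by linarith)]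
    linarith

theorem one_sub_lt_rad₂ (p : ℝ) : 1 - p < rad₂ p :=
  lt_sqrt_of_sq_lt (by nlinarith [sq_nonneg (2 * p - 1)])

theorem nonneg_acuteMedians_iff {p q r : ℝ} (h : p + q + r = 1) :
    (0 ≤ p ∧ 0 < q ∧ 0 ≤ r ∧ AcuteMedians p q r) ↔
      p ∈ Ioo pMin (1 / 2) ∧ |q - r| < width p := by
  constructor
  · rintro ⟨hp, hq, hr, hacute⟩
    have hw := (acuteMedians_iff_abs_sub_lt_width h hq.le hr).1 hacute
    have h₁ : |q - r| < rad₁ p := hw.trans_le (min_le_left _ _)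
    have h₂ : |q - r| < (3 * (1 - p) - rad₂ p) / 2 := hw.trans_le (min_le_right _ _)
    have hrad₁ : 0 < rad₁ p := (abs_nonneg _).trans_lt h₁
    refine ⟨⟨(pMin_lt_iff hp).2 (sqrt_pos.1 hrad₁), rad₂_lt_iff.1 ?_⟩, hw⟩
    linarith [abs_nonneg (q - r)]
  · rintro ⟨⟨hpMin, -⟩, hw⟩
    have h₂ : |q - r| < (3 * (1 - p) - rad₂ p) / 2 := hw.trans_le (min_le_right _ _)
    have := one_sub_lt_rad₂ p
    rw [abs_lt] at h₂
    have hq : 0 < q := by linarith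
    have hr : 0 < r := by linarith
    exact ⟨pMin_pos.le.trans hpMin.le, hq, hr.le,
      (acuteMedians_iff_abs_sub_lt_width h hq.le hr.le).2 hw⟩

theorem shear_preimage_acutePairs_inter_lt :
    (fun z : ℝ × ℝ => (z.1, z.1 + z.2)) ⁻¹' (acutePairs ∩ {x | x.1 < x.2}) =
      regionBetween (fun p => (1 - p - width p) / 2) (fun p => (1 - p + width p) / 2)
        (Ioo pMin (1 / 2)) := by
  ext ⟨p, q⟩
  simp only [acutePairs, regionBetween, mem_preimage, mem_inter_iff, mem_ofPred_eq, mem_Icc]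
  have hsum : p + q + (1 - (p + q)) = 1 := by ring
  constructor
  · rintro ⟨⟨⟨hp, -⟩, ⟨-, hpq⟩, hacute⟩, hlt⟩
    rw [acuteMedians_pieces_iff_of_lt hlt, add_sub_cancel_left] at hacute
    obtain ⟨hpI, hw⟩ := (nonneg_acuteMedians_iff hsum).1 ⟨hp, by linarith, by linarith, hacute⟩
    rw [abs_lt] at hw
    exact ⟨hpI, by linarith, by linarith⟩
  · rintro ⟨hpI, hlo, hhi⟩
    have hw : |q - (1 - (p + q))| < width p := abs_lt.2 ⟨by linarith, by linarith⟩
    obtain ⟨hp, hq, hr, hacute⟩ := (nonneg_acuteMedians_iff hsum).2 ⟨hpI, hw⟩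
    have hlt : p < p + q := by linarith
    refine ⟨⟨⟨hp, by linarith⟩, ⟨by linarith, by linarith⟩, ?_⟩, hlt⟩
    rwa [acuteMedians_pieces_iff_of_lt hlt, add_sub_cancel_left]

-- Both cases reduce, after squaring twice, to the sign of (1 - 4p)(1 - 2p)(1 + 2p).
theorem width_eq_rad₁ {p : ℝ} (h₀ : pMin ≤ p) (h₁ : p ≤ 1 / 4) : width p = rad₁ p := by
  have hp : 0 ≤ p := pMin_pos.le.trans h₀
  have hsq := rad₁_sq h₀
  have hrad₁ : (1 - p) * rad₁ p ≤ 3 * p ^ 2 := by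
    refine (pow_le_pow_iff_left₀ (mul_nonneg (by linarith) (rad₁_nonneg p)) (by positivity)
      two_ne_zero).1 ?_
    rw [mul_pow (1 - p), hsq]
    nlinarith [mul_nonneg (mul_nonneg (by linarith : 0 ≤ 1 - 4 * p) (by linarith : 0 ≤ 1 - 2 * p))
      (by linarith : 0 ≤ 1 + 2 * p)]
  refine min_eq_left ?_
  have : rad₂ p ≤ 3 * (1 - p) - 2 * rad₁ p := by
    refine sqrt_le_iff.2 ⟨by nlinarith [rad₁_nonneg p], ?_⟩
    nlinarith
  linarith

theorem width_eq_of_quarter_le {p : ℝ} (h₀ : 1 / 4 ≤ p) (h₁ : p ≤ 1 / 2) :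
    width p = (3 * (1 - p) - rad₂ p) / 2 := by
  have hsq := rad₁_sq (pMin_lt_quarter.le.trans h₀)
  have hrad₁ : 3 * p ^ 2 ≤ (1 - p) * rad₁ p := by
    refine (pow_le_pow_iff_left₀ (by positivity) (mul_nonneg (by linarith) (rad₁_nonneg p))
      two_ne_zero).1 ?_
    rw [mul_pow (1 - p), hsq]
    nlinarith [mul_nonneg (mul_nonneg (by linarith : 0 ≤ 4 * p - 1) (by linarith : 0 ≤ 1 - 2 * p))
      (by linarith : 0 ≤ 1 + 2 * p)]
  refine min_eq_right ?_
  have : 3 * (1 - p) - 2 * rad₁ p ≤ rad₂ p := by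
    rcases le_total (3 * (1 - p) - 2 * rad₁ p) 0 with h | h
    · exact h.trans (sqrt_nonneg _)
    · refine (le_sqrt h (by nlinarith [sq_nonneg (3 * p - 5 / 3)])).2 ?_
      nlinarith
  linarith

theorem continuous_rad₂ : Continuous rad₂ := by
  unfold rad₂
  fun_prop

theorem continuous_width : Continuous width := by
  unfold width rad₁ rad₂
  fun_prop

theorem log_sqrt_ten_div_three : log (√10 / 3) = log (4 / 3) - log (8 / 5) / 2 := by
  have h₁ : 2 * log (√10 / 3) = log (10 / 9) := by
    have hne : √10 / 3 ≠ 0 := by positivity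
    rw [two_mul, ← log_mul hne hne, div_mul_div_comm, mul_self_sqrt (by norm_num)]
    norm_num
  have h₂ : 2 * log (4 / 3) - log (8 / 5) = log (10 / 9) := by
    rw [two_mul, ← log_mul (by norm_num) (by norm_num), ← log_div (by norm_num) (by norm_num)]
    norm_num
  linarith

theorem integral_rad₁ : ∫ p in pMin..1 / 4, rad₁ p = 13 / 288 - 5 / 54 * log (8 / 5) := by
  have h10 := sq_sqrt (show (0 : ℝ) ≤ 10 by norm_num)
  have hlo : 3 * pMin + 1 / 3 = √10 / 3 := by unfold pMin; ring
  have hsqrt_lo : √((√10 / 3) ^ 2 + -10 / 9) = 0 := by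
    rw [div_pow, h10]
    norm_num
  have hsqrt_hi : √((13 / 12) ^ 2 + -10 / 9 : ℝ) = 1 / 4 := by
    rw [show (13 / 12) ^ 2 + -10 / 9 = (1 / 4 : ℝ) ^ 2 by norm_num, sqrt_sq (by norm_num)]
  calc ∫ p in pMin..1 / 4, rad₁ p
      = ∫ p in pMin..1 / 4, √((3 * p + 1 / 3) ^ 2 + -10 / 9) :=
        intervalIntegral.integral_congr fun p _ => by rw [rad₁]; ring_nf
    _ = 3⁻¹ * ∫ u in √10 / 3..13 / 12, √(u ^ 2 + -10 / 9) := by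
        rw [intervalIntegral.integral_comp_mul_add (fun u => √(u ^ 2 + -10 / 9)) three_ne_zero,
          hlo, smul_eq_mul]
        norm_num
    _ = 3⁻¹ * (sqrtSqAddPrimitive (-10 / 9) (13 / 12) - sqrtSqAddPrimitive (-10 / 9) (√10 / 3)) := by
        have hpos : 0 < √10 / 3 := by positivity
        have hab : √10 / 3 ≤ 13 / 12 := by linarith [pMin_lt_quarter]
        rw [integral_sqrt_sq_add hab (fun u hu => by nlinarith [hu.1])
          (fun u hu => by linarith [hu.1, sqrt_nonneg (u ^ 2 + -10 / 9)])]
    _ = 13 / 288 - 5 / 54 * log (8 / 5) := by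
        rw [sqrtSqAddPrimitive, sqrtSqAddPrimitive, hsqrt_lo, hsqrt_hi, add_zero,
          log_sqrt_ten_div_three]
        norm_num
        ring

theorem integral_rad₂ : ∫ p in (1 / 4 : ℝ)..1 / 2, rad₂ p = 65 / 288 + 10 / 27 * log (8 / 5) := by
  have hsqrt_lo : √((-11 / 12) ^ 2 + 20 / 9 : ℝ) = 7 / 4 := by
    rw [show (-11 / 12) ^ 2 + 20 / 9 = (7 / 4 : ℝ) ^ 2 by norm_num, sqrt_sq (by norm_num)]
  have hsqrt_hi : √((-1 / 6) ^ 2 + 20 / 9 : ℝ) = 3 / 2 := by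
    rw [show (-1 / 6) ^ 2 + 20 / 9 = (3 / 2 : ℝ) ^ 2 by norm_num, sqrt_sq (by norm_num)]
  have hlog : log (8 / 5) = log (4 / 3) - log (5 / 6) := by
    rw [← log_div (by norm_num) (by norm_num)]
    norm_num
  calc ∫ p in (1 / 4 : ℝ)..1 / 2, rad₂ p
      = ∫ p in (1 / 4 : ℝ)..1 / 2, √((3 * p + -5 / 3) ^ 2 + 20 / 9) :=
        intervalIntegral.integral_congr fun p _ => by rw [rad₂]; ring_nf
    _ = 3⁻¹ * ∫ u in (-11 / 12 : ℝ)..-1 / 6, √(u ^ 2 + 20 / 9) := by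
        rw [intervalIntegral.integral_comp_mul_add (fun u => √(u ^ 2 + 20 / 9)) three_ne_zero,
          smul_eq_mul]
        norm_num
    _ = 3⁻¹ * (sqrtSqAddPrimitive (20 / 9) (-1 / 6) - sqrtSqAddPrimitive (20 / 9) (-11 / 12)) := by
        refine congrArg _ (integral_sqrt_sq_add (by norm_num) (fun u _ => by positivity)
          fun u _ => ?_)
        linarith [lt_sqrt_of_sq_lt (show (-u) ^ 2 < u ^ 2 + 20 / 9 by nlinarith)]
    _ = 65 / 288 + 10 / 27 * log (8 / 5) := by
        rw [sqrtSqAddPrimitive, sqrtSqAddPrimitive, hsqrt_lo, hsqrt_hi, hlog]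
        norm_num
        ring

theorem integral_width : ∫ p in Ioo pMin (1 / 2), width p = 1 / 6 - 5 / 18 * log (8 / 5) := by
  have hint : ∀ a b, IntervalIntegrable width volume a b := continuous_width.intervalIntegrable
  have hleft : ∫ p in pMin..1 / 4, width p = ∫ p in pMin..1 / 4, rad₁ p := by
    refine intervalIntegral.integral_congr fun p hp => ?_
    rw [uIcc_of_le pMin_lt_quarter.le] at hp
    exact width_eq_rad₁ hp.1 hp.2
  have hright : ∫ p in (1 / 4 : ℝ)..1 / 2, width p =
      ∫ p in (1 / 4 : ℝ)..1 / 2, (3 * (1 - p) - rad₂ p) / 2 := by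
    refine intervalIntegral.integral_congr fun p hp => ?_
    rw [uIcc_of_le (by norm_num)] at hp
    exact width_eq_of_quarter_le hp.1 hp.2
  have hlinear : ∫ p in (1 / 4 : ℝ)..1 / 2, 3 * (1 - p) = 15 / 32 := by
    rw [intervalIntegral.integral_const_mul,
      intervalIntegral.integral_comp_sub_left (fun x => x), integral_id]
    norm_num
  rw [← integral_Ioc_eq_integral_Ioo, ← intervalIntegral.integral_of_le
      (pMin_lt_quarter.trans (by norm_num)).le,
    ← intervalIntegral.integral_add_adjacent_intervals (hint _ (1 / 4)) (hint _ _), hleft, hright,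
    intervalIntegral.integral_div, intervalIntegral.integral_sub
      ((by fun_prop : Continuous fun p : ℝ => 3 * (1 - p)).intervalIntegrable _ _)
      (continuous_rad₂.intervalIntegrable _ _), hlinear, integral_rad₁, integral_rad₂]
  ring

theorem volume_acutePairs_inter_lt :
    volume.prod volume (acutePairs ∩ {x | x.1 < x.2}) =
      ENNReal.ofReal (1 / 6 - 5 / 18 * log (8 / 5)) := by
  have hmeas := measurableSet_acutePairs.inter (measurableSet_lt measurable_fst measurable_snd)
  have hwidth : ∀ p ∈ Ioo pMin (1 / 2), 0 ≤ width p := fun p hp =>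
    le_min (rad₁_nonneg p) (by linarith [rad₂_lt_iff.2 hp.2])
  have hcont := continuous_width
  rw [← (measurePreserving_prod_add volume volume).measure_preimage hmeas.nullMeasurableSet,
    shear_preimage_acutePairs_inter_lt, volume_regionBetween_eq_integral
      ((by fun_prop : Continuous fun p => (1 - p - width p) / 2).integrableOn_Icc.mono_set
        Ioo_subset_Icc_self)
      ((by fun_prop : Continuous fun p => (1 - p + width p) / 2).integrableOn_Icc.mono_set
        Ioo_subset_Icc_self)
      measurableSet_Ioo fun p hp => by linarith [hwidth p hp], ← integral_width]
  congr 2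
  ext p
  simp only [Pi.sub_apply]
  ring

end BrokenStick

theorem broken_stick_acute_medians_prob :
    volume {p : ℝ × ℝ | p.1 ∈ Set.Icc (0:ℝ) 1 ∧ p.2 ∈ Set.Icc (0:ℝ) 1 ∧
      min p.1 p.2 ^ 2 + |p.1 - p.2| ^ 2 + (1 - max p.1 p.2) ^ 2 <
        6 * min (min p.1 p.2 ^ 2) (min (|p.1 - p.2| ^ 2) ((1 - max p.1 p.2) ^ 2))} =
    ENNReal.ofReal (1 / 3 - 5 / 9 * Real.log (8 / 5)) := by
  change volume BrokenStick.acutePairs = _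
  rw [Measure.volume_eq_prod, Measure.prod_self_apply_eq_two_mul_inter_lt
      BrokenStick.measurableSet_acutePairs BrokenStick.preimage_swap_acutePairs
      fun _ => BrokenStick.fst_ne_snd_of_mem_acutePairs,
    BrokenStick.volume_acutePairs_inter_lt, ← ENNReal.ofReal_ofNat 2,
    ← ENNReal.ofReal_mul zero_le_two]
  ring_nf
end

section
/- Let u, v, w be positive real numbers. There exist three non-collinear points A, B, C in the Euclidean plane ℝ² such that the distance from A to the line through B and C equals u, the distance from B to the line through A and C equals v, and the distance from C to the line through A and B equals w, if and only if 1/u + 1/v + 1/w > 2·max(1/u, 1/v, 1/w). -/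
open Metric
open scoped RealInnerProductSpace

/-!
With `S = √(‖B - A‖² ‖C - A‖² - ⟪B - A, C - A⟫²)` (twice the area of the triangle), every
altitude times the opposite side equals `S`. Hence `1/u, 1/v, 1/w` are the side lengths divided
by `S`, and the condition `1/u + 1/v + 1/w > 2 max(1/u, 1/v, 1/w)` is the strict triangle
inequality for them. Conversely, a triangle with sides proportional to `1/u, 1/v, 1/w` exists,
and scaling it to make the altitude from `A` equal to `u` fixes the other two altitudes.
-/

lemma two_mul_max_lt_add_iff_s6 {a b c : ℝ} :
    2 * max a (max b c) < a + b + c ↔ a < b + c ∧ b < a + c ∧ c < a + b := by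
  constructor
  · intro h
    have := le_max_left a (max b c)
    have := (le_max_left b c).trans (le_max_right a _)
    have := (le_max_right b c).trans (le_max_right a _)
    refine ⟨?_, ?_, ?_⟩ <;> linarith
  · rintro ⟨h1, h2, h3⟩
    rcases max_cases b c with ⟨hm, -⟩ | ⟨hm, -⟩ <;>
      rcases max_cases a (max b c) with ⟨hm', -⟩ | ⟨hm', -⟩ <;> linarith

lemma exists_sq_add_sq_eq_of_lt_add {a b c : ℝ} (h1 : a < b + c) (h2 : b < a + c)
    (h3 : c < a + b) : ∃ x y : ℝ, 0 < y ∧ x ^ 2 + y ^ 2 = c ^ 2 ∧ (x - a) ^ 2 + y ^ 2 = b ^ 2 := by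
  have ha : 0 < a := by linarith
  set x := (a ^ 2 + c ^ 2 - b ^ 2) / (2 * a)
  have hx : 2 * a * x = a ^ 2 + c ^ 2 - b ^ 2 := mul_div_cancel₀ _ (by positivity)
  have hy : 0 < c ^ 2 - x ^ 2 := by
    have : 0 < (b - a + c) * (b + a - c) * ((a + c - b) * (a + b + c)) :=
      mul_pos (mul_pos (by linarith) (by linarith)) (mul_pos (by linarith) (by linarith))
    nlinarith
  refine ⟨x, √(c ^ 2 - x ^ 2), Real.sqrt_pos.2 hy, ?_, ?_⟩ <;> rw [Real.sq_sqrt hy.le]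
  · ring
  · linear_combination -hx

section GramDet

variable {V : Type*} [NormedAddCommGroup V] [InnerProductSpace ℝ V]

def gramDet (x y : V) : ℝ := ‖x‖ ^ 2 * ‖y‖ ^ 2 - ⟪x, y⟫ ^ 2

lemma gramDet_comm (x y : V) : gramDet x y = gramDet y x := by
  rw [gramDet, gramDet, real_inner_comm]; ring

lemma gramDet_neg_sub (x y : V) : gramDet (-x) (y - x) = gramDet x y := by
  simp only [gramDet, norm_neg, inner_neg_left, norm_sub_sq_real, inner_sub_right,
    real_inner_self_eq_norm_sq, real_inner_comm y x]
  ring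

lemma norm_sub_smul_sq_mul_norm_sq (x y : V) (t : ℝ) :
    ‖x - t • y‖ ^ 2 * ‖y‖ ^ 2 = (t * ‖y‖ ^ 2 - ⟪x, y⟫) ^ 2 + gramDet x y := by
  rw [norm_sub_sq_real, norm_smul, inner_smul_right, Real.norm_eq_abs, mul_pow, sq_abs, gramDet]
  ring

lemma sqrt_gramDet_le_norm_sub_smul_mul_norm (x y : V) (t : ℝ) :
    √(gramDet x y) ≤ ‖x - t • y‖ * ‖y‖ := by
  rw [← Real.sqrt_sq (by positivity : 0 ≤ ‖x - t • y‖ * ‖y‖), mul_pow,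
    norm_sub_smul_sq_mul_norm_sq]
  exact Real.sqrt_le_sqrt (le_add_of_nonneg_left (sq_nonneg _))

lemma norm_sub_smul_mul_norm_eq_sqrt_gramDet (x : V) {y : V} (hy : y ≠ 0) :
    ‖x - (⟪x, y⟫ / ‖y‖ ^ 2) • y‖ * ‖y‖ = √(gramDet x y) := by
  have : ‖y‖ ^ 2 ≠ 0 := by positivity
  rw [← Real.sqrt_sq (by positivity : 0 ≤ _ * ‖y‖), mul_pow, norm_sub_smul_sq_mul_norm_sq,
    div_mul_cancel₀ _ this, sub_self, zero_pow two_ne_zero, zero_add]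

end GramDet

section Altitude

variable {V P : Type*} [NormedAddCommGroup V] [InnerProductSpace ℝ V] [MetricSpace P]
  [NormedAddTorsor V P]

lemma gramDet_vsub_vsub (A B C : P) :
    gramDet (A -ᵥ B) (C -ᵥ B) = gramDet (B -ᵥ A) (C -ᵥ A) := by
  rw [← neg_vsub_eq_vsub_rev B A, ← vsub_sub_vsub_cancel_right C B A, gramDet_neg_sub]

lemma dist_lineMap_eq_norm (A B C : P) (t : ℝ) :
    dist A (AffineMap.lineMap B C t) = ‖(A -ᵥ B) - t • (C -ᵥ B)‖ := by
  rw [dist_eq_norm_vsub V, AffineMap.lineMap_apply, vsub_vadd_eq_vsub_sub]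

theorem infDist_affineSpan_pair_mul_dist (A : P) {B C : P} (h : B ≠ C) :
    infDist A line[ℝ, B, C] * dist B C = √(gramDet (A -ᵥ B) (C -ᵥ B)) := by
  have hCB : 0 < ‖C -ᵥ B‖ := norm_pos_iff.2 (vsub_ne_zero.2 h.symm)
  rw [dist_comm, dist_eq_norm_vsub V]
  apply le_antisymm
  · rw [← norm_sub_smul_mul_norm_eq_sqrt_gramDet _ (vsub_ne_zero.2 h.symm),
      ← dist_lineMap_eq_norm]
    gcongr
    exact infDist_le_dist_of_mem (AffineMap.lineMap_mem_affineSpan_pair _ _ _)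
  · rw [← div_le_iff₀ hCB, le_infDist ⟨B, left_mem_affineSpan_pair ℝ B C⟩]
    intro q hq
    obtain ⟨t, rfl⟩ := mem_affineSpan_pair_iff_exists_lineMap_eq.1 hq
    rw [div_le_iff₀ hCB, dist_lineMap_eq_norm]
    exact sqrt_gramDet_le_norm_sub_smul_mul_norm _ _ t

theorem altitude_mul_opposite_side_eq {A B C : P} (hAB : A ≠ B) (hAC : A ≠ C) (hBC : B ≠ C) :
    infDist A line[ℝ, B, C] * dist B C = √(gramDet (B -ᵥ A) (C -ᵥ A)) ∧
      infDist B line[ℝ, A, C] * dist A C = √(gramDet (B -ᵥ A) (C -ᵥ A)) ∧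
      infDist C line[ℝ, A, B] * dist A B = √(gramDet (B -ᵥ A) (C -ᵥ A)) := by
  refine ⟨?_, infDist_affineSpan_pair_mul_dist B hAC, ?_⟩
  · rw [infDist_affineSpan_pair_mul_dist A hBC, gramDet_vsub_vsub]
  · rw [infDist_affineSpan_pair_mul_dist C hAB, gramDet_comm]

end Altitude

section Collinear

variable {V P : Type*} [NormedAddCommGroup V] [NormedSpace ℝ V] [MetricSpace P]
  [NormedAddTorsor V P]

lemma dist_lt_dist_add_dist_of_not_collinear [StrictConvexSpace ℝ V] {A B C : P}
    (h : ¬Collinear ℝ {A, B, C}) : dist A C < dist A B + dist B C :=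
  (dist_triangle A B C).lt_of_ne fun heq => h (dist_add_dist_eq_iff.1 heq.symm).collinear

lemma not_collinear_of_infDist_affineSpan_pair_pos {A B C : P} (hBC : B ≠ C)
    (h : 0 < infDist A line[ℝ, B, C]) : ¬Collinear ℝ {A, B, C} := fun hcol =>
  h.ne' (infDist_zero_of_mem (hcol.mem_affineSpan_of_mem_of_ne (by simp) (by simp) (by simp) hBC))

end Collinear

lemma exists_triangle_sides_proportional_of_lt_add {a b c h : ℝ} (h1 : a < b + c)
    (h2 : b < a + c) (h3 : c < a + b) (hh : 0 < h) :
    ∃ k > 0, ∃ A B C : EuclideanSpace ℝ (Fin 2), dist B C = k * a ∧ dist A C = k * b ∧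
      dist A B = k * c ∧ infDist A line[ℝ, B, C] = h := by
  obtain ⟨x, y, hy, hc2, hb2⟩ := exists_sq_add_sq_eq_of_lt_add h1 h2 h3
  have ha : 0 < a := by linarith
  have hb : 0 < b := by linarith
  have hc : 0 < c := by linarith
  have hk : 0 < h / y := div_pos hh hy
  set k := h / y
  have hdist (p q r s : ℝ) : dist !₂[p, q] !₂[r, s] = √((p - r) ^ 2 + (q - s) ^ 2) := by
    simp [EuclideanSpace.dist_eq, Fin.sum_univ_two, Real.dist_eq]
  have hsqrt {d e : ℝ} (he : 0 ≤ e) (hd : d = e ^ 2) : √d = e := by rw [hd, Real.sqrt_sq he]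
  -- `B` at the origin and `C` on the first axis, so the altitude from `A` is `k * y`.
  set A : EuclideanSpace ℝ (Fin 2) := !₂[k * x, k * y]
  set B : EuclideanSpace ℝ (Fin 2) := !₂[0, 0]
  set C : EuclideanSpace ℝ (Fin 2) := !₂[k * a, 0]
  have hBC : dist B C = k * a := by rw [hdist]; exact hsqrt (by positivity) (by ring)
  refine ⟨k, hk, A, B, C, hBC, ?_, ?_, ?_⟩
  · rw [hdist]; exact hsqrt (by positivity) (by linear_combination k ^ 2 * hb2)
  · rw [hdist]; exact hsqrt (by positivity) (by linear_combination k ^ 2 * hc2)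
  have hA := infDist_affineSpan_pair_mul_dist A (dist_pos.1 (hBC ▸ by positivity) : B ≠ C)
  simp only [gramDet, vsub_eq_sub, EuclideanSpace.norm_sq_eq, PiLp.sub_apply, PiLp.inner_apply,
    Real.norm_eq_abs, sq_abs, Fin.sum_univ_two, Matrix.cons_val_zero, Matrix.cons_val_one,
    RCLike.inner_apply, conj_trivial, A, B, C] at hA
  rw [hBC, hsqrt (by positivity : 0 ≤ k * y * (k * a)) (by ring)] at hA
  rw [mul_right_cancel₀ (by positivity) hA, div_mul_cancel₀ h hy.ne']

theorem altitudes_existence (u v w : ℝ) (hu : 0 < u) (hv : 0 < v) (hw : 0 < w) :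
    (∃ A B C : EuclideanSpace ℝ (Fin 2),
      ¬ Collinear ℝ ({A, B, C} : Set (EuclideanSpace ℝ (Fin 2))) ∧
      infDist A (affineSpan ℝ {B, C} : Set (EuclideanSpace ℝ (Fin 2))) = u ∧
      infDist B (affineSpan ℝ {A, C} : Set (EuclideanSpace ℝ (Fin 2))) = v ∧
      infDist C (affineSpan ℝ {A, B} : Set (EuclideanSpace ℝ (Fin 2))) = w) ↔
    1 / u + 1 / v + 1 / w > 2 * max (1 / u) (max (1 / v) (1 / w)) := by
  rw [gt_iff_lt, two_mul_max_lt_add_iff_s6]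
  constructor
  · rintro ⟨A, B, C, hABC, hA, hB, hC⟩
    obtain ⟨ha, hb, hc⟩ := altitude_mul_opposite_side_eq (ne₁₂_of_not_collinear hABC)
      (ne₁₃_of_not_collinear hABC) (ne₂₃_of_not_collinear hABC)
    rw [hA] at ha; rw [hB] at hb; rw [hC] at hc
    set S := √(gramDet (B -ᵥ A) (C -ᵥ A))
    have hS : 0 < S := ha ▸ mul_pos hu (dist_pos.2 (ne₂₃_of_not_collinear hABC))
    have one_div_eq {h d : ℝ} (hh : 0 < h) (e : h * d = S) : 1 / h = d / S := by
      rw [eq_div_iff hS.ne', ← e]; field_simp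
    have t1 := dist_lt_dist_add_dist_of_not_collinear (Set.insert_comm A B {C} ▸ hABC)
    have t2 := dist_lt_dist_add_dist_of_not_collinear hABC
    have t3 := dist_lt_dist_add_dist_of_not_collinear (Set.pair_comm B C ▸ hABC)
    rw [one_div_eq hu ha, one_div_eq hv hb, one_div_eq hw hc]
    simp only [← add_div, div_lt_div_iff_of_pos_right hS]
    rw [dist_comm B A, dist_comm C B] at *
    exact ⟨by linarith, by linarith, by linarith⟩
  · rintro ⟨h1, h2, h3⟩
    obtain ⟨k, hk, A, B, C, ha, hb, hc, hA⟩ :=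
      exists_triangle_sides_proportional_of_lt_add h1 h2 h3 hu
    have hBC : B ≠ C := dist_pos.1 (ha ▸ by positivity)
    have hAC : A ≠ C := dist_pos.1 (hb ▸ by positivity)
    have hAB : A ≠ B := dist_pos.1 (hc ▸ by positivity)
    obtain ⟨eA, eB, eC⟩ := altitude_mul_opposite_side_eq hAB hAC hBC
    have altitude_eq {h y : ℝ} (hy : 0 < y) (e : h * (k * (1 / y)) = u * (k * (1 / u))) : h = y := by
      field_simp at e
      exact e
    refine ⟨A, B, C, not_collinear_of_infDist_affineSpan_pair_pos hBC (hA ▸ hu), hA,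
      altitude_eq hv ?_, altitude_eq hw ?_⟩
    · rw [← hb, ← ha, ← hA, eA, eB]
    · rw [← hc, ← ha, ← hA, eA, eC]
end

section
/- Let u, v, w be positive real numbers. Then there exists a unique triple (a, b, c) of positive reals satisfying the strict triangle inequality such that 2S/(b+c-a) = u, 2S/(a+c-b) = v and 2S/(a+b-c) = w, where S is the Heron area of the triangle with sides a, b, c. Explicitly, a = (uv+uw)/√(uv+vw+wu), b = (uv+vw)/√(uv+vw+wu) and c = (uw+vw)/√(uv+vw+wu). -/
/-!
Put x = b + c - a, y = a + c - b, z = a + b - c: the triangle inequality says x, y, z > 0,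
a + b + c = x + y + z, and with T = 4S Heron's formula reads T² = (x + y + z)xyz while the
conditions on the excircles read T = 2ux = 2vy = 2wz. Substituting x = T/(2u), ... into Heron's
formula gives T²(uv + vw + wu) = (4uvw)², so T = 4uvw/s with s = √(uv + vw + wu), and then
x = 2vw/s, y = 2uw/s, z = 2uv/s, i.e. a = (y + z)/2 = (uv + uw)/s and so on. Conversely these
values of x, y, z make T = 4uvw/s, which gives back the three radii.
-/

lemma two_mul_div_four_div_eq_iff {T x u : ℝ} (hx : 0 < x) :
    2 * (T / 4) / x = u ↔ T = 2 * u * x := by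
  rw [div_eq_iff hx.ne']
  constructor <;> intro h <;> linarith

lemma sq_mul_eq_sq_of_heron_eq {u v w x y z T : ℝ} (hu : 0 < u) (hv : 0 < v) (hw : 0 < w)
    (hT : 0 < T) (hTsq : T ^ 2 = (x + y + z) * x * y * z)
    (hx : T = 2 * u * x) (hy : T = 2 * v * y) (hz : T = 2 * w * z) :
    T ^ 2 * (u * v + v * w + w * u) = (4 * u * v * w) ^ 2 := by
  obtain rfl : x = T / (2 * u) := by field_simp; linarith
  obtain rfl : y = T / (2 * v) := by field_simp; linarith
  obtain rfl : z = T / (2 * w) := by field_simp; linarith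
  field_simp at hTsq
  linear_combination -hTsq

lemma exradii_eq_iff {u v w x y z : ℝ} (hu : 0 < u) (hv : 0 < v) (hw : 0 < w)
    (hx : 0 < x) (hy : 0 < y) (hz : 0 < z) :
    (2 * (√((x + y + z) * x * y * z) / 4) / x = u ∧
      2 * (√((x + y + z) * x * y * z) / 4) / y = v ∧
      2 * (√((x + y + z) * x * y * z) / 4) / z = w) ↔
    (x * √(u * v + v * w + w * u) = 2 * v * w ∧ y * √(u * v + v * w + w * u) = 2 * u * w ∧
      z * √(u * v + v * w + w * u) = 2 * u * v) := by
  set s := √(u * v + v * w + w * u)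
  have hs : 0 < s := Real.sqrt_pos.mpr (by positivity)
  have hs2 : s ^ 2 = u * v + v * w + w * u := Real.sq_sqrt (by positivity)
  set T := √((x + y + z) * x * y * z)
  have hT : 0 < T := Real.sqrt_pos.mpr (by positivity)
  have hT2 : T ^ 2 = (x + y + z) * x * y * z := Real.sq_sqrt (by positivity)
  simp only [two_mul_div_four_div_eq_iff hx, two_mul_div_four_div_eq_iff hy,
    two_mul_div_four_div_eq_iff hz]
  constructor
  · rintro ⟨h1, h2, h3⟩
    have hTs : T * s = 4 * u * v * w := by
      refine (pow_left_inj₀ (by positivity) (by positivity) two_ne_zero).mp ?_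
      rw [mul_pow, hs2]
      exact sq_mul_eq_sq_of_heron_eq hu hv hw hT hT2 h1 h2 h3
    refine ⟨?_, ?_, ?_⟩
    · exact mul_left_cancel₀ (by positivity : 2 * u ≠ 0) (by linear_combination -s * h1 + hTs)
    · exact mul_left_cancel₀ (by positivity : 2 * v ≠ 0) (by linear_combination -s * h2 + hTs)
    · exact mul_left_cancel₀ (by positivity : 2 * w ≠ 0) (by linear_combination -s * h3 + hTs)
  · rintro ⟨h1, h2, h3⟩
    have hTs : T * s = 4 * u * v * w := by
      refine (pow_left_inj₀ (by positivity) (by positivity) two_ne_zero).mp ?_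
      rw [mul_pow, hT2]
      obtain rfl : x = 2 * v * w / s := by field_simp; linarith
      obtain rfl : y = 2 * u * w / s := by field_simp; linarith
      obtain rfl : z = 2 * u * v / s := by field_simp; linarith
      field_simp
      linear_combination -16 * hs2
    refine ⟨?_, ?_, ?_⟩
    · exact mul_left_cancel₀ hs.ne' (by linear_combination hTs - 2 * u * h1)
    · exact mul_left_cancel₀ hs.ne' (by linear_combination hTs - 2 * v * h2)
    · exact mul_left_cancel₀ hs.ne' (by linear_combination hTs - 2 * w * h3)

lemma exradii_eq_iff_of_triangle {u v w a b c : ℝ} (hu : 0 < u) (hv : 0 < v) (hw : 0 < w)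
    (hab : a < b + c) (hbc : b < a + c) (hca : c < a + b) :
    (2 * (√((a + b + c) * (b + c - a) * (a + c - b) * (a + b - c)) / 4) / (b + c - a) = u ∧
      2 * (√((a + b + c) * (b + c - a) * (a + c - b) * (a + b - c)) / 4) / (a + c - b) = v ∧
      2 * (√((a + b + c) * (b + c - a) * (a + c - b) * (a + b - c)) / 4) / (a + b - c) = w) ↔
    ((b + c - a) * √(u * v + v * w + w * u) = 2 * v * w ∧
      (a + c - b) * √(u * v + v * w + w * u) = 2 * u * w ∧
      (a + b - c) * √(u * v + v * w + w * u) = 2 * u * v) := by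
  rw [show a + b + c = (b + c - a) + (a + c - b) + (a + b - c) by ring]
  exact exradii_eq_iff hu hv hw (by linarith) (by linarith) (by linarith)

theorem excircle_radii_unique_triangle (u v w : ℝ) (hu : 0 < u) (hv : 0 < v) (hw : 0 < w) :
    let s := Real.sqrt (u * v + v * w + w * u)
    let P : ℝ → ℝ → ℝ → Prop := fun a b c =>
      0 < a ∧ 0 < b ∧ 0 < c ∧ a < b + c ∧ b < a + c ∧ c < a + b ∧
      2 * (Real.sqrt ((a + b + c) * (b + c - a) * (a + c - b) * (a + b - c)) / 4) / (b + c - a) = u ∧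
      2 * (Real.sqrt ((a + b + c) * (b + c - a) * (a + c - b) * (a + b - c)) / 4) / (a + c - b) = v ∧
      2 * (Real.sqrt ((a + b + c) * (b + c - a) * (a + c - b) * (a + b - c)) / 4) / (a + b - c) = w
    P ((u * v + u * w) / s) ((u * v + v * w) / s) ((u * w + v * w) / s) ∧
    ∀ a b c : ℝ, P a b c →
      a = (u * v + u * w) / s ∧ b = (u * v + v * w) / s ∧ c = (u * w + v * w) / s := by
  intro s P
  have hs : 0 < s := Real.sqrt_pos.mpr (by positivity)
  constructor
  · set a := (u * v + u * w) / s with ha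
    set b := (u * v + v * w) / s with hb
    set c := (u * w + v * w) / s with hc
    have hx : (b + c - a) * s = 2 * v * w := by rw [ha, hb, hc]; field_simp; ring
    have hy : (a + c - b) * s = 2 * u * w := by rw [ha, hb, hc]; field_simp; ring
    have hz : (a + b - c) * s = 2 * u * v := by rw [ha, hb, hc]; field_simp; ring
    have hx0 : 0 < b + c - a := pos_of_mul_pos_left (hx ▸ by positivity) hs.le
    have hy0 : 0 < a + c - b := pos_of_mul_pos_left (hy ▸ by positivity) hs.le
    have hz0 : 0 < a + b - c := pos_of_mul_pos_left (hz ▸ by positivity) hs.le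
    exact ⟨by positivity, by positivity, by positivity, by linarith, by linarith, by linarith,
      (exradii_eq_iff_of_triangle hu hv hw (by linarith) (by linarith) (by linarith)).mpr
        ⟨hx, hy, hz⟩⟩
  · rintro a b c ⟨-, -, -, hab, hbc, hca, hr⟩
    obtain ⟨hx, hy, hz⟩ := (exradii_eq_iff_of_triangle hu hv hw hab hbc hca).mp hr
    refine ⟨?_, ?_, ?_⟩ <;> rw [eq_div_iff hs.ne'] <;> linarith
end

section
/- The 2-dimensional Lebesgue measure of the set of pairs (s,t) in the unit square [0,1]² for which the three lengths p = min(s,t), q = |s-t| and r = 1-max(s,t) satisfy pq + qr + rp > max(p², q², r²) equals (24√7/49)·arcsin(√14/8) − 2/7. (This is the probability that the three pieces of a broken stick are the excircle radii of an acute triangle.) -/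
/-!
Write `p, q, r` for the three pieces. The shear `(s, t) ↦ (s, t - s)` maps the half `s < t` of the
square onto the open simplex of pairs `(p, q)` with `r = 1 - p - q`, and the swap `s ↔ t` covers
the other half; the diagonal does not meet the set because a piece of length zero is never an
exradius. The condition is symmetric in `p, q, r`, so the simplex is, up to the null set of ties,
three measure-preserving copies of the sector where `p` is the strictly longest piece. There the
condition reduces to `p² < pq + qr + rp`, i.e. `(2q - (1 - p))² < 1 + 2p - 7p²`: for `p ≤ 1/2` it
always holds and the slice is `1 - 2p < q < p`, of total area `1/24`; for `p > 1/2` the slice has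
length `√(1 + 2p - 7p²)` up to `p = (1 + 2√2)/7`, whose integral is a circular segment of area
`4√7/49 · arcsin(√14/8) - 5/56`. The probability is six times the area of the sector.
-/

open MeasureTheory Real Set

def IsAcuteExradii (a b c : ℝ) : Prop :=
  max (a ^ 2) (max (b ^ 2) (c ^ 2)) < a * b + b * c + c * a

section IsAcuteExradii

variable {a b c : ℝ}

theorem isAcuteExradii_iff :
    IsAcuteExradii a b c ↔
      a ^ 2 < a * b + b * c + c * a ∧ b ^ 2 < a * b + b * c + c * a ∧
        c ^ 2 < a * b + b * c + c * a := by
  simp only [IsAcuteExradii, max_lt_iff]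

theorem isAcuteExradii_swap₁₂ : IsAcuteExradii b a c ↔ IsAcuteExradii a b c := by
  simp only [isAcuteExradii_iff]
  constructor <;> rintro ⟨h₁, h₂, h₃⟩ <;> exact ⟨by linarith, by linarith, by linarith⟩

theorem isAcuteExradii_swap₁₃ : IsAcuteExradii c b a ↔ IsAcuteExradii a b c := by
  simp only [isAcuteExradii_iff]
  constructor <;> rintro ⟨h₁, h₂, h₃⟩ <;> exact ⟨by linarith, by linarith, by linarith⟩

theorem IsAcuteExradii.pos (h : IsAcuteExradii a b c) (ha : 0 ≤ a) (hb : 0 ≤ b) (hc : 0 ≤ c) :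
    0 < a ∧ 0 < b ∧ 0 < c := by
  obtain ⟨h₁, h₂, h₃⟩ := isAcuteExradii_iff.1 h
  refine ⟨?_, ?_, ?_⟩ <;> by_contra! h₀
  · nlinarith [sq_nonneg (b - c), le_antisymm h₀ ha]
  · nlinarith [sq_nonneg (a - c), le_antisymm h₀ hb]
  · nlinarith [sq_nonneg (a - b), le_antisymm h₀ hc]

theorem isAcuteExradii_iff_of_lt (hba : b < a) (hca : c < a) (hb : 0 < b) (hc : 0 < c) :
    IsAcuteExradii a b c ↔ a ^ 2 < a * b + b * c + c * a := by
  rw [isAcuteExradii_iff]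
  exact ⟨fun h => h.1, fun h => ⟨h, by nlinarith, by nlinarith⟩⟩

end IsAcuteExradii

theorem measure_graph_eq_zero {α : Type*} [MeasurableSpace α] (μ : Measure α) {f : α → ℝ}
    (hf : Measurable f) : μ.prod volume {x : α × ℝ | x.2 = f x.1} = 0 := by
  rw [Measure.measure_prod_null (measurableSet_graph hf)]
  refine Filter.Eventually.of_forall fun x => ?_
  simp [preimage]

theorem integral_sqrt_one_sub_sq_of_le {a b : ℝ} (ha : -1 ≤ a) (hab : a ≤ b) (hb : b ≤ 1) :
    ∫ x in a..b, √(1 - x ^ 2) =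
      (arcsin b + b * √(1 - b ^ 2)) / 2 - (arcsin a + a * √(1 - a ^ 2)) / 2 := by
  refine intervalIntegral.integral_eq_sub_of_hasDerivAt_of_le
    (f := fun x => (arcsin x + x * √(1 - x ^ 2)) / 2) hab (by fun_prop) (fun x hx => ?_)
    ((by fun_prop : Continuous fun x : ℝ => √(1 - x ^ 2)).intervalIntegrable _ _)
  obtain ⟨hax, hxb⟩ := hx
  have hpos : 0 < 1 - x ^ 2 := by nlinarith
  have hderiv := ((hasDerivAt_arcsin (by linarith) (by linarith)).fun_add
    ((hasDerivAt_id' x).fun_mul (((hasDerivAt_pow 2 x).const_sub 1).sqrt hpos.ne'))).div_const 2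
  refine hderiv.congr_deriv ?_
  field_simp
  rw [sq_sqrt hpos.le]
  ring

theorem one_half_lt_one_add_two_mul_sqrt_two_div_seven : (1 / 2 : ℝ) < (1 + 2 * √2) / 7 := by
  nlinarith [sq_sqrt (show (0 : ℝ) ≤ 2 by norm_num), sqrt_nonneg 2]

theorem integral_sqrt_one_add_two_mul_sub_seven_mul_sq :
    ∫ p in (1 / 2 : ℝ)..(1 + 2 * √2) / 7, √(1 + 2 * p - 7 * p ^ 2) =
      4 * √7 / 49 * arcsin (√14 / 8) - 5 / 56 := by
  have h2 : √2 ^ 2 = 2 := sq_sqrt (by norm_num)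
  have h7 : √7 ^ 2 = 7 := sq_sqrt (by norm_num)
  have h14 : √14 = √2 * √7 := by rw [← sqrt_mul (by norm_num)]; norm_num
  set c : ℝ := 7 * √2 / 4 with hc
  set d : ℝ := -(√2 / 4)
  have hsub : ∀ p : ℝ, √(1 + 2 * p - 7 * p ^ 2) = √(8 / 7) * √(1 - (c * p + d) ^ 2) := by
    intro p
    rw [← sqrt_mul (by norm_num)]
    congr 1
    linear_combination ((7 * p - 1) ^ 2 / 14) * h2
  have hlow : c * (1 / 2) + d = 5 * √2 / 8 := by ring
  have hup : c * ((1 + 2 * √2) / 7) + d = 1 := by linear_combination h2 / 2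
  have h87 : √(8 / 7) = 2 * √2 / √7 := by
    rw [sqrt_div (by norm_num), show (8 : ℝ) = 2 ^ 2 * 2 by norm_num,
      sqrt_mul (by norm_num), sqrt_sq (by norm_num)]
  have hcos : √(1 - (5 * √2 / 8) ^ 2) = √14 / 8 := by
    rw [show (1 : ℝ) - (5 * √2 / 8) ^ 2 = (√14 / 8) ^ 2 by
      rw [h14]; linear_combination (-1 / 2) * h2 - (√2 ^ 2 / 64) * h7]
    exact sqrt_sq (by positivity)
  have harcsin : arcsin (5 * √2 / 8) = π / 2 - arcsin (√14 / 8) := by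
    rw [← hcos, ← arccos_eq_arcsin (by positivity), arccos_eq_pi_div_two_sub_arcsin]
    ring
  simp_rw [hsub]
  rw [intervalIntegral.integral_const_mul,
    intervalIntegral.integral_comp_mul_add (fun x => √(1 - x ^ 2)) (by positivity), hlow, hup,
    integral_sqrt_one_sub_sq_of_le (by nlinarith) (by nlinarith) le_rfl, arcsin_one, hcos, harcsin,
    h87, smul_eq_mul, hc]
  generalize arcsin (√14 / 8) = A
  rw [h14]
  field_simp
  ring_nf
  simp only [h2, h7]
  ring

namespace BrokenStick

def acuteSquare : Set (ℝ × ℝ) :=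
  {x | x.1 ∈ Icc 0 1 ∧ x.2 ∈ Icc 0 1 ∧ IsAcuteExradii (min x.1 x.2) |x.1 - x.2| (1 - max x.1 x.2)}

/-- A point `(p, q)` stands for the three pieces `p`, `q`, `1 - p - q`. -/
def acuteRegion : Set (ℝ × ℝ) :=
  {x | 0 < x.1 ∧ 0 < x.2 ∧ 0 < 1 - x.1 - x.2 ∧ IsAcuteExradii x.1 x.2 (1 - x.1 - x.2)}

def acuteSector : Set (ℝ × ℝ) :=
  {x | x ∈ acuteRegion ∧ x.2 < x.1 ∧ 1 - x.1 - x.2 < x.1}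

def shear (x : ℝ × ℝ) : ℝ × ℝ := (x.1, x.2 - x.1)

def swapFirstLast (x : ℝ × ℝ) : ℝ × ℝ := (1 - x.1 - x.2, x.2)

theorem measurePreserving_swap : MeasurePreserving (Prod.swap : ℝ × ℝ → ℝ × ℝ) volume volume :=
  Measure.measurePreserving_swap

theorem measurePreserving_shear : MeasurePreserving shear volume volume :=
  measurePreserving_prod_sub volume volume

theorem measurePreserving_swapFirstLast : MeasurePreserving swapFirstLast volume volume := by
  have h : swapFirstLast = Prod.map (fun t => 1 - t) id ∘ fun x : ℝ × ℝ => (x.1 + x.2, x.2) := by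
    ext x <;> simp [swapFirstLast, sub_sub]
  rw [h]
  exact ((Measure.measurePreserving_sub_left volume 1).prod (MeasurePreserving.id volume)).comp
    (measurePreserving_add_prod volume volume)

theorem measurableSet_acuteRegion : MeasurableSet acuteRegion := by
  unfold acuteRegion IsAcuteExradii
  measurability

theorem measurableSet_acuteSector : MeasurableSet acuteSector := by
  unfold acuteSector acuteRegion IsAcuteExradii
  measurability

theorem swap_preimage_acuteSquare : Prod.swap ⁻¹' acuteSquare = acuteSquare := by
  ext x
  simp only [acuteSquare, mem_preimage, mem_ofPred_eq, Prod.fst_swap, Prod.snd_swap, min_comm x.2,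
    max_comm x.2, abs_sub_comm x.2]
  tauto

theorem shear_preimage_acuteRegion : shear ⁻¹' acuteRegion = acuteSquare ∩ {x | x.1 < x.2} := by
  ext ⟨s, t⟩
  simp only [shear, acuteRegion, acuteSquare, mem_preimage, mem_inter_iff, mem_ofPred_eq, mem_Icc,
    sub_pos, show 1 - s - (t - s) = 1 - t by ring]
  constructor
  · rintro ⟨hs, hst, ht, h⟩
    rw [min_eq_left hst.le, max_eq_right hst.le, abs_sub_comm, abs_of_pos (sub_pos.2 hst)]
    exact ⟨⟨⟨hs.le, by linarith⟩, ⟨by linarith, by linarith⟩, h⟩, hst⟩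
  · rintro ⟨⟨⟨hs₀, -⟩, ⟨-, ht₁⟩, h⟩, hst⟩
    rw [min_eq_left hst.le, max_eq_right hst.le, abs_sub_comm, abs_of_pos (sub_pos.2 hst)] at h
    obtain ⟨hs, -, ht⟩ := h.pos hs₀ (sub_pos.2 hst).le (by linarith)
    exact ⟨hs, hst, by linarith, h⟩

theorem volume_acuteSquare : volume acuteSquare = 2 * volume acuteRegion := by
  have hA : MeasurableSet (shear ⁻¹' acuteRegion) :=
    measurePreserving_shear.measurable measurableSet_acuteRegion
  have hsplit : acuteSquare = shear ⁻¹' acuteRegion ∪ Prod.swap ⁻¹' (shear ⁻¹' acuteRegion) := by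
    rw [shear_preimage_acuteRegion, preimage_inter, swap_preimage_acuteSquare,
      ← inter_union_distrib_left]
    refine (inter_eq_left.2 fun x hx => ?_).symm
    have hne : x.1 ≠ x.2 := fun h => by
      obtain ⟨-, ⟨hx₂, hx₂'⟩, hacute⟩ := hx
      rw [h, sub_self, abs_zero] at hacute
      exact (hacute.pos (le_min hx₂ hx₂) le_rfl (by simp [hx₂'])).2.1.false
    exact hne.lt_or_gt
  have hdisj : Disjoint (shear ⁻¹' acuteRegion) (Prod.swap ⁻¹' (shear ⁻¹' acuteRegion)) := by
    rw [shear_preimage_acuteRegion]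
    exact disjoint_left.2 fun x hx hx' => lt_asymm hx.2 (show x.2 < x.1 from hx'.2)
  rw [hsplit, measure_union hdisj (measurePreserving_swap.measurable hA),
    measurePreserving_swap.measure_preimage hA.nullMeasurableSet,
    measurePreserving_shear.measure_preimage measurableSet_acuteRegion.nullMeasurableSet, two_mul]

theorem swap_preimage_acuteRegion : Prod.swap ⁻¹' acuteRegion = acuteRegion := by
  ext x
  simp only [acuteRegion, mem_preimage, mem_ofPred_eq, Prod.fst_swap, Prod.snd_swap,
    show 1 - x.2 - x.1 = 1 - x.1 - x.2 by ring, isAcuteExradii_swap₁₂]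
  tauto

theorem swapFirstLast_preimage_acuteRegion : swapFirstLast ⁻¹' acuteRegion = acuteRegion := by
  ext x
  simp only [swapFirstLast, acuteRegion, mem_preimage, mem_ofPred_eq,
    show 1 - (1 - x.1 - x.2) - x.2 = x.1 by ring, isAcuteExradii_swap₁₃]
  tauto

theorem swap_preimage_acuteSector :
    Prod.swap ⁻¹' acuteSector = {x | x ∈ acuteRegion ∧ x.1 < x.2 ∧ 1 - x.1 - x.2 < x.2} := by
  ext x
  refine and_congr (Set.ext_iff.1 swap_preimage_acuteRegion x) ?_
  simp only [Prod.fst_swap, Prod.snd_swap, show 1 - x.2 - x.1 = 1 - x.1 - x.2 by ring]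

theorem swapFirstLast_preimage_acuteSector :
    swapFirstLast ⁻¹' acuteSector =
      {x | x ∈ acuteRegion ∧ x.2 < 1 - x.1 - x.2 ∧ x.1 < 1 - x.1 - x.2} := by
  ext x
  refine and_congr (Set.ext_iff.1 swapFirstLast_preimage_acuteRegion x) ?_
  simp only [swapFirstLast, show 1 - (1 - x.1 - x.2) - x.2 = x.1 by ring]

theorem volume_acuteSector_union_swaps :
    volume (acuteSector ∪ Prod.swap ⁻¹' acuteSector ∪ swapFirstLast ⁻¹' acuteSector) =
      volume acuteRegion := by
  set ties : Set (ℝ × ℝ) :=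
    {x | x.2 = x.1} ∪ {x | x.2 = 1 - 2 * x.1} ∪ {x | x.2 = (1 - x.1) / 2}
  have hties : volume ties = 0 := measure_union_null (measure_union_null
    (measure_graph_eq_zero volume measurable_id)
    (measure_graph_eq_zero volume (f := fun p => 1 - 2 * p) (by fun_prop)))
    (measure_graph_eq_zero volume (f := fun p => (1 - p) / 2) (by fun_prop))
  rw [swap_preimage_acuteSector, swapFirstLast_preimage_acuteSector]
  set U := acuteSector ∪ {x | x ∈ acuteRegion ∧ x.1 < x.2 ∧ 1 - x.1 - x.2 < x.2} ∪
    {x | x ∈ acuteRegion ∧ x.2 < 1 - x.1 - x.2 ∧ x.1 < 1 - x.1 - x.2}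
  have hU_sub : U ⊆ acuteRegion := by
    rintro x ((hx | hx) | hx) <;> exact hx.1
  have hsub_U : acuteRegion ⊆ U ∪ ties := by
    intro x hx
    simp only [U, acuteSector, ties, mem_union, mem_ofPred_eq]
    grind
  exact le_antisymm (measure_mono hU_sub) <| (measure_mono hsub_U).trans <|
    (measure_union_le U ties).trans (by rw [hties, add_zero])

theorem volume_acuteRegion : volume acuteRegion = 3 * volume acuteSector := by
  have hdisj₁ : Disjoint acuteSector (Prod.swap ⁻¹' acuteSector) := by
    rw [swap_preimage_acuteSector]
    exact disjoint_left.2 fun x hx hx' => lt_asymm hx.2.1 hx'.2.1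
  have hdisj₂ :
      Disjoint (acuteSector ∪ Prod.swap ⁻¹' acuteSector) (swapFirstLast ⁻¹' acuteSector) := by
    rw [swap_preimage_acuteSector, swapFirstLast_preimage_acuteSector]
    refine disjoint_left.2 ?_
    rintro x (hx | hx) hx'
    · exact lt_asymm hx.2.2 hx'.2.2
    · exact lt_asymm hx.2.2 hx'.2.1
  rw [← volume_acuteSector_union_swaps,
    measure_union hdisj₂ (measurePreserving_swapFirstLast.measurable measurableSet_acuteSector),
    measure_union hdisj₁ (measurePreserving_swap.measurable measurableSet_acuteSector),
    measurePreserving_swap.measure_preimage measurableSet_acuteSector.nullMeasurableSet,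
    measurePreserving_swapFirstLast.measure_preimage measurableSet_acuteSector.nullMeasurableSet]
  ring

theorem sq_lt_pairwise_sum_iff (p q : ℝ) :
    p ^ 2 < p * q + q * (1 - p - q) + (1 - p - q) * p ↔
      (2 * q - (1 - p)) ^ 2 < 1 + 2 * p - 7 * p ^ 2 := by
  constructor <;> intro h <;> linarith

/-- The roots in `q` of `p² = pq + qr + rp` with `r = 1 - p - q`. -/
noncomputable def lowerRoot (p : ℝ) : ℝ := (1 - p - √(1 + 2 * p - 7 * p ^ 2)) / 2

noncomputable def upperRoot (p : ℝ) : ℝ := (1 - p + √(1 + 2 * p - 7 * p ^ 2)) / 2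

theorem acuteSector_inter_fst_le_half :
    acuteSector ∩ {x | x.1 ≤ 1 / 2} =
      regionBetween (fun p => 1 - 2 * p) id (Ioc (1 / 3) (1 / 2)) := by
  ext ⟨p, q⟩
  simp only [acuteSector, acuteRegion, regionBetween, mem_inter_iff, mem_ofPred_eq, mem_Ioc,
    mem_Ioo, id]
  constructor
  · rintro ⟨⟨-, hqp, hrp⟩, hp⟩
    exact ⟨⟨by linarith, hp⟩, by linarith, hqp⟩
  · rintro ⟨⟨hp₁, hp₂⟩, hq, hqp⟩
    refine ⟨⟨⟨by linarith, by linarith, by linarith, ?_⟩, hqp, by linarith⟩, hp₂⟩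
    rw [isAcuteExradii_iff_of_lt hqp (by linarith) (by linarith) (by linarith)]
    nlinarith [mul_pos (show 0 < q by linarith) (show 0 < 1 - p - q by linarith)]

theorem acuteSector_inter_half_lt_fst :
    acuteSector ∩ {x | 1 / 2 < x.1} =
      regionBetween lowerRoot upperRoot (Ioo (1 / 2) ((1 + 2 * √2) / 7)) := by
  ext ⟨p, q⟩
  simp only [acuteSector, acuteRegion, regionBetween, lowerRoot, upperRoot, mem_inter_iff,
    mem_ofPred_eq, mem_Ioo]
  constructor
  · rintro ⟨⟨⟨-, hq, hr, h⟩, hqp, hrp⟩, hp⟩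
    rw [isAcuteExradii_iff_of_lt hqp hrp hq hr, sq_lt_pairwise_sum_iff, sq_lt] at h
    have hD : 0 < 1 + 2 * p - 7 * p ^ 2 := sqrt_pos.1 (by linarith)
    have hp_lt : p < (1 + 2 * √2) / 7 := by
      nlinarith [sq_sqrt (show (0 : ℝ) ≤ 2 by norm_num), sqrt_nonneg 2]
    exact ⟨⟨hp, hp_lt⟩, by linarith, by linarith⟩
  · rintro ⟨⟨hp, -⟩, hlow, hup⟩
    have hD : 0 < 1 + 2 * p - 7 * p ^ 2 := sqrt_pos.1 (by linarith)
    have hp₁ : p < 1 := by nlinarith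
    have hlt₁ : √(1 + 2 * p - 7 * p ^ 2) < 1 - p := (sqrt_lt' (by linarith)).2 (by nlinarith)
    have hlt₂ : √(1 + 2 * p - 7 * p ^ 2) < 3 * p - 1 := (sqrt_lt' (by linarith)).2 (by nlinarith)
    have hq : 0 < q := by linarith
    have hr : 0 < 1 - p - q := by linarith
    have hqp : q < p := by linarith
    have hrp : 1 - p - q < p := by linarith
    refine ⟨⟨⟨by linarith, hq, hr, ?_⟩, hqp, hrp⟩, hp⟩
    rw [isAcuteExradii_iff_of_lt hqp hrp hq hr, sq_lt_pairwise_sum_iff, sq_lt]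
    constructor <;> linarith

theorem volume_regionBetween_one_sub_two_mul_id :
    volume (regionBetween (fun p => 1 - 2 * p) id (Ioc (1 / 3) (1 / 2))) =
      ENNReal.ofReal (1 / 24) := by
  have hcont : Continuous fun p : ℝ => 1 - 2 * p := by fun_prop
  rw [Measure.volume_eq_prod, volume_regionBetween_eq_integral hcont.integrableOn_Ioc
    continuous_id.integrableOn_Ioc measurableSet_Ioc fun p hp => by simp only [id]; linarith [hp.1],
    ← intervalIntegral.integral_of_le (by norm_num),
    intervalIntegral.integral_eq_sub_of_hasDerivAt (f := fun p => 3 / 2 * p ^ 2 - p)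
      (fun p _ => (((hasDerivAt_pow 2 p).const_mul _).sub (hasDerivAt_id p)).congr_deriv
        (by simp; ring))
      ((continuous_id.sub hcont).intervalIntegrable _ _)]
  norm_num

theorem volume_regionBetween_lowerRoot_upperRoot :
    volume (regionBetween lowerRoot upperRoot (Ioo (1 / 2) ((1 + 2 * √2) / 7))) =
      ENNReal.ofReal (∫ p in (1 / 2)..(1 + 2 * √2) / 7, √(1 + 2 * p - 7 * p ^ 2)) := by
  have hlower : Continuous lowerRoot := by unfold lowerRoot; fun_prop
  have hupper : Continuous upperRoot := by unfold upperRoot; fun_prop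
  rw [Measure.volume_eq_prod, volume_regionBetween_eq_integral
    (hlower.integrableOn_Icc.mono_set Ioo_subset_Icc_self)
    (hupper.integrableOn_Icc.mono_set Ioo_subset_Icc_self) measurableSet_Ioo
    fun p _ => by unfold lowerRoot upperRoot; linarith [sqrt_nonneg (1 + 2 * p - 7 * p ^ 2)],
    ← integral_Ioc_eq_integral_Ioo,
    ← intervalIntegral.integral_of_le one_half_lt_one_add_two_mul_sqrt_two_div_seven.le]
  congr 1
  refine intervalIntegral.integral_congr fun p _ => ?_
  simp only [Pi.sub_apply, lowerRoot, upperRoot]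
  ring

theorem volume_acuteSector :
    volume acuteSector = ENNReal.ofReal (1 / 24 + (4 * √7 / 49 * arcsin (√14 / 8) - 5 / 56)) := by
  have hsplit :
      acuteSector = acuteSector ∩ {x | x.1 ≤ 1 / 2} ∪ acuteSector ∩ {x | 1 / 2 < x.1} := by
    rw [← inter_union_distrib_left]
    exact (inter_eq_left.2 fun x _ => le_or_gt x.1 (1 / 2)).symm
  have hdisj : Disjoint (acuteSector ∩ {x | x.1 ≤ 1 / 2}) (acuteSector ∩ {x | 1 / 2 < x.1}) :=
    disjoint_left.2 fun x hx hx' => not_lt.2 hx.2 (show 1 / 2 < x.1 from hx'.2)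
  have hI : 0 ≤ ∫ p in (1 / 2)..(1 + 2 * √2) / 7, √(1 + 2 * p - 7 * p ^ 2) :=
    intervalIntegral.integral_nonneg one_half_lt_one_add_two_mul_sqrt_two_div_seven.le
      fun p _ => sqrt_nonneg _
  rw [hsplit, measure_union hdisj
      (measurableSet_acuteSector.inter (measurableSet_lt measurable_const measurable_fst)),
    acuteSector_inter_fst_le_half, acuteSector_inter_half_lt_fst,
    volume_regionBetween_one_sub_two_mul_id, volume_regionBetween_lowerRoot_upperRoot,
    ← ENNReal.ofReal_add (by norm_num) hI, integral_sqrt_one_add_two_mul_sub_seven_mul_sq]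

end BrokenStick

theorem broken_stick_excircle_acute_prob :
    volume {p : ℝ × ℝ | p.1 ∈ Set.Icc (0:ℝ) 1 ∧ p.2 ∈ Set.Icc (0:ℝ) 1 ∧
      min p.1 p.2 * |p.1 - p.2| + |p.1 - p.2| * (1 - max p.1 p.2) +
        (1 - max p.1 p.2) * min p.1 p.2 >
      max (min p.1 p.2 ^ 2) (max (|p.1 - p.2| ^ 2) ((1 - max p.1 p.2) ^ 2))} =
    ENNReal.ofReal (24 * Real.sqrt 7 / 49 * Real.arcsin (Real.sqrt 14 / 8) - 2 / 7) := by
  change volume BrokenStick.acuteSquare = _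
  rw [BrokenStick.volume_acuteSquare, BrokenStick.volume_acuteRegion,
    BrokenStick.volume_acuteSector, ← ENNReal.ofReal_ofNat 3, ← ENNReal.ofReal_mul (by norm_num),
    ← ENNReal.ofReal_ofNat 2, ← ENNReal.ofReal_mul (by norm_num)]
  congr 1
  ring
end

section
/- Let 0 < u < v < w be real numbers. Then there exist three non-collinear points A, B, C in the Euclidean plane ℝ² such that, with D the orthogonal projection of A onto the line through B and C, M the midpoint of B and C, and N the point strictly between B and C satisfying dist(B,N)·dist(A,C) = dist(N,C)·dist(A,B) (the foot of the internal angle bisector from A), one has dist(A,D) = u, dist(A,N) = v and dist(A,M) = w. Moreover, any such triangle is acute if and only if 2u² > v² and u·√(v⁴ − 3u²(v² − u²))/(2u² − v²) < w < u·v²/(2u² − v²). -/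
/-!
Put the foot `D` of the altitude at the origin of line `BC` and let `b < n < c` be the signed
positions of `B`, `N`, `C` and `m = (b + c) / 2` that of `M`, so that `v² = u² + n²` and
`w² = u² + m²`. The bisector condition `BN · AC = NC · AB` becomes `u² (n - m) = n (bc - nm)`,
and the triangle is acute iff `b < 0 < c` and `u² + bc > 0`. For `n > 0` these two conditions
read `u² n < m (u² - n²) < 2 n u²`, and since `u² - n² = 2u² - v²`, the three quantities
`u² n`, `m (2u² - v²)`, `2 n u²` are legs of right triangles with the common leg `u (2u² - v²)`
and hypotenuses `u √(v⁴ - 3u²(v² - u²))`, `w (2u² - v²)`, `u v²`. To construct the triangle,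
note that given `n` and `m` the bisector condition fixes `bc`, hence `b, c = m ∓ t` with
`n t² = (m - n)(mn + u²)`.
-/

section BisectorCoordinates

variable {u v w b c n : ℝ}

lemma bisector_ratio_iff {X Y : ℝ} (hbn : b < n) (hnc : n < c) (hX : 0 ≤ X) (hY : 0 ≤ Y)
    (hX2 : X ^ 2 = u ^ 2 + c ^ 2) (hY2 : Y ^ 2 = u ^ 2 + b ^ 2) :
    (n - b) * X = (c - n) * Y ↔ u ^ 2 * (2 * n - (b + c)) = n * (2 * b * c - n * (b + c)) := by
  have hfactor : ((n - b) * X) ^ 2 - ((c - n) * Y) ^ 2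
      = (c - b) * (u ^ 2 * (2 * n - (b + c)) - n * (2 * b * c - n * (b + c))) := by
    rw [mul_pow, mul_pow, hX2, hY2]; ring
  rw [← sq_eq_sq₀ (by nlinarith) (by nlinarith), ← sub_eq_zero, hfactor,
    mul_eq_zero_iff_left (sub_pos.2 (hbn.trans hnc)).ne', sub_eq_zero]

lemma acute_iff_of_coords (hbc : b < c) :
    ((c - b) ^ 2 < (u ^ 2 + c ^ 2) + (u ^ 2 + b ^ 2) ∧
      u ^ 2 + c ^ 2 < (c - b) ^ 2 + (u ^ 2 + b ^ 2) ∧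
      u ^ 2 + b ^ 2 < (c - b) ^ 2 + (u ^ 2 + c ^ 2)) ↔
    (0 < u ^ 2 + b * c ∧ b < 0 ∧ 0 < c) := by
  refine and_congr ?_ (and_congr ?_ ?_) <;> constructor <;> intro h <;> nlinarith

lemma lt_iff_lt_of_sq_eq_sq_add {x y X Y a : ℝ} (hx : 0 ≤ x) (hy : 0 ≤ y) (hX : 0 ≤ X)
    (hY : 0 ≤ Y) (hxX : X ^ 2 = x ^ 2 + a) (hyY : Y ^ 2 = y ^ 2 + a) : x < y ↔ X < Y := by
  rw [← sq_lt_sq₀ hx hy, ← sq_lt_sq₀ hX hY, hxX, hyY, add_lt_add_iff_right]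

lemma coords_lt_and_lt_iff_bounds {m : ℝ} (hu : 0 < u) (hn : 0 < n) (hm : 0 < m) (hw : 0 ≤ w)
    (hv2 : v ^ 2 = u ^ 2 + n ^ 2) (hw2 : w ^ 2 = u ^ 2 + m ^ 2) :
    (u ^ 2 * n < m * (u ^ 2 - n ^ 2) ∧ m * (u ^ 2 - n ^ 2) < 2 * n * u ^ 2) ↔
      (2 * u ^ 2 > v ^ 2 ∧
        u * √(v ^ 4 - 3 * u ^ 2 * (v ^ 2 - u ^ 2)) / (2 * u ^ 2 - v ^ 2) < w ∧
        w < u * v ^ 2 / (2 * u ^ 2 - v ^ 2)) := by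
  have hk : u ^ 2 - n ^ 2 = 2 * u ^ 2 - v ^ 2 := by rw [hv2]; ring
  rw [hk]
  have hdisc : 0 ≤ v ^ 4 - 3 * u ^ 2 * (v ^ 2 - u ^ 2) := by
    nlinarith [sq_nonneg (v ^ 2 - 3 / 2 * u ^ 2), pow_pos hu 4]
  have hsqrt := Real.sq_sqrt hdisc
  have legs (hk : 0 < 2 * u ^ 2 - v ^ 2) :
      (u ^ 2 * n < m * (2 * u ^ 2 - v ^ 2) ∧ m * (2 * u ^ 2 - v ^ 2) < 2 * n * u ^ 2) ↔
      (u * √(v ^ 4 - 3 * u ^ 2 * (v ^ 2 - u ^ 2)) / (2 * u ^ 2 - v ^ 2) < w ∧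
        w < u * v ^ 2 / (2 * u ^ 2 - v ^ 2)) := by
    rw [div_lt_iff₀ hk, lt_div_iff₀ hk]
    refine and_congr
      (lt_iff_lt_of_sq_eq_sq_add (a := (u * (2 * u ^ 2 - v ^ 2)) ^ 2) ?_ ?_ ?_ ?_ ?_ ?_)
      (lt_iff_lt_of_sq_eq_sq_add (a := (u * (2 * u ^ 2 - v ^ 2)) ^ 2) ?_ ?_ ?_ ?_ ?_ ?_)
      <;> try positivity
    · linear_combination u ^ 2 * hsqrt + u ^ 4 * hv2
    · linear_combination (2 * u ^ 2 - v ^ 2) ^ 2 * hw2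
    · linear_combination (2 * u ^ 2 - v ^ 2) ^ 2 * hw2
    · linear_combination 4 * u ^ 4 * hv2
  constructor
  · rintro ⟨h₁, h₂⟩
    have hk : 0 < 2 * u ^ 2 - v ^ 2 :=
      pos_of_mul_pos_right ((by positivity : 0 < u ^ 2 * n).trans h₁) hm.le
    exact ⟨by linarith, (legs hk).1 ⟨h₁, h₂⟩⟩
  · rintro ⟨hk, h⟩
    exact (legs (by linarith)).2 h

lemma acute_iff_bounds_of_bisector (hu : 0 < u) (hn₀ : n ≠ 0) (hbn : b < n) (hnc : n < c)
    (hbis : u ^ 2 * (2 * n - (b + c)) = n * (2 * b * c - n * (b + c)))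
    (hv2 : v ^ 2 = u ^ 2 + n ^ 2) (hw : 0 ≤ w) (hw2 : w ^ 2 = u ^ 2 + ((b + c) / 2) ^ 2) :
    (0 < u ^ 2 + b * c ∧ b < 0 ∧ 0 < c) ↔
      (2 * u ^ 2 > v ^ 2 ∧
        u * √(v ^ 4 - 3 * u ^ 2 * (v ^ 2 - u ^ 2)) / (2 * u ^ 2 - v ^ 2) < w ∧
        w < u * v ^ 2 / (2 * u ^ 2 - v ^ 2)) := by
  wlog hn : 0 < n generalizing b c n
  · -- reflect the line: `(b, n, c) ↦ (-c, -n, -b)`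
    rw [← this (b := -c) (c := -b) (n := -n) (neg_ne_zero.2 hn₀) (neg_lt_neg hnc)
      (neg_lt_neg hbn) (by linear_combination -hbis) (by rw [hv2]; ring) (by rw [hw2]; ring)
      (neg_pos.2 (lt_of_le_of_ne (not_lt.1 hn) hn₀))]
    constructor <;> rintro ⟨h₁, h₂, h₃⟩ <;> exact ⟨by linarith, by linarith, by linarith⟩
  set m := (b + c) / 2 with hm
  -- the foot of the bisector lies between the foot of the altitude and the midpoint
  have hnm : n < m := by
    have : n * ((n - b) * (n - c)) = (n - m) * (n ^ 2 + u ^ 2) := by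
      linear_combination -hbis / 2 + (n ^ 2 + u ^ 2) * hm
    nlinarith [mul_pos hn (mul_pos_of_neg_of_neg (sub_neg.2 hbn) (sub_neg.2 hnc))]
  rw [← coords_lt_and_lt_iff_bounds hu hn (hn.trans hnm) hw hv2 hw2]
  have hacuteA : n * (u ^ 2 + b * c) = 2 * n * u ^ 2 - m * (u ^ 2 - n ^ 2) := by
    linear_combination -hbis / 2 + (u ^ 2 - n ^ 2) * hm
  have hacuteB : n * (b * c) = u ^ 2 * n - m * (u ^ 2 - n ^ 2) := by
    linear_combination -hbis / 2 + (u ^ 2 - n ^ 2) * hm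
  have hc : 0 < c := hn.trans hnc
  have hb : b < 0 ↔ n * (b * c) < 0 := by
    constructor <;> intro h <;> nlinarith [mul_pos hn hc]
  rw [← mul_pos_iff_of_pos_left hn, hacuteA, sub_pos, hb, hacuteB, sub_neg]
  tauto

lemma exists_bisector_coords (hu : 0 < u) (huv : u < v) (hvw : v < w) :
    ∃ b n c : ℝ, b < n ∧ n < c ∧ u ^ 2 * (2 * n - (b + c)) = n * (2 * b * c - n * (b + c)) ∧
      v ^ 2 = u ^ 2 + n ^ 2 ∧ w ^ 2 = u ^ 2 + ((b + c) / 2) ^ 2 := by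
  obtain ⟨n, hn, hn2⟩ : ∃ n, 0 < n ∧ n ^ 2 = v ^ 2 - u ^ 2 :=
    ⟨√(v ^ 2 - u ^ 2), Real.sqrt_pos.2 (by nlinarith), Real.sq_sqrt (by nlinarith)⟩
  obtain ⟨m, hm, hm2⟩ : ∃ m, 0 ≤ m ∧ m ^ 2 = w ^ 2 - u ^ 2 :=
    ⟨√(w ^ 2 - u ^ 2), Real.sqrt_nonneg _, Real.sq_sqrt (by nlinarith)⟩
  have hnm : n < m := by nlinarith
  obtain ⟨t, ht, ht2⟩ : ∃ t, m - n < t ∧ n * t ^ 2 = (m - n) * (m * n + u ^ 2) := by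
    refine ⟨√((m - n) * (m * n + u ^ 2) / n), ?_, ?_⟩
    · rw [Real.lt_sqrt (by linarith), lt_div_iff₀ hn]
      nlinarith [mul_pos (sub_pos.2 hnm) (pow_pos hu 2)]
    · rw [Real.sq_sqrt (by positivity)]
      field_simp
  refine ⟨m - t, n, m + t, by linarith, by linarith, by linear_combination 2 * ht2, by linarith,
    by ring_nf; linarith⟩

end BisectorCoordinates

open AffineMap RealInnerProductSpace

section InnerProductSpace

variable {V : Type*} [NormedAddCommGroup V] [InnerProductSpace ℝ V]

lemma dist_lineMap_sq_of_inner_eq_zero {A B C : V} {s : ℝ}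
    (h : ⟪A - lineMap B C s, B - C⟫ = 0) (t : ℝ) :
    dist A (lineMap B C t) ^ 2 = dist A (lineMap B C s) ^ 2 + ((t - s) * dist B C) ^ 2 := by
  have hsplit : A - lineMap B C t = (A - lineMap B C s) + (t - s) • (B - C) := by
    simp only [lineMap_apply_module']; module
  rw [dist_eq_norm, hsplit, norm_add_sq_real, inner_smul_right, h, mul_zero, mul_zero, add_zero,
    norm_smul, Real.norm_eq_abs, mul_pow, sq_abs,
    ← dist_eq_norm, ← dist_eq_norm, mul_pow]

lemma not_collinear_of_inner_eq_zero {A B C D : V} (hBC : B ≠ C) (hD : D ∈ line[ℝ, B, C])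
    (hAD : A ≠ D) (h : ⟪A - D, B - C⟫ = 0) : ¬ Collinear ℝ ({A, B, C} : Set V) := by
  intro hcol
  have hA : A ∈ line[ℝ, B, C] :=
    hcol.mem_affineSpan_of_mem_of_ne (by simp) (by simp) (by simp) hBC
  have hdir : A -ᵥ D ∈ ℝ ∙ (B -ᵥ C) := by
    rw [← vectorSpan_pair, ← direction_affineSpan]
    exact AffineSubspace.vsub_mem_direction hA hD
  obtain ⟨r, hr⟩ := Submodule.mem_span_singleton.1 hdir
  rw [vsub_eq_sub, vsub_eq_sub] at hr
  apply hAD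
  rw [← sub_eq_zero, ← inner_self_eq_zero (𝕜 := ℝ)]
  nth_rw 2 [← hr]
  rw [inner_smul_right, h, mul_zero]

lemma exists_coords_of_foot {A B C D N : V} (hD : D ∈ line[ℝ, B, C]) (h : ⟪A - D, B - C⟫ = 0)
    (hN : Sbtw ℝ B N C) :
    ∃ b n c : ℝ, b < n ∧ n < c ∧
      dist B C = c - b ∧ dist B N = n - b ∧ dist N C = c - n ∧
      dist A B ^ 2 = dist A D ^ 2 + b ^ 2 ∧ dist A C ^ 2 = dist A D ^ 2 + c ^ 2 ∧
      dist A N ^ 2 = dist A D ^ 2 + n ^ 2 ∧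
      dist A (midpoint ℝ B C) ^ 2 = dist A D ^ 2 + ((b + c) / 2) ^ 2 := by
  obtain ⟨s, rfl⟩ := mem_affineSpan_pair_iff_exists_lineMap_eq.1 hD
  obtain ⟨θ, ⟨hθ₀, hθ₁⟩, rfl⟩ := hN.mem_image_Ioo
  have hL : 0 < dist B C := dist_pos.2 hN.left_ne_right
  have hdist := dist_lineMap_sq_of_inner_eq_zero h
  refine ⟨-s * dist B C, (θ - s) * dist B C, (1 - s) * dist B C, by nlinarith, by nlinarith,
    by ring, ?_, ?_, ?_, ?_, ?_, ?_⟩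
  · rw [dist_left_lineMap, Real.norm_eq_abs, abs_of_pos hθ₀]; ring
  · rw [dist_lineMap_right, Real.norm_eq_abs, abs_of_pos (sub_pos.2 hθ₁)]; ring
  · simpa using hdist 0
  · simpa using hdist 1
  · rw [hdist θ]
  · rw [midpoint, hdist, invOf_eq_inv]; ring

theorem acute_iff_of_altitude_bisector_median {A B C D N : V} {u v w : ℝ} (hu₀ : 0 < u)
    (huv : u < v) (hD : D ∈ line[ℝ, B, C]) (h : ⟪A - D, B - C⟫ = 0) (hN : Sbtw ℝ B N C)
    (hbis : dist B N * dist A C = dist N C * dist A B) (hu : dist A D = u) (hv : dist A N = v)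
    (hw : dist A (midpoint ℝ B C) = w) :
    (dist B C ^ 2 < dist C A ^ 2 + dist A B ^ 2 ∧
        dist C A ^ 2 < dist B C ^ 2 + dist A B ^ 2 ∧
        dist A B ^ 2 < dist B C ^ 2 + dist C A ^ 2) ↔
      (2 * u ^ 2 > v ^ 2 ∧
        u * √(v ^ 4 - 3 * u ^ 2 * (v ^ 2 - u ^ 2)) / (2 * u ^ 2 - v ^ 2) < w ∧
        w < u * v ^ 2 / (2 * u ^ 2 - v ^ 2)) := by
  obtain ⟨b, n, c, hbn, hnc, hBC, hBN, hNC, hAB, hAC, hAN, hAM⟩ := exists_coords_of_foot hD h hN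
  rw [hu] at hAB hAC hAN hAM
  rw [hv] at hAN
  rw [hBN, hNC, bisector_ratio_iff hbn hnc dist_nonneg dist_nonneg hAC hAB] at hbis
  have hn : n ≠ 0 := by
    rintro rfl
    nlinarith
  rw [dist_comm C A, hBC, hAB, hAC, acute_iff_of_coords (hbn.trans hnc)]
  exact acute_iff_bounds_of_bisector hu₀ hn hbn hnc hbis hAN (hw ▸ dist_nonneg) (hw ▸ hAM)

section Construction

variable {e₁ e₂ : V}

lemma dist_smul_smul_of_norm_eq_one (he₁ : ‖e₁‖ = 1) (x y : ℝ) :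
    dist (x • e₁) (y • e₁) = |x - y| := by
  rw [dist_eq_norm, ← sub_smul, norm_smul, he₁, mul_one, Real.norm_eq_abs]

lemma dist_smul_smul_sq_of_orthonormal (he₁ : ‖e₁‖ = 1) (he₂ : ‖e₂‖ = 1) (he : ⟪e₂, e₁⟫ = 0)
    (y x : ℝ) : dist (y • e₂) (x • e₁) ^ 2 = y ^ 2 + x ^ 2 := by
  rw [dist_eq_norm, norm_sub_sq_real, inner_smul_left, inner_smul_right, he, norm_smul,
    norm_smul, he₁, he₂]
  simp

lemma lineMap_smul_smul (e : V) (x y r : ℝ) :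
    lineMap (x • e) (y • e) r = (x + r * (y - x)) • e := by
  rw [lineMap_apply_module']; module

theorem exists_altitude_bisector_median (he₁ : ‖e₁‖ = 1) (he₂ : ‖e₂‖ = 1) (he : ⟪e₂, e₁⟫ = 0)
    {u v w : ℝ} (hu : 0 < u) (huv : u < v) (hvw : v < w) :
    ∃ A B C D N : V, ¬ Collinear ℝ ({A, B, C} : Set V) ∧ D ∈ line[ℝ, B, C] ∧
      ⟪A - D, B - C⟫ = 0 ∧ Sbtw ℝ B N C ∧ dist B N * dist A C = dist N C * dist A B ∧
      dist A D = u ∧ dist A N = v ∧ dist A (midpoint ℝ B C) = w := by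
  obtain ⟨b, n, c, hbn, hnc, hbis, hv2, hw2⟩ := exists_bisector_coords hu huv hvw
  have hbc : b ≠ c := (hbn.trans hnc).ne
  have hBC : b • e₁ ≠ c • e₁ :=
    (smul_left_injective ℝ (norm_ne_zero_iff.1 (by simp [he₁]))).ne hbc
  have hD : (0 : V) ∈ line[ℝ, b • e₁, c • e₁] := by
    rw [mem_affineSpan_pair_iff_exists_lineMap_eq]
    refine ⟨b / (b - c), ?_⟩
    rw [lineMap_smul_smul, show b + b / (b - c) * (c - b) = 0 by field_simp; ring, zero_smul]
  have hN : lineMap (b • e₁) (c • e₁) ((n - b) / (c - b)) = n • e₁ := by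
    rw [lineMap_smul_smul]; congr 1; field_simp; ring
  have hM : midpoint ℝ (b • e₁) (c • e₁) = ((b + c) / 2) • e₁ := by
    rw [midpoint, lineMap_smul_smul, invOf_eq_inv]; congr 1; ring
  have hA := dist_smul_smul_sq_of_orthonormal he₁ he₂ he u
  have hinner : ⟪u • e₂ - 0, b • e₁ - c • e₁⟫ = 0 := by
    rw [sub_zero, ← sub_smul, inner_smul_left, inner_smul_right, he, mul_zero, mul_zero]
  refine ⟨u • e₂, b • e₁, c • e₁, 0, n • e₁, not_collinear_of_inner_eq_zero hBC hD ?_ hinner, hD,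
    hinner, hN ▸ sbtw_lineMap_iff.2 ⟨hBC, ?_, ?_⟩, ?_, ?_, ?_, ?_⟩
  · exact smul_ne_zero hu.ne' (norm_ne_zero_iff.1 (by simp [he₂]))
  · exact div_pos (sub_pos.2 hbn) (sub_pos.2 (hbn.trans hnc))
  · exact (div_lt_one (sub_pos.2 (hbn.trans hnc))).2 (by linarith)
  · rw [dist_smul_smul_of_norm_eq_one he₁, dist_smul_smul_of_norm_eq_one he₁,
      abs_of_neg (sub_neg.2 hbn), abs_of_neg (sub_neg.2 hnc), neg_sub, neg_sub]
    exact (bisector_ratio_iff hbn hnc dist_nonneg dist_nonneg (hA c) (hA b)).2 hbis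
  · rw [dist_zero_right, norm_smul, he₂, mul_one, Real.norm_eq_abs, abs_of_pos hu]
  · exact (sq_eq_sq₀ dist_nonneg (hu.trans huv).le).1 (by rw [hA, hv2])
  · rw [hM]
    exact (sq_eq_sq₀ dist_nonneg (by linarith)).1 (by rw [hA, hw2])

end Construction

end InnerProductSpace

theorem altitude_bisector_median_triangle (u v w : ℝ)
    (h0 : 0 < u) (huv : u < v) (hvw : v < w) :
    (∃ A B C D N : EuclideanSpace ℝ (Fin 2),
      ¬ Collinear ℝ ({A, B, C} : Set (EuclideanSpace ℝ (Fin 2))) ∧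
      D ∈ affineSpan ℝ ({B, C} : Set (EuclideanSpace ℝ (Fin 2))) ∧
      inner ℝ (A - D) (B - C) = (0 : ℝ) ∧
      Sbtw ℝ B N C ∧ dist B N * dist A C = dist N C * dist A B ∧
      dist A D = u ∧ dist A N = v ∧ dist A (midpoint ℝ B C) = w) ∧
    (∀ A B C D N : EuclideanSpace ℝ (Fin 2),
      ¬ Collinear ℝ ({A, B, C} : Set (EuclideanSpace ℝ (Fin 2))) →
      D ∈ affineSpan ℝ ({B, C} : Set (EuclideanSpace ℝ (Fin 2))) →
      inner ℝ (A - D) (B - C) = (0 : ℝ) →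
      Sbtw ℝ B N C → dist B N * dist A C = dist N C * dist A B →
      dist A D = u → dist A N = v → dist A (midpoint ℝ B C) = w →
      ((dist B C ^ 2 < dist C A ^ 2 + dist A B ^ 2 ∧
        dist C A ^ 2 < dist B C ^ 2 + dist A B ^ 2 ∧
        dist A B ^ 2 < dist B C ^ 2 + dist C A ^ 2) ↔
       (2 * u ^ 2 > v ^ 2 ∧
        u * Real.sqrt (v ^ 4 - 3 * u ^ 2 * (v ^ 2 - u ^ 2)) / (2 * u ^ 2 - v ^ 2) < w ∧
        w < u * v ^ 2 / (2 * u ^ 2 - v ^ 2)))) :=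
  ⟨exists_altitude_bisector_median (e₁ := EuclideanSpace.single 0 1)
      (e₂ := EuclideanSpace.single 1 1) (by simp) (by simp)
      (by simp [EuclideanSpace.inner_single_left]) h0 huv hvw,
    fun _ _ _ _ _ _ hD h hN hbis hu hv hw =>
      acute_iff_of_altitude_bisector_median h0 huv hD h hN hbis hu hv hw⟩
end

section
/- Let A, B, C be three non-collinear points in the Euclidean plane ℝ², let O be the circumcenter and R the circumradius of triangle ABC, and let u, v, w be the distances from O to the lines BC, CA and AB respectively. If the triangle is acute (all three angles < π/2), then R³ − (u² + v² + w²)·R − 2uvw = 0; if the triangle is obtuse (one angle > π/2), then R³ − (u² + v² + w²)·R + 2uvw = 0; and if the triangle has a right angle, then R² = u² + v² + w². -/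
/-!
The foot of the perpendicular from the circumcenter `O` to `BC` is the midpoint of `BC`, so
`u² = (R² + ⟪B - O, C - O⟫) / 2`. The Gram determinant of `A - O`, `B - O`, `C - O` vanishes in
the plane, and this turns the formula into `u = R |cos A|`. Since `A + B + C = π`,
`cos² A + cos² B + cos² C + 2 cos A cos B cos C = 1`, which multiplied by `R³` is the cubic for the
signed distances `R cos A`, `R cos B`, `R cos C`. The cosines are all positive for an acute
triangle, exactly one is negative for an obtuse one and one vanishes for a right one.
-/

open Metric Real EuclideanGeometry RealInnerProductSpace Module

theorem inner_gram_relation_of_finrank_le_two {V : Type*} [NormedAddCommGroup V]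
    [InnerProductSpace ℝ V] [FiniteDimensional ℝ V] (hV : finrank ℝ V ≤ 2) (a b c : V) :
    ‖a‖ ^ 2 * ‖b‖ ^ 2 * ‖c‖ ^ 2 + 2 * ⟪b, c⟫ * ⟪c, a⟫ * ⟪a, b⟫
      - ‖a‖ ^ 2 * ⟪b, c⟫ ^ 2 - ‖b‖ ^ 2 * ⟪c, a⟫ ^ 2 - ‖c‖ ^ 2 * ⟪a, b⟫ ^ 2 = 0 := by
  have hdet : (Matrix.gram ℝ ![a, b, c]).det = 0 := by
    by_contra hdet
    have hcard := (Matrix.det_gram_ne_zero_iff_linearIndependent.mp hdet).fintype_card_le_finrank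
    rw [Fintype.card_fin] at hcard
    omega
  rw [Matrix.det_fin_three] at hdet
  simp only [Matrix.gram, Matrix.of_apply, Matrix.cons_val_zero, Matrix.cons_val_one,
    Matrix.cons_val, real_inner_self_eq_norm_sq, real_inner_comm a b, real_inner_comm b c,
    real_inner_comm c a] at hdet
  linear_combination hdet

section Chord

variable {V P : Type*} [NormedAddCommGroup V] [InnerProductSpace ℝ V] [MetricSpace P]
  [NormedAddTorsor V P]

theorem infDist_affineSpan_pair_eq_dist_midpoint {p₁ p₂ c : P} (h : dist c p₁ = dist c p₂) :
    infDist c (affineSpan ℝ {p₁, p₂} : Set P) = dist c (midpoint ℝ p₁ p₂) := by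
  rw [← dist_orthogonalProjection_eq_infDist]
  congr 1
  rw [coe_orthogonalProjection_eq_iff_mem, direction_affineSpan, vectorSpan_pair,
    Submodule.mem_orthogonal_singleton_iff_inner_right]
  refine ⟨AffineMap.lineMap_mem_affineSpan_pair _ _ _, ?_⟩
  rw [← neg_vsub_eq_vsub_rev, inner_neg_left,
    AffineSubspace.mem_perpBisector_iff_inner_eq_zero'.mp
      (AffineSubspace.mem_perpBisector_iff_dist_eq.mpr h), neg_zero]

theorem infDist_affineSpan_pair_sq {p₁ p₂ c : P} {R : ℝ} (h₁ : dist c p₁ = R)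
    (h₂ : dist c p₂ = R) :
    infDist c (affineSpan ℝ {p₁, p₂} : Set P) ^ 2 = (R ^ 2 + ⟪p₁ -ᵥ c, p₂ -ᵥ c⟫) / 2 := by
  have hmid := dist_sq_add_dist_sq_eq_two_mul_dist_midpoint_sq_add_half_dist_sq c p₁ p₂
  have hside : dist p₁ p₂ ^ 2 = 2 * R ^ 2 - 2 * ⟪p₁ -ᵥ c, p₂ -ᵥ c⟫ := by
    rw [dist_eq_norm_vsub V, ← vsub_sub_vsub_cancel_right p₁ p₂ c, norm_sub_sq_real,
      ← dist_eq_norm_vsub', ← dist_eq_norm_vsub', h₁, h₂]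
    ring
  rw [infDist_affineSpan_pair_eq_dist_midpoint (h₁.trans h₂.symm)]
  rw [h₁, h₂] at hmid
  linear_combination -hmid / 2 - hside / 4

theorem infDist_affineSpan_pair_eq_mul_abs_cos_angle [FiniteDimensional ℝ V]
    (hV : finrank ℝ V ≤ 2) {A B C O : P} {R : ℝ} (hAB : A ≠ B) (hAC : A ≠ C)
    (hA : dist O A = R) (hB : dist O B = R) (hC : dist O C = R) :
    infDist O (affineSpan ℝ {B, C} : Set P) = R * |cos (∠ B A C)| := by
  have hR : 0 ≤ R := hA ▸ dist_nonneg
  refine (sq_eq_sq₀ infDist_nonneg (by positivity)).mp ?_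
  rw [infDist_affineSpan_pair_sq hB hC, mul_pow, sq_abs, EuclideanGeometry.angle,
    InnerProductGeometry.cos_angle, ← vsub_sub_vsub_cancel_right B A O,
    ← vsub_sub_vsub_cancel_right C A O]
  have hb : ‖(B -ᵥ O) - (A -ᵥ O)‖ ≠ 0 := by
    rw [vsub_sub_vsub_cancel_right]
    exact norm_ne_zero_iff.mpr (vsub_ne_zero.mpr hAB.symm)
  have hc : ‖(C -ᵥ O) - (A -ᵥ O)‖ ≠ 0 := by
    rw [vsub_sub_vsub_cancel_right]
    exact norm_ne_zero_iff.mpr (vsub_ne_zero.mpr hAC.symm)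
  rw [dist_eq_norm_vsub' V] at hA hB hC
  have G := inner_gram_relation_of_finrank_le_two hV (A -ᵥ O) (B -ᵥ O) (C -ᵥ O)
  set a := A -ᵥ O
  set b := B -ᵥ O
  set c := C -ᵥ O
  rw [div_pow, mul_pow]
  field_simp
  rw [norm_sub_sq_real, norm_sub_sq_real, inner_sub_left, inner_sub_right, inner_sub_right,
    real_inner_self_eq_norm_sq, real_inner_comm a b, real_inner_comm c a, hA, hB, hC]
  rw [hA, hB, hC] at G
  linear_combination 2 * G

end Chord

theorem cos_sq_add_cos_sq_add_cos_sq_of_add_add_eq_pi {α β γ : ℝ} (h : α + β + γ = π) :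
    cos α ^ 2 + cos β ^ 2 + cos γ ^ 2 + 2 * cos α * cos β * cos γ = 1 := by
  have hγ : cos γ = sin α * sin β - cos α * cos β := by
    rw [show γ = π - (α + β) by linarith, cos_pi_sub, cos_add]
    ring
  rw [hγ]
  linear_combination sin β ^ 2 * sin_sq_add_cos_sq α + (1 - cos α ^ 2) * sin_sq_add_cos_sq β

theorem abs_cos_of_nonneg_of_le_pi_div_two {θ : ℝ} (h₀ : 0 ≤ θ) (h₁ : θ ≤ π / 2) :
    |cos θ| = cos θ :=
  abs_of_nonneg (cos_nonneg_of_neg_pi_div_two_le_of_le (by linarith [pi_pos]) h₁)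

theorem cubic_relation_of_acute {α β γ R u v w : ℝ} (hsum : α + β + γ = π) (hα : 0 ≤ α)
    (hβ : 0 ≤ β) (hγ : 0 ≤ γ) (hu : u = R * |cos α|) (hv : v = R * |cos β|)
    (hw : w = R * |cos γ|) (hα' : α < π / 2) (hβ' : β < π / 2) (hγ' : γ < π / 2) :
    R ^ 3 - (u ^ 2 + v ^ 2 + w ^ 2) * R - 2 * u * v * w = 0 := by
  rw [hu, hv, hw, abs_cos_of_nonneg_of_le_pi_div_two hα hα'.le,
    abs_cos_of_nonneg_of_le_pi_div_two hβ hβ'.le, abs_cos_of_nonneg_of_le_pi_div_two hγ hγ'.le]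
  linear_combination -R ^ 3 * cos_sq_add_cos_sq_add_cos_sq_of_add_add_eq_pi hsum

theorem cubic_relation_of_obtuse {α β γ R u v w : ℝ} (hsum : α + β + γ = π) (hβ : 0 ≤ β)
    (hγ : 0 ≤ γ) (hu : u = R * |cos α|) (hv : v = R * |cos β|) (hw : w = R * |cos γ|)
    (hα' : π / 2 < α) :
    R ^ 3 - (u ^ 2 + v ^ 2 + w ^ 2) * R + 2 * u * v * w = 0 := by
  rw [hu, hv, hw, abs_of_neg (cos_neg_of_pi_div_two_lt_of_lt hα' (by linarith [pi_pos])),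
    abs_cos_of_nonneg_of_le_pi_div_two hβ (by linarith),
    abs_cos_of_nonneg_of_le_pi_div_two hγ (by linarith)]
  linear_combination -R ^ 3 * cos_sq_add_cos_sq_add_cos_sq_of_add_add_eq_pi hsum

theorem sq_eq_sum_sq_of_right_angle {α β γ R u v w : ℝ} (hsum : α + β + γ = π)
    (hu : u = R * |cos α|) (hv : v = R * |cos β|) (hw : w = R * |cos γ|) (hα' : α = π / 2) :
    R ^ 2 = u ^ 2 + v ^ 2 + w ^ 2 := by
  have hcos := cos_sq_add_cos_sq_add_cos_sq_of_add_add_eq_pi hsum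
  rw [hα', cos_pi_div_two] at hcos
  rw [hu, hv, hw, hα', cos_pi_div_two]
  simp only [mul_pow, sq_abs]
  linear_combination -R ^ 2 * hcos

theorem circumradius_cubic (A B C O : EuclideanSpace ℝ (Fin 2)) (R u v w : ℝ)
    (h : ¬ Collinear ℝ ({A, B, C} : Set (EuclideanSpace ℝ (Fin 2))))
    (hA : dist O A = R) (hB : dist O B = R) (hC : dist O C = R)
    (hu : u = infDist O (affineSpan ℝ {B, C} : Set (EuclideanSpace ℝ (Fin 2))))
    (hv : v = infDist O (affineSpan ℝ {C, A} : Set (EuclideanSpace ℝ (Fin 2))))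
    (hw : w = infDist O (affineSpan ℝ {A, B} : Set (EuclideanSpace ℝ (Fin 2)))) :
    ((∠ B A C < π / 2 ∧ ∠ A B C < π / 2 ∧ ∠ A C B < π / 2) →
      R ^ 3 - (u ^ 2 + v ^ 2 + w ^ 2) * R - 2 * u * v * w = 0) ∧
    ((∠ B A C > π / 2 ∨ ∠ A B C > π / 2 ∨ ∠ A C B > π / 2) →
      R ^ 3 - (u ^ 2 + v ^ 2 + w ^ 2) * R + 2 * u * v * w = 0) ∧
    ((∠ B A C = π / 2 ∨ ∠ A B C = π / 2 ∨ ∠ A C B = π / 2) →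
      R ^ 2 = u ^ 2 + v ^ 2 + w ^ 2) := by
  have hAB := ne₁₂_of_not_collinear h
  have hAC := ne₁₃_of_not_collinear h
  have hBC := ne₂₃_of_not_collinear h
  have hplane : finrank ℝ (EuclideanSpace ℝ (Fin 2)) ≤ 2 := finrank_euclideanSpace_fin.le
  have hu' := hu.trans (infDist_affineSpan_pair_eq_mul_abs_cos_angle hplane hAB hAC hA hB hC)
  have hv' := hv.trans
    (infDist_affineSpan_pair_eq_mul_abs_cos_angle hplane hBC hAB.symm hB hC hA)
  have hw' := hw.trans
    (infDist_affineSpan_pair_eq_mul_abs_cos_angle hplane hAC.symm hBC.symm hC hA hB)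
  rw [angle_comm C B A] at hv'
  have hsum : ∠ B A C + ∠ A B C + ∠ A C B = π := by
    rw [← angle_add_angle_add_angle_eq_pi C hAB.symm, angle_comm B C A, angle_comm C A B]
    ring
  have hA₀ := angle_nonneg B A C
  have hB₀ := angle_nonneg A B C
  have hC₀ := angle_nonneg A C B
  refine ⟨fun ⟨hA', hB', hC'⟩ ↦ cubic_relation_of_acute hsum hA₀ hB₀ hC₀ hu' hv' hw' hA' hB' hC',
    ?_, ?_⟩
  · rintro (hA' | hB' | hC')
    · exact cubic_relation_of_obtuse hsum hB₀ hC₀ hu' hv' hw' hA'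
    · linear_combination cubic_relation_of_obtuse (by linarith) hA₀ hC₀ hv' hu' hw' hB'
    · linear_combination cubic_relation_of_obtuse (by linarith) hA₀ hB₀ hw' hu' hv' hC'
  · rintro (hA' | hB' | hC')
    · exact sq_eq_sum_sq_of_right_angle hsum hu' hv' hw' hA'
    · linear_combination sq_eq_sum_sq_of_right_angle (by linarith) hv' hu' hw' hB'
    · linear_combination sq_eq_sum_sq_of_right_angle (by linarith) hw' hu' hv' hC'
end

section
/- Let u, v, w be positive real numbers. The cubic polynomial f(t) = t³ − (u² + v² + w²)·t − 2uvw has exactly one positive real root R, and this root satisfies max(u, v, w) < R ≤ 2·√((u² + v² + w²)/3). -/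
/-!
With `f t = t ^ 3 - p t - q` and `q > 0`, a positive root `R` has `R ^ 2 > p`, so in
`f t = (t - R) (t ^ 2 + t R + R ^ 2 - p)` the second factor is positive for `t ≥ 0`: there `f`
has the sign of `t - R`. This gives uniqueness, and the bounds are read off from the signs of
`f (max u v w) < 0` (as `max u v w ^ 2 ≤ p`) and of `f (2 √(p / 3)) = 2 √(p / 3) ^ 3 - q ≥ 0`,
which for `p = u² + v² + w²`, `q = 2uvw` is AM-GM for `u², v², w²`, i.e. the nonnegativity of
the discriminant `4 p ^ 3 - 27 q ^ 2`.
-/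

def cubic (p q t : ℝ) : ℝ := t ^ 3 - p * t - q

section DepressedCubic

variable {p q R : ℝ}

theorem cubic_zero : cubic p q 0 = -q := by
  simp [cubic]

theorem cubic_nonneg_of_le (hq : 0 ≤ q) {b : ℝ} (hb₁ : 1 ≤ b) (hb : p + q ≤ b) :
    0 ≤ cubic p q b := by
  have h : q ≤ b ^ 2 - p := by nlinarith
  have : b ^ 2 - p ≤ b * (b ^ 2 - p) := le_mul_of_one_le_left (by linarith) hb₁
  unfold cubic
  linarith

theorem exists_pos_cubic_eq_zero (hq : 0 < q) : ∃ R, 0 < R ∧ cubic p q R = 0 := by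
  set b := max 1 (p + q)
  have hb : 0 ≤ cubic p q b := cubic_nonneg_of_le hq.le (le_max_left _ _) (le_max_right _ _)
  have hcont : ContinuousOn (cubic p q) (Set.Icc 0 b) := by unfold cubic; fun_prop
  obtain ⟨R, ⟨hR₀, -⟩, hR⟩ := intermediate_value_Icc (by positivity) hcont
    ⟨by rw [cubic_zero]; linarith, hb⟩
  refine ⟨R, hR₀.lt_of_ne ?_, hR⟩
  rintro rfl
  rw [cubic_zero] at hR
  linarith

theorem sq_gt_of_cubic_eq_zero (hq : 0 < q) (hR : 0 < R) (hroot : cubic p q R = 0) :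
    p < R ^ 2 := by
  unfold cubic at hroot
  nlinarith

theorem cubic_neg_iff_lt_root (hq : 0 < q) (hR : 0 < R) (hroot : cubic p q R = 0) {t : ℝ}
    (ht : 0 ≤ t) : cubic p q t < 0 ↔ t < R := by
  have hk : 0 < t ^ 2 + t * R + R ^ 2 - p := by
    nlinarith [sq_gt_of_cubic_eq_zero hq hR hroot, mul_nonneg ht hR.le]
  have hfac : cubic p q t = (t - R) * (t ^ 2 + t * R + R ^ 2 - p) := by
    unfold cubic at hroot ⊢
    linear_combination hroot
  rw [hfac, ← sub_neg (a := t)]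
  exact ⟨fun h => neg_of_mul_neg_left h hk.le, fun h => mul_neg_of_neg_of_pos h hk⟩

theorem root_le_of_cubic_nonneg (hq : 0 < q) (hR : 0 < R) (hroot : cubic p q R = 0) {t : ℝ}
    (ht : 0 ≤ t) (h : 0 ≤ cubic p q t) : R ≤ t :=
  not_lt.mp fun hlt => h.not_gt ((cubic_neg_iff_lt_root hq hR hroot ht).mpr hlt)

theorem existsUnique_pos_cubic_eq_zero (hq : 0 < q) : ∃! R, 0 < R ∧ cubic p q R = 0 := by
  obtain ⟨R, hR, hroot⟩ := exists_pos_cubic_eq_zero hq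
  refine ⟨R, ⟨hR, hroot⟩, fun S ⟨hS, hSroot⟩ => le_antisymm ?_ ?_⟩
  · exact root_le_of_cubic_nonneg hq hS hSroot hR.le hroot.ge
  · exact root_le_of_cubic_nonneg hq hR hroot hS.le hSroot.ge

theorem cubic_neg_of_sq_le (hq : 0 < q) {t : ℝ} (ht : 0 ≤ t) (h : t ^ 2 ≤ p) :
    cubic p q t < 0 := by
  have : t * (t ^ 2 - p) ≤ 0 := mul_nonpos_of_nonneg_of_nonpos ht (by linarith)
  unfold cubic
  linarith

theorem cubic_two_mul_sqrt_nonneg (hdisc : 27 * q ^ 2 ≤ 4 * p ^ 3) :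
    0 ≤ cubic p q (2 * √(p / 3)) := by
  have hp : 0 ≤ p := (Odd.pow_nonneg_iff (n := 3) (by decide)).mp (by nlinarith [sq_nonneg q])
  set r := √(p / 3)
  have hr : r ^ 2 = p / 3 := Real.sq_sqrt (by positivity)
  have hr3 : (2 * r ^ 3) ^ 2 = 4 * p ^ 3 / 27 := by
    rw [show (2 * r ^ 3) ^ 2 = 4 * (r ^ 2) ^ 3 by ring, hr]
    ring
  have hq : q ≤ 2 * r ^ 3 :=
    (le_abs_self q).trans <| abs_le_of_sq_le_sq (by linarith) (by positivity)
  have : cubic p q (2 * r) = 2 * r ^ 3 - q := by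
    unfold cubic
    rw [show p = 3 * r ^ 2 by linarith]
    ring
  linarith

end DepressedCubic

theorem max_sq_le_sum_sq (u v w : ℝ) : max u (max v w) ^ 2 ≤ u ^ 2 + v ^ 2 + w ^ 2 := by
  rcases max_choice v w with h | h <;> rcases max_choice u (max v w) with h' | h' <;>
    rw [h'] <;> try rw [h]
  all_goals nlinarith [sq_nonneg u, sq_nonneg v, sq_nonneg w]

theorem mul_mul_le_add_add_pow_three {a b c : ℝ} (ha : 0 ≤ a) (hb : 0 ≤ b) (hc : 0 ≤ c) :
    27 * (a * b * c) ≤ (a + b + c) ^ 3 := by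
  have hs : 0 ≤ a + b + c := by positivity
  nlinarith [mul_nonneg ha (sq_nonneg (b - c)), mul_nonneg hb (sq_nonneg (a - c)),
    mul_nonneg hc (sq_nonneg (a - b)), mul_nonneg hs (sq_nonneg (a - b)),
    mul_nonneg hs (sq_nonneg (b - c)), mul_nonneg hs (sq_nonneg (a - c))]

theorem cubic_unique_positive_root (u v w : ℝ) (hu : 0 < u) (hv : 0 < v) (hw : 0 < w) :
    (∃! R : ℝ, 0 < R ∧ R ^ 3 - (u ^ 2 + v ^ 2 + w ^ 2) * R - 2 * u * v * w = 0) ∧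
    (∀ R : ℝ, 0 < R → R ^ 3 - (u ^ 2 + v ^ 2 + w ^ 2) * R - 2 * u * v * w = 0 →
      max u (max v w) < R ∧ R ≤ 2 * Real.sqrt ((u ^ 2 + v ^ 2 + w ^ 2) / 3)) := by
  have hq : 0 < 2 * u * v * w := by positivity
  have hdisc : 27 * (2 * u * v * w) ^ 2 ≤ 4 * (u ^ 2 + v ^ 2 + w ^ 2) ^ 3 := by
    nlinarith [mul_mul_le_add_add_pow_three (sq_nonneg u) (sq_nonneg v) (sq_nonneg w)]
  refine ⟨existsUnique_pos_cubic_eq_zero hq, fun R hR hroot => ⟨?_, ?_⟩⟩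
  · have hmax : 0 ≤ max u (max v w) := hu.le.trans (le_max_left _ _)
    exact (cubic_neg_iff_lt_root hq hR hroot hmax).mp
      (cubic_neg_of_sq_le hq hmax (max_sq_le_sum_sq u v w))
  · exact root_le_of_cubic_nonneg hq hR hroot (by positivity) (cubic_two_mul_sqrt_nonneg hdisc)
end

section
/- The set of quadruples (u, v, w, R) of positive integers such that R³ − (u² + v² + w²)·R − 2uvw = 0 and u, v, w are pairwise distinct is infinite. -/
/-! The equation is homogeneous of degree three, so every positive multiple of the
solution `(2, 7, 11, 14)` is again a solution, and its entries stay pairwise distinct. -/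

theorem cubic_eq_mul_left {S : Type*} [CommSemiring S] {u v w R : S} (k : S)
    (h : R ^ 3 = (u ^ 2 + v ^ 2 + w ^ 2) * R + 2 * u * v * w) :
    (k * R) ^ 3 = ((k * u) ^ 2 + (k * v) ^ 2 + (k * w) ^ 2) * (k * R) +
      2 * (k * u) * (k * v) * (k * w) := by
  rw [mul_pow, h]
  ring

theorem cubic_eq_two_seven_eleven_fourteen :
    (14 : ℕ) ^ 3 = (2 ^ 2 + 7 ^ 2 + 11 ^ 2) * 14 + 2 * 2 * 7 * 11 := by
  norm_num

theorem infinitely_many_integer_solutions :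
    {q : ℕ × ℕ × ℕ × ℕ | 0 < q.1 ∧ 0 < q.2.1 ∧ 0 < q.2.2.1 ∧ 0 < q.2.2.2 ∧
      q.2.2.2 ^ 3 = (q.1 ^ 2 + q.2.1 ^ 2 + q.2.2.1 ^ 2) * q.2.2.2 +
        2 * q.1 * q.2.1 * q.2.2.1 ∧
      q.1 ≠ q.2.1 ∧ q.2.1 ≠ q.2.2.1 ∧ q.1 ≠ q.2.2.1}.Infinite := by
  refine Set.infinite_of_injective_forall_mem
    (f := fun n : ℕ => ((n + 1) * 2, (n + 1) * 7, (n + 1) * 11, (n + 1) * 14)) ?_ fun n => ?_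
  · intro a b h
    simp only [Prod.mk.injEq] at h
    omega
  · refine ⟨by positivity, by positivity, by positivity, by positivity,
      cubic_eq_mul_left (n + 1) cubic_eq_two_seven_eleven_fourteen, ?_, ?_, ?_⟩
    <;> dsimp only <;> omega
end

section
/- The 2-dimensional Lebesgue measure of the set of pairs (s,t) in the unit square [0,1]² for which the three lengths p = min(s,t), q = |s-t| and r = 1-max(s,t) are all positive and satisfy max(p, q, r)³ < 4·p·q·r equals 5/27. (This is the probability that three circles with these radii can be placed mutually externally tangent and inscribed in a triangle with each circle tangent to the sides, since such a configuration exists if and only if max(p,q,r)³ < 4pqr.) -/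
/-!
Write the cut points as `s < t`, so that the pieces are `s`, `t - s`, `1 - t`. For positive
`p, q, r`, `max p q r ^ 3 < 4 p q r` splits into `p² < 4 q r`, `q² < 4 p r`, `r² < 4 p q`, and
completing squares turns each of these into bounds on `t` in terms of `√s` and `√(1 - 2 s)`.
The admissible `t` thus form an interval `(stickLower s, stickUpper s)`, nonempty exactly for
`1/9 < s < 1/2`, of length `min (4 √s - 1 - 3 s) (√(1 - 2 s))`; the minimum switches branch at
`s = 4/9`, and integrating gives `13/162 + 1/81 = 5/54`. The case `t < s` doubles this.
-/

open MeasureTheory Set Real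

def TangentCircleRadii (p q r : ℝ) : Prop :=
  0 < p ∧ 0 < q ∧ 0 < r ∧ max p (max q r) ^ 3 < 4 * p * q * r

lemma max_pow_three_lt_four_mul_iff {a b c : ℝ} (ha : 0 < a) (hb : 0 < b) (hc : 0 < c) :
    max a (max b c) ^ 3 < 4 * a * b * c ↔
      a ^ 2 < 4 * b * c ∧ b ^ 2 < 4 * a * c ∧ c ^ 2 < 4 * a * b := by
  have hcube (x y : ℝ) (hx : 0 < x) : x ^ 3 < x * y ↔ x ^ 2 < y := by
    rw [pow_succ', mul_lt_mul_iff_right₀ hx]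
  have hmono := (Odd.strictMono_pow (R := ℝ) (by decide : Odd 3)).monotone
  rw [hmono.map_max, hmono.map_max, max_lt_iff, max_lt_iff,
    show 4 * a * b * c = a * (4 * b * c) by ring, hcube a _ ha,
    show a * (4 * b * c) = b * (4 * a * c) by ring, hcube b _ hb,
    show b * (4 * a * c) = c * (4 * a * b) by ring, hcube c _ hc]

lemma setOf_eq_union_preimage_swap {α : Type*} [LinearOrder α] {P : α × α → Prop}
    {R : Set (α × α)} (hP : ∀ x, P x.swap ↔ P x) (hdiag : ∀ a, ¬ P (a, a))
    (hPR : ∀ x, x.1 < x.2 → (P x ↔ x ∈ R)) (hR : ∀ x ∈ R, x.1 < x.2) :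
    {x | P x} = R ∪ Prod.swap ⁻¹' R := by
  ext ⟨a, b⟩
  simp only [mem_ofPred_eq, mem_union, mem_preimage, Prod.swap_prod_mk]
  rcases lt_trichotomy a b with h | rfl | h
  · rw [hPR _ h]
    exact ⟨Or.inl, fun h' => h'.resolve_right fun hba => lt_asymm h (hR _ hba)⟩
  · exact iff_of_false (hdiag a) fun h' => by
      rcases h' with h' | h' <;> exact lt_irrefl a (hR _ h')
  · rw [← hP, Prod.swap_prod_mk, hPR (b, a) h]
    exact ⟨Or.inr, fun h' => h'.resolve_left fun hab => lt_asymm h (hR _ hab)⟩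

lemma measure_union_preimage_swap {α : Type*} [MeasurableSpace α] [Preorder α]
    (μ : Measure α) [SFinite μ] {R : Set (α × α)} (hRm : MeasurableSet R)
    (hR : ∀ x ∈ R, x.1 < x.2) :
    μ.prod μ (R ∪ Prod.swap ⁻¹' R) = 2 * μ.prod μ R := by
  have hdisj : Disjoint R (Prod.swap ⁻¹' R) :=
    disjoint_left.2 fun x hx hx' => lt_asymm (hR x hx) (hR _ hx')
  rw [measure_union hdisj (measurable_swap hRm),
    (Measure.measurePreserving_swap (μ := μ) (ν := μ)).measure_preimage hRm.nullMeasurableSet,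
    two_mul]

lemma integral_sqrt {a b : ℝ} (ha : 0 ≤ a) (hab : a ≤ b) :
    ∫ x in a..b, √x = 2 / 3 * (b * √b - a * √a) := by
  have hderiv : ∀ x ∈ Ioo a b, HasDerivAt (fun y => 2 / 3 * (y * √y)) √x x := by
    intro x hx
    have hx0 : 0 < x := ha.trans_lt hx.1
    refine (((hasDerivAt_id' x).mul (hasDerivAt_sqrt hx0.ne')).const_mul _).congr_deriv ?_
    have hsqrt := sqrt_ne_zero'.2 hx0
    field_simp
    linear_combination (-1 : ℝ) * mul_self_sqrt hx0.le
  rw [intervalIntegral.integral_eq_sub_of_hasDerivAt_of_le hab (by fun_prop) hderiv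
    (continuous_sqrt.intervalIntegrable a b)]
  ring

lemma sub_sq_lt_four_mul_mul_one_sub_iff {s t : ℝ} (h : 0 ≤ s + t) :
    (t - s) ^ 2 < 4 * s * (1 - t) ↔ t < 2 * √s - s := by
  rw [show t < 2 * √s - s ↔ (s + t) / 2 < √s by constructor <;> intro <;> linarith,
    lt_sqrt (by linarith)]
  constructor <;> intro <;> linarith

lemma one_sub_sq_lt_four_mul_mul_sub_iff {s t : ℝ} (h : t ≤ 1 + 2 * s) :
    (1 - t) ^ 2 < 4 * s * (t - s) ↔ 1 + 2 * s - 2 * √s < t := by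
  rw [show 1 + 2 * s - 2 * √s < t ↔ (1 + 2 * s - t) / 2 < √s by
    constructor <;> intro <;> linarith, lt_sqrt (by linarith)]
  constructor <;> intro <;> linarith

lemma sq_lt_four_mul_sub_mul_one_sub_iff {s t : ℝ} :
    s ^ 2 < 4 * (t - s) * (1 - t) ↔
      (1 + s - √(1 - 2 * s)) / 2 < t ∧ t < (1 + s + √(1 - 2 * s)) / 2 := by
  rw [show s ^ 2 < 4 * (t - s) * (1 - t) ↔ (2 * t - 1 - s) ^ 2 < 1 - 2 * s by
    constructor <;> intro <;> linarith, sq_lt]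
  constructor <;> rintro ⟨h₁, h₂⟩ <;> constructor <;> linarith

noncomputable def stickLower (s : ℝ) : ℝ :=
  max (1 + 2 * s - 2 * √s) ((1 + s - √(1 - 2 * s)) / 2)

noncomputable def stickUpper (s : ℝ) : ℝ :=
  min (2 * √s - s) ((1 + s + √(1 - 2 * s)) / 2)

lemma stickUpper_sub_stickLower (s : ℝ) :
    stickUpper s - stickLower s = min (4 * √s - 1 - 3 * s) √(1 - 2 * s) := by
  simp only [stickUpper, stickLower, min_def, max_def]
  split_ifs <;> linarith

lemma continuous_stickLower : Continuous stickLower := by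
  unfold stickLower; fun_prop

lemma continuous_stickUpper : Continuous stickUpper := by
  unfold stickUpper; fun_prop

lemma four_mul_sqrt_sub_nonneg {s : ℝ} (h₀ : 1 / 9 ≤ s) (h₁ : s ≤ 1) :
    0 ≤ 4 * √s - 1 - 3 * s := by
  have ha₀ : 1 / 3 ≤ √s := by
    rw [le_sqrt (by norm_num) (by linarith)]; linarith
  have ha₁ : √s ≤ 1 := sqrt_le_one.2 h₁
  nlinarith [sq_sqrt (show 0 ≤ s by linarith)]

lemma stickLower_le_stickUpper {s : ℝ} (h₀ : 1 / 9 ≤ s) (h₁ : s ≤ 1) :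
    stickLower s ≤ stickUpper s := by
  rw [← sub_nonneg, stickUpper_sub_stickLower]
  exact le_min (four_mul_sqrt_sub_nonneg h₀ h₁) (sqrt_nonneg _)

lemma sqrt_one_sub_two_mul_le {s : ℝ} (hs : s ≤ 1) : √(1 - 2 * s) ≤ 1 - s :=
  sqrt_le_iff.2 ⟨by linarith, by nlinarith [sq_nonneg s]⟩

lemma lt_of_stickLower_lt {s t : ℝ} (hs : s ≤ 1) (h : stickLower s < t) : s < t := by
  have := sqrt_one_sub_two_mul_le hs
  have := (max_lt_iff.1 h).2
  linarith

lemma lt_one_of_lt_stickUpper {s t : ℝ} (hs : s ≤ 1) (h : t < stickUpper s) : t < 1 := by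
  have := sqrt_one_sub_two_mul_le hs
  have := (lt_min_iff.1 h).2
  linarith

lemma mem_Ioo_of_stickLower_lt_stickUpper {s : ℝ} (hs : 0 < s)
    (h : stickLower s < stickUpper s) : s ∈ Ioo (1 / 9) (1 / 2) := by
  obtain ⟨hc, hb⟩ := lt_min_iff.1 ((sub_pos.2 h).trans_eq (stickUpper_sub_stickLower s))
  have hsq := sq_sqrt hs.le
  have : 1 / 3 < √s := by nlinarith [sqrt_nonneg s]
  exact ⟨by nlinarith, by linarith [sqrt_pos.1 hb]⟩

lemma one_sub_two_mul_sub_sq_four_mul_sqrt_sub {s : ℝ} (hs : 0 ≤ s) :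
    1 - 2 * s - (4 * √s - 1 - 3 * s) ^ 2 =
      √s * (2 - 3 * √s) * (3 * (√s - 1) ^ 2 + 1) := by
  have hsq := sq_sqrt hs
  generalize √s = a at hsq ⊢
  subst hsq
  ring

lemma four_mul_sqrt_sub_le_sqrt_one_sub_two_mul {s : ℝ} (hs : 0 ≤ s) (h : s ≤ 4 / 9) :
    4 * √s - 1 - 3 * s ≤ √(1 - 2 * s) := by
  rcases le_or_gt (4 * √s - 1 - 3 * s) 0 with hc | hc
  · exact hc.trans (sqrt_nonneg _)
  have ha : 0 ≤ 2 - 3 * √s := by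
    have : √s ≤ 2 / 3 := by rw [sqrt_le_left (by norm_num)]; linarith
    linarith
  have := one_sub_two_mul_sub_sq_four_mul_sqrt_sub hs
  have : 0 ≤ √s * (2 - 3 * √s) * (3 * (√s - 1) ^ 2 + 1) := by positivity
  rw [le_sqrt hc.le (by nlinarith)]
  linarith

lemma sqrt_one_sub_two_mul_le_four_mul_sqrt_sub {s : ℝ} (h₀ : 4 / 9 ≤ s) (h₁ : s ≤ 1) :
    √(1 - 2 * s) ≤ 4 * √s - 1 - 3 * s := by
  have ha : 0 ≤ 3 * √s - 2 := by
    have : 2 / 3 ≤ √s := by rw [le_sqrt (by norm_num) (by linarith)]; linarith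
    linarith
  have := one_sub_two_mul_sub_sq_four_mul_sqrt_sub (show 0 ≤ s by linarith)
  have : 0 ≤ √s * (3 * √s - 2) * (3 * (√s - 1) ^ 2 + 1) := by positivity
  rw [sqrt_le_left (four_mul_sqrt_sub_nonneg (by linarith) h₁)]
  linarith

lemma sqrt_one_ninth : √(1 / 9 : ℝ) = 1 / 3 := by
  rw [sqrt_eq_iff_mul_self_eq_of_pos (by norm_num)]; norm_num

lemma sqrt_four_ninths : √(4 / 9 : ℝ) = 2 / 3 := by
  rw [sqrt_eq_iff_mul_self_eq_of_pos (by norm_num)]; norm_num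

lemma integral_four_mul_sqrt_sub :
    ∫ x in (1 / 9 : ℝ)..(4 / 9), (4 * √x - 1 - 3 * x) = 13 / 162 := by
  have hsqrt : IntervalIntegrable (fun x => √x) volume (1 / 9 : ℝ) (4 / 9) :=
    continuous_sqrt.intervalIntegrable _ _
  rw [intervalIntegral.integral_sub (hsqrt.const_mul 4 |>.sub intervalIntegrable_const)
      (intervalIntegral.intervalIntegrable_id.const_mul 3),
    intervalIntegral.integral_sub (hsqrt.const_mul 4) intervalIntegrable_const,
    intervalIntegral.integral_const_mul, intervalIntegral.integral_const_mul,
    integral_sqrt (by norm_num) (by norm_num), integral_id, intervalIntegral.integral_const,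
    sqrt_one_ninth, sqrt_four_ninths]
  norm_num

lemma integral_sqrt_one_sub_two_mul : ∫ x in (4 / 9 : ℝ)..(1 / 2), √(1 - 2 * x) = 1 / 81 := by
  rw [intervalIntegral.integral_comp_sub_mul (fun x => √x) two_ne_zero,
    integral_sqrt (by norm_num) (by norm_num)]
  norm_num [sqrt_one_ninth]

def stickRegion : Set (ℝ × ℝ) :=
  regionBetween stickLower stickUpper (Ioo (1 / 9) (1 / 2))

lemma tangentCircleRadii_iff_mem_stickRegion {s t : ℝ} (hst : s < t) :
    TangentCircleRadii s (t - s) (1 - t) ↔ (s, t) ∈ stickRegion := by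
  have hsection (hs : 0 < s) (ht : t < 1) :
      max s (max (t - s) (1 - t)) ^ 3 < 4 * s * (t - s) * (1 - t) ↔
        stickLower s < t ∧ t < stickUpper s := by
    rw [max_pow_three_lt_four_mul_iff hs (sub_pos.2 hst) (sub_pos.2 ht),
      sq_lt_four_mul_sub_mul_one_sub_iff, sub_sq_lt_four_mul_mul_one_sub_iff (by linarith),
      one_sub_sq_lt_four_mul_mul_sub_iff (by linarith), stickLower, stickUpper, max_lt_iff,
      lt_min_iff]
    tauto
  constructor
  · rintro ⟨hs, -, ht, hmax⟩
    obtain ⟨hlo, hup⟩ := (hsection hs (sub_pos.1 ht)).1 hmax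
    exact ⟨mem_Ioo_of_stickLower_lt_stickUpper hs (hlo.trans hup), hlo, hup⟩
  · rintro ⟨⟨hs₀, hs₁⟩, hlo, hup⟩
    have hs : 0 < s := by linarith
    have ht := lt_one_of_lt_stickUpper (by linarith) hup
    exact ⟨hs, sub_pos.2 hst, sub_pos.2 ht, (hsection hs ht).2 ⟨hlo, hup⟩⟩

lemma fst_lt_snd_of_mem_stickRegion {x : ℝ × ℝ} (hx : x ∈ stickRegion) : x.1 < x.2 :=
  lt_of_stickLower_lt (by linarith [hx.1.2]) hx.2.1

lemma integral_stickUpper_sub_stickLower :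
    ∫ s in Ioo (1 / 9 : ℝ) (1 / 2), (stickUpper - stickLower) s = 5 / 54 := by
  have hcont := continuous_stickUpper.sub continuous_stickLower
  rw [← integral_Ioc_eq_integral_Ioo, ← intervalIntegral.integral_of_le (by norm_num),
    ← intervalIntegral.integral_add_adjacent_intervals (b := 4 / 9)
      (hcont.intervalIntegrable _ _) (hcont.intervalIntegrable _ _),
    intervalIntegral.integral_congr (g := fun s => 4 * √s - 1 - 3 * s),
    integral_four_mul_sqrt_sub,
    intervalIntegral.integral_congr (g := fun s => √(1 - 2 * s)), integral_sqrt_one_sub_two_mul]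
  · norm_num
  all_goals
    intro s hs
    rw [uIcc_of_le (by norm_num)] at hs
    simp only [Pi.sub_apply, stickUpper_sub_stickLower]
  · exact min_eq_right (sqrt_one_sub_two_mul_le_four_mul_sqrt_sub hs.1 (by linarith [hs.2]))
  · exact min_eq_left (four_mul_sqrt_sub_le_sqrt_one_sub_two_mul (by linarith [hs.1]) hs.2)

lemma volume_stickRegion : volume stickRegion = ENNReal.ofReal (5 / 54) := by
  rw [stickRegion, Measure.volume_eq_prod, volume_regionBetween_eq_integral
    (continuous_stickLower.integrableOn_Icc.mono_set Ioo_subset_Icc_self)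
    (continuous_stickUpper.integrableOn_Icc.mono_set Ioo_subset_Icc_self) measurableSet_Ioo
    fun s hs => stickLower_le_stickUpper hs.1.le (by linarith [hs.2]),
    integral_stickUpper_sub_stickLower]

lemma setOf_tangentCircleRadii_eq_union :
    {x : ℝ × ℝ | x.1 ∈ Icc 0 1 ∧ x.2 ∈ Icc 0 1 ∧
      TangentCircleRadii (min x.1 x.2) |x.1 - x.2| (1 - max x.1 x.2)} =
      stickRegion ∪ Prod.swap ⁻¹' stickRegion := by
  refine setOf_eq_union_preimage_swap (fun x => ?_) (fun a h => ?_) (fun x hx => ?_)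
    fun x => fst_lt_snd_of_mem_stickRegion
  · rw [Prod.fst_swap, Prod.snd_swap, min_comm, max_comm, abs_sub_comm]
    tauto
  · simpa using h.2.2.2.1
  · rw [min_eq_left hx.le, max_eq_right hx.le, abs_sub_comm, abs_of_pos (sub_pos.2 hx),
      ← tangentCircleRadii_iff_mem_stickRegion hx]
    constructor
    · exact fun h => h.2.2
    · intro h
      have ⟨hs, _, ht, _⟩ := h
      exact ⟨⟨hs.le, by linarith⟩, ⟨by linarith, by linarith⟩, h⟩

theorem broken_stick_tangent_circles_prob :
    volume {p : ℝ × ℝ | p.1 ∈ Set.Icc (0:ℝ) 1 ∧ p.2 ∈ Set.Icc (0:ℝ) 1 ∧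
      0 < min p.1 p.2 ∧ 0 < |p.1 - p.2| ∧ 0 < 1 - max p.1 p.2 ∧
      max (min p.1 p.2) (max (|p.1 - p.2|) (1 - max p.1 p.2)) ^ 3 <
        4 * min p.1 p.2 * |p.1 - p.2| * (1 - max p.1 p.2)} =
    ENNReal.ofReal (5 / 27) := by
  have hR : MeasurableSet stickRegion :=
    measurableSet_regionBetween continuous_stickLower.measurable continuous_stickUpper.measurable
      measurableSet_Ioo
  change volume {x : ℝ × ℝ | x.1 ∈ Icc 0 1 ∧ x.2 ∈ Icc 0 1 ∧
    TangentCircleRadii (min x.1 x.2) |x.1 - x.2| (1 - max x.1 x.2)} = _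
  rw [setOf_tangentCircleRadii_eq_union, Measure.volume_eq_prod,
    measure_union_preimage_swap volume hR fun _ => fst_lt_snd_of_mem_stickRegion,
    ← Measure.volume_eq_prod, volume_stickRegion, ← ENNReal.ofReal_ofNat,
    ← ENNReal.ofReal_mul zero_le_two]
  norm_num
end

section
/- Let u, v, w be positive real numbers. The equation (2/(uvw))·r³ + (1/u² + 1/v² + 1/w²)·r² − 1 = 0 has exactly one positive real solution r, and this solution satisfies r < min(u, v, w). -/
theorem inradius_cubic_unique_root (u v w : ℝ) (hu : 0 < u) (hv : 0 < v) (hw : 0 < w) :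
    (∃! r : ℝ, 0 < r ∧
      2 / (u * v * w) * r ^ 3 + (1 / u ^ 2 + 1 / v ^ 2 + 1 / w ^ 2) * r ^ 2 - 1 = 0) ∧
    (∀ r : ℝ, 0 < r →
      2 / (u * v * w) * r ^ 3 + (1 / u ^ 2 + 1 / v ^ 2 + 1 / w ^ 2) * r ^ 2 - 1 = 0 →
      r < min u (min v w)) := by
  set a : ℝ := 2 / (u * v * w) with ha'
  set b : ℝ := 1 / u ^ 2 + 1 / v ^ 2 + 1 / w ^ 2 with hb'
  have ha : 0 < a := by positivity
  have hb : 0 < b := by positivity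
  set f : ℝ → ℝ := fun r => a * r ^ 3 + b * r ^ 2 - 1 with hf'
  set m : ℝ := min u (min v w) with hm'
  have hm : 0 < m := lt_min hu (lt_min hv hw)
  -- strict monotonicity on [0,∞)
  have mono : StrictMonoOn f (Set.Ici 0) := by
    intro x hx y hy hxy
    simp only [hf', Set.mem_Ici] at *
    have h3 : x ^ 3 < y ^ 3 := pow_lt_pow_left₀ hxy hx (by norm_num)
    have h2 : x ^ 2 ≤ y ^ 2 := le_of_lt (pow_lt_pow_left₀ hxy hx (by norm_num))
    nlinarith
  -- value at m is positive
  have hbm : 1 ≤ b * m ^ 2 := by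
    have key : 1 / m ^ 2 ≤ b := by
      rcases min_choice u (min v w) with h | h
      · rw [hm', h]; rw [hb']; nlinarith [sq_nonneg v, sq_nonneg w, one_div_pos.mpr (sq_pos_of_pos hv), one_div_pos.mpr (sq_pos_of_pos hw)]
      · rcases min_choice v w with h2 | h2
        · rw [hm', h, h2, hb']
          nlinarith [one_div_pos.mpr (sq_pos_of_pos hu), one_div_pos.mpr (sq_pos_of_pos hw)]
        · rw [hm', h, h2, hb']
          nlinarith [one_div_pos.mpr (sq_pos_of_pos hu), one_div_pos.mpr (sq_pos_of_pos hv)]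
    have hm2 : (0:ℝ) < m ^ 2 := by positivity
    calc (1:ℝ) = 1 / m ^ 2 * m ^ 2 := by field_simp
    _ ≤ b * m ^ 2 := by nlinarith
  have hfm : 0 < f m := by
    simp only [hf']
    nlinarith [pow_pos hm 3]
  have hf0 : f 0 < 0 := by simp [hf']
  have hcont : ContinuousOn f (Set.Icc 0 m) := by
    apply Continuous.continuousOn; continuity
  -- existence
  obtain ⟨r, hrmem, hr0⟩ := intermediate_value_Ioo (le_of_lt hm) hcont ⟨hf0, hfm⟩
  have hrpos : 0 < r := hrmem.1
  have hrm : r < m := hrmem.2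
  have roots_lt : ∀ s : ℝ, 0 < s → f s = 0 → s < m := by
    intro s hs hfs
    by_contra hle
    push_neg at hle
    rcases eq_or_lt_of_le hle with h | h
    · rw [← h] at hfs; linarith
    · have := mono (Set.mem_Ici.mpr (le_of_lt hm)) (Set.mem_Ici.mpr (le_of_lt hs)) h
      rw [hfs] at this; linarith
  constructor
  · refine ⟨r, ⟨hrpos, hr0⟩, ?_⟩
    intro s ⟨hs, hfs⟩
    exact mono.injOn (Set.mem_Ici.mpr (le_of_lt hs)) (Set.mem_Ici.mpr (le_of_lt hrpos)) (hfs.trans hr0.symm)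
  · exact roots_lt
end

section
/- Let u, v, w be positive real numbers, let r be the unique positive real solution of (2/(uvw))·r³ + (1/u² + 1/v² + 1/w²)·r² − 1 = 0, and set a = √(v² − r²) + √(w² − r²), b = √(u² − r²) + √(w² − r²), c = √(u² − r²) + √(v² − r²). Then there exist three non-collinear points A, B, C in the Euclidean plane ℝ² with dist(B,C) = a, dist(C,A) = b, dist(A,B) = c, and for any such triangle, its incenter I satisfies dist(A,I) = u, dist(B,I) = v and dist(C,I) = w. In particular, for every u, v, w > 0 there exists a triangle whose incenter is at distances u, v, w from its three vertices. -/
/-!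
Let `x = √(u² - r²)`, `y = √(v² - r²)`, `z = √(w² - r²)`; these lie in `(0, ∞)` because the
cubic forces `r < u, v, w`. Writing `sin α = r / u`, `cos α = x / u` and likewise for `β`, `γ`,
the cubic says `α + β + γ = π / 2`, which unwinds to `x y z = r² (x + y + z)`. By Heron's formula
this says that the triangle with sides `y + z`, `z + x`, `x + y` (which exists, as these satisfy
the strict triangle inequalities) has inradius `r`; its tangent lengths are `x`, `y`, `z`, so the
incenter is at distance `√(x² + r²) = u` from `A`, and similarly for `B`, `C`.
-/

/-- The incenter of the triangle with vertices `A`, `B`, `C`, given by its standard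
barycentric formula with weights the opposite side lengths. -/
noncomputable def triangleIncenter (A B C : EuclideanSpace ℝ (Fin 2)) :
    EuclideanSpace ℝ (Fin 2) :=
  (dist B C / (dist B C + dist C A + dist A B)) • A +
    (dist C A / (dist B C + dist C A + dist A B)) • B +
    (dist A B / (dist B C + dist C A + dist A B)) • C

open scoped RealInnerProductSpace

theorem not_collinear_of_dist_lt_add {E P : Type*} [SeminormedAddCommGroup E] [NormedSpace ℝ E]
    [PseudoMetricSpace P] [NormedAddTorsor E P] {A B C : P}
    (hA : dist B C < dist C A + dist A B) (hB : dist C A < dist A B + dist B C)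
    (hC : dist A B < dist B C + dist C A) :
    ¬ Collinear ℝ ({A, B, C} : Set P) := by
  intro h
  rcases h.wbtw_or_wbtw_or_wbtw with h | h | h
  · linarith [h.dist_add_dist, dist_comm A C]
  · linarith [h.dist_add_dist, dist_comm B A]
  · linarith [h.dist_add_dist, dist_comm C B]

theorem exists_dist_eq_of_le_add {a b c : ℝ} (ha : 0 < a) (hab : a ≤ b + c) (hbc : b ≤ c + a)
    (hca : c ≤ a + b) :
    ∃ A B C : EuclideanSpace ℝ (Fin 2), dist B C = a ∧ dist C A = b ∧ dist A B = c := by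
  have dist_eq (x₁ y₁ x₂ y₂ : ℝ) :
      dist !₂[x₁, y₁] !₂[x₂, y₂] = √((x₁ - x₂) ^ 2 + (y₁ - y₂) ^ 2) := by
    simp [EuclideanSpace.dist_eq, Fin.sum_univ_two, Real.dist_eq]
  set p := (a ^ 2 + c ^ 2 - b ^ 2) / (2 * a) with hp_def
  have hp : 2 * a * p = a ^ 2 + c ^ 2 - b ^ 2 := by rw [hp_def]; field_simp
  have hq : 0 ≤ c ^ 2 - p ^ 2 := by
    have heron :
        4 * a ^ 2 * (c ^ 2 - p ^ 2) = (b + c - a) * (a + b - c) * (c + a - b) * (a + b + c) := by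
      linear_combination (-(2 * a * p) - (a ^ 2 + c ^ 2 - b ^ 2)) * hp
    have : 0 ≤ a + b + c := by linarith
    have := sub_nonneg.2 hab; have := sub_nonneg.2 hbc; have := sub_nonneg.2 hca
    refine (mul_nonneg_iff_of_pos_left (by positivity : (0 : ℝ) < 4 * a ^ 2)).1 ?_
    rw [heron]
    positivity
  refine ⟨!₂[p, √(c ^ 2 - p ^ 2)], !₂[0, 0], !₂[a, 0], ?_, ?_, ?_⟩ <;> rw [dist_eq]
  · simpa using Real.sqrt_sq ha.le
  · rw [show (a - p) ^ 2 + (0 - √(c ^ 2 - p ^ 2)) ^ 2 = b ^ 2 by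
      linear_combination Real.sq_sqrt hq - hp, Real.sqrt_sq (by linarith)]
  · rw [show (p - 0) ^ 2 + (√(c ^ 2 - p ^ 2) - 0) ^ 2 = c ^ 2 by
      linear_combination Real.sq_sqrt hq, Real.sqrt_sq (by linarith)]

theorem dist_triangleIncenter_sq (A B C : EuclideanSpace ℝ (Fin 2))
    (h : dist B C + dist C A + dist A B ≠ 0) :
    dist A (triangleIncenter A B C) ^ 2 =
      dist C A * dist A B * (dist C A + dist A B - dist B C) /
        (dist B C + dist C A + dist A B) := by
  have hI : triangleIncenter A B C - A =
      (dist C A / (dist B C + dist C A + dist A B)) • (B - A) +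
        (dist A B / (dist B C + dist C A + dist A B)) • (C - A) := by
    unfold triangleIncenter
    match_scalars <;> field_simp
    ring
  have hinner : ⟪B - A, C - A⟫ = (dist C A ^ 2 + dist A B ^ 2 - dist B C ^ 2) / 2 := by
    rw [dist_eq_norm C A, dist_eq_norm' A B, dist_eq_norm B C, ← sub_sub_sub_cancel_right B C A,
      norm_sub_sq_real (B - A) (C - A)]
    ring
  rw [dist_eq_norm', hI, norm_add_sq_real, norm_smul, norm_smul, real_inner_smul_left,
    real_inner_smul_right, hinner, ← dist_eq_norm', ← dist_eq_norm, mul_pow, mul_pow,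
    Real.norm_eq_abs, Real.norm_eq_abs, sq_abs, sq_abs]
  field_simp
  ring

theorem sq_lt_sq_of_inradius_cubic {u v w r : ℝ} (hu : 0 < u) (hv : 0 < v) (hw : 0 < w)
    (hr : 0 < r)
    (heq : 2 / (u * v * w) * r ^ 3 + (1 / u ^ 2 + 1 / v ^ 2 + 1 / w ^ 2) * r ^ 2 - 1 = 0) :
    r ^ 2 < u ^ 2 ∧ r ^ 2 < v ^ 2 ∧ r ^ 2 < w ^ 2 := by
  have h₀ : 0 < 2 / (u * v * w) * r ^ 3 := by positivity
  have hu' : 0 < r ^ 2 / u ^ 2 := by positivity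
  have hv' : 0 < r ^ 2 / v ^ 2 := by positivity
  have hw' : 0 < r ^ 2 / w ^ 2 := by positivity
  have hsum : 2 / (u * v * w) * r ^ 3 + r ^ 2 / u ^ 2 + r ^ 2 / v ^ 2 + r ^ 2 / w ^ 2 = 1 := by
    linear_combination heq
  refine ⟨?_, ?_, ?_⟩ <;> rw [← div_lt_one (by positivity)] <;> linarith

theorem mul_mul_eq_sq_mul_add_of_inradius_cubic {u v w r x y z : ℝ}
    (hu : 0 < u) (hv : 0 < v) (hw : 0 < w) (hr : 0 ≤ r) (hx : 0 ≤ x) (hy : 0 ≤ y) (hz : 0 ≤ z)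
    (hxu : x ^ 2 + r ^ 2 = u ^ 2) (hyv : y ^ 2 + r ^ 2 = v ^ 2) (hzw : z ^ 2 + r ^ 2 = w ^ 2)
    (heq : 2 / (u * v * w) * r ^ 3 + (1 / u ^ 2 + 1 / v ^ 2 + 1 / w ^ 2) * r ^ 2 - 1 = 0) :
    x * y * z = r ^ 2 * (x + y + z) := by
  have hE : u ^ 2 * v ^ 2 * w ^ 2 =
      2 * r ^ 3 * (u * v * w) + r ^ 2 * (u ^ 2 * v ^ 2 + v ^ 2 * w ^ 2 + w ^ 2 * u ^ 2) := by
    field_simp at heq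
    linear_combination -heq
  -- `cos (β + γ) = sin α` and `sin (β + γ) = cos α`, where `sin α = r / u`, `cos α = x / u`, etc.
  have hcos : u * (y * z) = r * v * w + r ^ 2 * u := by
    refine (pow_left_inj₀ (by positivity) (by positivity) two_ne_zero).1 ?_
    linear_combination u ^ 2 * z ^ 2 * hyv + u ^ 2 * (v ^ 2 - r ^ 2) * hzw + hE
  have hsin : x * (v * w) = r * u * (y + z) := by
    refine (pow_left_inj₀ (by positivity) (by positivity) two_ne_zero).1 ?_
    linear_combination v ^ 2 * w ^ 2 * hxu - r ^ 2 * u ^ 2 * hyv - r ^ 2 * u ^ 2 * hzw -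
      2 * r ^ 2 * u * hcos + hE
  refine mul_left_cancel₀ hu.ne' ?_
  linear_combination x * hcos + r * hsin

theorem triangleIncenter_rotate (A B C : EuclideanSpace ℝ (Fin 2)) :
    triangleIncenter A B C = triangleIncenter B C A := by
  unfold triangleIncenter
  rw [show dist C A + dist A B + dist B C = dist B C + dist C A + dist A B by ring]
  abel

theorem dist_left_triangleIncenter_sq_of_tangent_lengths {A B C : EuclideanSpace ℝ (Fin 2)}
    {x y z r : ℝ} (hs : 0 < x + y + z) (hr : x * y * z = r ^ 2 * (x + y + z))
    (hBC : dist B C = y + z) (hCA : dist C A = z + x) (hAB : dist A B = x + y) :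
    dist A (triangleIncenter A B C) ^ 2 = x ^ 2 + r ^ 2 := by
  rw [dist_triangleIncenter_sq A B C (by linarith), hBC, hCA, hAB, div_eq_iff (by linarith)]
  linear_combination 2 * hr

theorem dist_triangleIncenter_sq_of_tangent_lengths {A B C : EuclideanSpace ℝ (Fin 2)}
    {x y z r : ℝ} (hs : 0 < x + y + z) (hr : x * y * z = r ^ 2 * (x + y + z))
    (hBC : dist B C = y + z) (hCA : dist C A = x + z) (hAB : dist A B = x + y) :
    dist A (triangleIncenter A B C) ^ 2 = x ^ 2 + r ^ 2 ∧
      dist B (triangleIncenter A B C) ^ 2 = y ^ 2 + r ^ 2 ∧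
      dist C (triangleIncenter A B C) ^ 2 = z ^ 2 + r ^ 2 := by
  have hCA' : dist C A = z + x := hCA.trans (add_comm x z)
  refine ⟨dist_left_triangleIncenter_sq_of_tangent_lengths hs hr hBC hCA' hAB, ?_, ?_⟩
  · rw [triangleIncenter_rotate]
    exact dist_left_triangleIncenter_sq_of_tangent_lengths (by linarith) (by linear_combination hr)
      hCA' hAB hBC
  · rw [← triangleIncenter_rotate]
    exact dist_left_triangleIncenter_sq_of_tangent_lengths (by linarith) (by linear_combination hr)
      hAB hBC hCA'

theorem incenter_distances_to_vertices (u v w r : ℝ)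
    (hu : 0 < u) (hv : 0 < v) (hw : 0 < w) (hr : 0 < r)
    (heq : 2 / (u * v * w) * r ^ 3 + (1 / u ^ 2 + 1 / v ^ 2 + 1 / w ^ 2) * r ^ 2 - 1 = 0) :
    let a := Real.sqrt (v ^ 2 - r ^ 2) + Real.sqrt (w ^ 2 - r ^ 2)
    let b := Real.sqrt (u ^ 2 - r ^ 2) + Real.sqrt (w ^ 2 - r ^ 2)
    let c := Real.sqrt (u ^ 2 - r ^ 2) + Real.sqrt (v ^ 2 - r ^ 2)
    (∃ A B C : EuclideanSpace ℝ (Fin 2),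
      ¬ Collinear ℝ ({A, B, C} : Set (EuclideanSpace ℝ (Fin 2))) ∧
      dist B C = a ∧ dist C A = b ∧ dist A B = c) ∧
    (∀ A B C : EuclideanSpace ℝ (Fin 2),
      ¬ Collinear ℝ ({A, B, C} : Set (EuclideanSpace ℝ (Fin 2))) →
      dist B C = a → dist C A = b → dist A B = c →
      dist A (triangleIncenter A B C) = u ∧ dist B (triangleIncenter A B C) = v ∧
        dist C (triangleIncenter A B C) = w) := by
  obtain ⟨hru, hrv, hrw⟩ := sq_lt_sq_of_inradius_cubic hu hv hw hr heq
  have tangent_length {t : ℝ} (hrt : r ^ 2 < t ^ 2) :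
      0 < √(t ^ 2 - r ^ 2) ∧ √(t ^ 2 - r ^ 2) ^ 2 + r ^ 2 = t ^ 2 :=
    ⟨Real.sqrt_pos.2 (by linarith), by rw [Real.sq_sqrt (by linarith)]; ring⟩
  obtain ⟨hx, hxu⟩ := tangent_length hru
  obtain ⟨hy, hyv⟩ := tangent_length hrv
  obtain ⟨hz, hzw⟩ := tangent_length hrw
  set x := √(u ^ 2 - r ^ 2)
  set y := √(v ^ 2 - r ^ 2)
  set z := √(w ^ 2 - r ^ 2)
  have hxyz :=
    mul_mul_eq_sq_mul_add_of_inradius_cubic hu hv hw hr.le hx.le hy.le hz.le hxu hyv hzw heq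
  refine ⟨?_, fun A B C _ hBC hCA hAB => ?_⟩
  · obtain ⟨A, B, C, hBC, hCA, hAB⟩ :=
      exists_dist_eq_of_le_add (a := y + z) (b := x + z) (c := x + y) (by positivity)
        (by linarith) (by linarith) (by linarith)
    refine ⟨A, B, C, not_collinear_of_dist_lt_add ?_ ?_ ?_, hBC, hCA, hAB⟩ <;>
      rw [hBC, hCA, hAB] <;> linarith
  · obtain ⟨hA, hB, hC⟩ :=
      dist_triangleIncenter_sq_of_tangent_lengths (by positivity) hxyz hBC hCA hAB
    exact ⟨(pow_left_inj₀ dist_nonneg hu.le two_ne_zero).1 (hA.trans hxu),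
      (pow_left_inj₀ dist_nonneg hv.le two_ne_zero).1 (hB.trans hyv),
      (pow_left_inj₀ dist_nonneg hw.le two_ne_zero).1 (hC.trans hzw)⟩
end
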